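/- arXiv:math/0612842 — 7 statements merged into one kernel-verified Lean document; each statement's English description precedes it below -/
import Mathlib

section
/- For every integer n ≥ 1, the number of symmetric Temperley–Lieb diagrams on 4n vertices is |T_n| = C(2n, n), the binomial coefficient 2n choose n. -/
open scoped Classical

/-- `D` is a symmetric Temperley–Lieb diagram on `4n` vertices, identified with a partial
matching of `[2n] = {1,…,2n}`: a set of pairwise disjoint pairs `(i,j)` with `1 ≤ i < j ≤ 2n`,
noncrossing, and such that no uncovered vertex lies strictly between the endpoints of any pair. -/
def IsTL (n : ℕ) (D : Finset (ℕ × ℕ)) : Prop :=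
  (∀ p ∈ D, 1 ≤ p.1 ∧ p.1 < p.2 ∧ p.2 ≤ 2 * n) ∧
  (∀ p ∈ D, ∀ q ∈ D, p ≠ q → p.1 ≠ q.1 ∧ p.1 ≠ q.2 ∧ p.2 ≠ q.1 ∧ p.2 ≠ q.2) ∧
  (∀ p ∈ D, ∀ q ∈ D, ¬(p.1 < q.1 ∧ q.1 < p.2 ∧ p.2 < q.2)) ∧
  (∀ p ∈ D, ∀ k, p.1 < k → k < p.2 → ∃ q ∈ D, k = q.1 ∨ k = q.2)

namespace TLaux

noncomputable section

/-- prefix sums of a word -/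
def dep (w : ℕ → ℤ) (k : ℕ) : ℤ := ∑ t ∈ Finset.Icc 1 k, w t

lemma dep_zero (w : ℕ → ℤ) : dep w 0 = 0 := by simp [dep]

lemma dep_succ (w : ℕ → ℤ) (k : ℕ) : dep w (k + 1) = dep w k + w (k + 1) := by
  unfold dep
  rw [Finset.sum_Icc_succ_top (by omega : 1 ≤ k + 1)]

/-- valid words -/
structure Valid (n : ℕ) (w : ℕ → ℤ) : Prop where
  out : ∀ k, k ∉ Finset.Icc 1 (2*n) → w k = 0
  mem : ∀ k ∈ Finset.Icc 1 (2*n), w k = 1 ∨ w k = -1 ∨ w k = 0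
  nonneg : ∀ k, 0 ≤ dep w k
  total : dep w (2*n) = 0
  dot0 : ∀ k ∈ Finset.Icc 1 (2*n), w k = 0 → dep w k = 0

lemma dep_const_after (w : ℕ → ℤ) (n : ℕ) (hout : ∀ k, k ∉ Finset.Icc 1 (2*n) → w k = 0)
    {k : ℕ} (hk : 2*n ≤ k) : dep w k = dep w (2*n) := by
  induction k with
  | zero =>
    have h0 : 2*n = 0 := by omega
    rw [h0]
  | succ m ih =>
    rcases Nat.lt_or_ge m (2*n) with h | h
    · have : 2*n = m + 1 := by omega
      rw [this]
    · rw [dep_succ, hout (m+1) (by simp; omega), ih h]; ring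

lemma valid_step_le {n : ℕ} {w : ℕ → ℤ} (hw : Valid n w) (k : ℕ) : w k ≤ 1 := by
  by_cases h : k ∈ Finset.Icc 1 (2*n)
  · rcases hw.mem k h with h1 | h1 | h1 <;> omega
  · rw [hw.out k h]; omega

lemma valid_step_ge {n : ℕ} {w : ℕ → ℤ} (hw : Valid n w) (k : ℕ) : -1 ≤ w k := by
  by_cases h : k ∈ Finset.Icc 1 (2*n)
  · rcases hw.mem k h with h1 | h1 | h1 <;> omega
  · rw [hw.out k h]; omega

/-- word of a diagram -/
def wOf (D : Finset (ℕ × ℕ)) (k : ℕ) : ℤ :=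
  if ∃ p ∈ D, p.1 = k then 1 else if ∃ p ∈ D, p.2 = k then -1 else 0

def spanF (D : Finset (ℕ × ℕ)) (k : ℕ) : Finset (ℕ × ℕ) :=
  D.filter (fun p => p.1 ≤ k ∧ k < p.2)

section DiagramLemmas

variable {n : ℕ} {D : Finset (ℕ × ℕ)}

lemma op_eq (hD : IsTL n D) {p q : ℕ × ℕ} (hp : p ∈ D) (hq : q ∈ D) (h : p.1 = q.1) :
    p = q := by
  by_contra hne
  exact absurd h (hD.2.1 p hp q hq hne).1

lemma cl_eq (hD : IsTL n D) {p q : ℕ × ℕ} (hp : p ∈ D) (hq : q ∈ D) (h : p.2 = q.2) :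
    p = q := by
  by_contra hne
  exact absurd h (hD.2.1 p hp q hq hne).2.2.2

lemma op_ne_cl (hD : IsTL n D) {p q : ℕ × ℕ} (hp : p ∈ D) (hq : q ∈ D) : p.1 ≠ q.2 := by
  by_cases hpq : p = q
  · subst hpq; exact Nat.ne_of_lt (hD.1 p hp).2.1
  · exact (hD.2.1 p hp q hq hpq).2.1

lemma dep_wOf (hD : IsTL n D) : ∀ k, dep (wOf D) k = ((spanF D k).card : ℤ) := by
  intro k
  induction k with
  | zero =>
    rw [dep_zero]
    have : spanF D 0 = ∅ := by
      apply Finset.eq_empty_of_forall_notMem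
      intro p hp
      simp only [spanF, Finset.mem_filter] at hp
      have := (hD.1 p hp.1).1
      omega
    rw [this]; simp
  | succ k ih =>
    rw [dep_succ, ih]
    unfold wOf
    by_cases hop : ∃ p ∈ D, p.1 = k + 1
    · rw [if_pos hop]
      obtain ⟨p, hp, hp1⟩ := hop
      have hins : spanF D (k+1) = insert p (spanF D k) := by
        ext q
        simp only [spanF, Finset.mem_filter, Finset.mem_insert]
        constructor
        · rintro ⟨hq, hq1, hq2⟩
          by_cases hqp : q = p
          · exact Or.inl hqp
          · right
            refine ⟨hq, ?_, ?_⟩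
            · have : q.1 ≠ p.1 := fun h => hqp (op_eq hD hq hp h)
              omega
            · omega
        · rintro (h | ⟨hq, hq1, hq2⟩)
          · rw [h]; exact ⟨hp, by omega, by have := (hD.1 p hp).2.1; omega⟩
          · refine ⟨hq, by omega, ?_⟩
            have : q.2 ≠ k + 1 := by
              intro h
              exact op_ne_cl hD hp hq (by omega)
            omega
      have hpnot : p ∉ spanF D k := by
        simp only [spanF, Finset.mem_filter]
        rintro ⟨-, h1, -⟩; omega
      rw [hins, Finset.card_insert_of_notMem hpnot]
      push_cast; ring
    · rw [if_neg hop]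
      by_cases hcl : ∃ p ∈ D, p.2 = k + 1
      · rw [if_pos hcl]
        obtain ⟨p, hp, hp2⟩ := hcl
        have hins : spanF D k = insert p (spanF D (k+1)) := by
          ext q
          simp only [spanF, Finset.mem_filter, Finset.mem_insert]
          constructor
          · rintro ⟨hq, hq1, hq2⟩
            by_cases hqp : q = p
            · exact Or.inl hqp
            · right
              refine ⟨hq, by omega, ?_⟩
              have : q.2 ≠ p.2 := fun h => hqp (cl_eq hD hq hp h)
              omega
          · rintro (h | ⟨hq, hq1, hq2⟩)
            · rw [h]; exact ⟨hp, by have := (hD.1 p hp).2.1; omega, by omega⟩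
            · have hne : q.1 ≠ k + 1 := fun h => hop ⟨q, hq, h⟩
              exact ⟨hq, by omega, by omega⟩
        have hpnot : p ∉ spanF D (k+1) := by
          simp only [spanF, Finset.mem_filter]
          rintro ⟨-, -, h2⟩; omega
        rw [hins, Finset.card_insert_of_notMem hpnot]
        push_cast; ring
      · rw [if_neg hcl]
        have : spanF D (k+1) = spanF D k := by
          ext q
          simp only [spanF, Finset.mem_filter]
          constructor
          · rintro ⟨hq, hq1, hq2⟩
            have h1 : q.1 ≠ k + 1 := fun h => hop ⟨q, hq, h⟩
            exact ⟨hq, by omega, by omega⟩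
          · rintro ⟨hq, hq1, hq2⟩
            have h2 : q.2 ≠ k + 1 := fun h => hcl ⟨q, hq, h⟩
            exact ⟨hq, by omega, by omega⟩
        rw [this]; ring

lemma valid_wOf (hD : IsTL n D) : Valid n (wOf D) := by
  constructor
  · intro k hk
    simp only [Finset.mem_Icc, not_and_or, not_le] at hk
    unfold wOf
    rw [if_neg, if_neg]
    · rintro ⟨p, hp, h⟩
      have := hD.1 p hp; omega
    · rintro ⟨p, hp, h⟩
      have := hD.1 p hp; omega
  · intro k _
    unfold wOf
    by_cases h1 : ∃ p ∈ D, p.1 = k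
    · simp [h1]
    · by_cases h2 : ∃ p ∈ D, p.2 = k <;> simp [h1, h2]
  · intro k
    rw [dep_wOf hD]
    positivity
  · rw [dep_wOf hD]
    have : spanF D (2*n) = ∅ := by
      apply Finset.eq_empty_of_forall_notMem
      intro p hp
      simp only [spanF, Finset.mem_filter] at hp
      have := (hD.1 p hp.1).2.2
      omega
    rw [this]; simp
  · intro k hk hwk
    rw [dep_wOf hD]
    have : spanF D k = ∅ := by
      apply Finset.eq_empty_of_forall_notMem
      intro p hp
      simp only [spanF, Finset.mem_filter] at hp
      obtain ⟨hp, hp1, hp2⟩ := hp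
      have h1 : p.1 ≠ k := by
        intro h
        unfold wOf at hwk
        rw [if_pos ⟨p, hp, h⟩] at hwk
        omega
      have ⟨q, hq, hq'⟩ := hD.2.2.2 p hp k (by omega) hp2
      unfold wOf at hwk
      rcases hq' with h | h
      · rw [if_pos ⟨q, hq, h.symm⟩] at hwk; omega
      · rw [if_neg, if_pos ⟨q, hq, h.symm⟩] at hwk
        · omega
        · rintro ⟨r, hr, hrk⟩
          exact op_ne_cl hD hr hq (by omega)
    rw [this]; simp

/-- the matching relation at word level -/
def Mm (n : ℕ) (w : ℕ → ℤ) (i j : ℕ) : Prop :=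
  1 ≤ i ∧ i < j ∧ j ≤ 2*n ∧ w i = 1 ∧ w j = -1 ∧
  dep w j = dep w i - 1 ∧ ∀ k, i ≤ k → k < j → dep w i ≤ dep w k

/-- diagram built from a word -/
def mF (n : ℕ) (w : ℕ → ℤ) : Finset (ℕ × ℕ) :=
  ((Finset.Icc 1 (2*n)) ×ˢ (Finset.Icc 1 (2*n))).filter (fun p => Mm n w p.1 p.2)

lemma mem_mF {n : ℕ} {w : ℕ → ℤ} {p : ℕ × ℕ} :
    p ∈ mF n w ↔ Mm n w p.1 p.2 := by
  simp only [mF, Finset.mem_filter, Finset.mem_product, Finset.mem_Icc]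
  constructor
  · exact fun h => h.2
  · intro h
    have h1 := h.1
    have h2 := h.2.1
    have h3 := h.2.2.1
    exact ⟨⟨⟨h1, by omega⟩, ⟨by omega, h3⟩⟩, h⟩

/-- arcs of a TL diagram satisfy Mm for its word -/
lemma arc_Mm (hD : IsTL n D) {p : ℕ × ℕ} (hp : p ∈ D) : Mm n (wOf D) p.1 p.2 := by
  obtain ⟨hp1, hp12, hp2⟩ := hD.1 p hp
  have hwi : wOf D p.1 = 1 := by
    unfold wOf; rw [if_pos ⟨p, hp, rfl⟩]
  have hwj : wOf D p.2 = -1 := by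
    unfold wOf
    rw [if_neg, if_pos ⟨p, hp, rfl⟩]
    rintro ⟨q, hq, hq1⟩
    exact op_ne_cl hD hq hp hq1
  -- span relations
  have hsub : ∀ k, p.1 ≤ k → k < p.2 → spanF D p.1 ⊆ spanF D k := by
    intro k hk1 hk2 q hq
    simp only [spanF, Finset.mem_filter] at hq ⊢
    obtain ⟨hq, hq1, hq2⟩ := hq
    refine ⟨hq, by omega, ?_⟩
    by_cases hqp : q = p
    · subst hqp; omega
    · have hne1 : q.1 ≠ p.1 := fun h => hqp (op_eq hD hq hp h)
      have hne2 : q.2 ≠ p.2 := fun h => hqp (cl_eq hD hq hp h)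
      have hnc := hD.2.2.1 q hq p hp
      -- q.1 < p.1 < q.2 and noncrossing implies q.2 > p.2
      have : ¬(q.1 < p.1 ∧ p.1 < q.2 ∧ q.2 < p.2) := hnc
      omega
  have hins : spanF D p.1 = insert p (spanF D p.2) := by
    ext q
    simp only [spanF, Finset.mem_filter, Finset.mem_insert]
    constructor
    · rintro ⟨hq, hq1, hq2⟩
      by_cases hqp : q = p
      · exact Or.inl hqp
      · right
        have hne1 : q.1 ≠ p.1 := fun h => hqp (op_eq hD hq hp h)
        have hne2 : q.2 ≠ p.2 := fun h => hqp (cl_eq hD hq hp h)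
        have hnc : ¬(q.1 < p.1 ∧ p.1 < q.2 ∧ q.2 < p.2) := hD.2.2.1 q hq p hp
        exact ⟨hq, by omega, by omega⟩
    · rintro (h | ⟨hq, hq1, hq2⟩)
      · rw [h]; exact ⟨hp, le_refl _, hp12⟩
      · refine ⟨hq, ?_, by omega⟩
        by_cases hqp : q = p
        · subst hqp; omega
        · have hne1 : q.1 ≠ p.1 := fun h => hqp (op_eq hD hq hp h)
          have hne3 : q.1 ≠ p.2 := op_ne_cl hD hq hp
          have hnc : ¬(p.1 < q.1 ∧ q.1 < p.2 ∧ p.2 < q.2) := hD.2.2.1 p hp q hq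
          omega
  have hpnot : p ∉ spanF D p.2 := by
    simp only [spanF, Finset.mem_filter]
    rintro ⟨-, -, h⟩; omega
  refine ⟨hp1, hp12, hp2, hwi, hwj, ?_, ?_⟩
  · rw [dep_wOf hD, dep_wOf hD, hins, Finset.card_insert_of_notMem hpnot]
    push_cast; ring
  · intro k hk1 hk2
    rw [dep_wOf hD, dep_wOf hD]
    exact_mod_cast Nat.cast_le.mpr (Finset.card_le_card (hsub k hk1 hk2))

/-- word-level noncrossing -/
lemma Mm_noncross {n : ℕ} {w : ℕ → ℤ} {i j i' j' : ℕ}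
    (h : Mm n w i j) (h' : Mm n w i' j') (h1 : i < i') (h2 : i' < j) (h3 : j < j') : False := by
  have d1 : dep w i ≤ dep w i' := h.2.2.2.2.2.2 i' (by omega) h2
  have d2 : dep w i' ≤ dep w j := h'.2.2.2.2.2.2 j (by omega) h3
  have d3 : dep w j = dep w i - 1 := h.2.2.2.2.2.1
  omega

lemma Mm_uniq_right {n : ℕ} {w : ℕ → ℤ} {i j j' : ℕ}
    (h : Mm n w i j) (h' : Mm n w i j') : j = j' := by
  rcases Nat.lt_trichotomy j j' with hlt | heq | hlt
  · have := h'.2.2.2.2.2.2 j (by exact le_of_lt h.2.1) hlt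
    have := h.2.2.2.2.2.1
    omega
  · exact heq
  · have := h.2.2.2.2.2.2 j' (le_of_lt h'.2.1) hlt
    have := h'.2.2.2.2.2.1
    omega

lemma Mm_uniq_left {n : ℕ} {w : ℕ → ℤ} {i i' j : ℕ}
    (h : Mm n w i j) (h' : Mm n w i' j) : i = i' := by
  have key : ∀ a b : ℕ, Mm n w a j → Mm n w b j → a < b → False := by
    intro a b ha hb hab
    have hd : dep w a = dep w b := by
      have := ha.2.2.2.2.2.1; have := hb.2.2.2.2.2.1; omega
    have h1 : dep w a ≤ dep w (b-1) := ha.2.2.2.2.2.2 (b-1) (by omega) (by have := hb.2.1; omega)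
    have h2 : dep w b = dep w (b-1) + w b := by
      have hb1 : b = (b-1) + 1 := by have := hb.1; omega
      rw [hb1, dep_succ]; rw [← hb1]
    have h3 : w b = 1 := hb.2.2.2.1
    omega
  rcases Nat.lt_trichotomy i i' with hlt | heq | hlt
  · exact absurd (key i i' h h' hlt) (fun x => x)
  · exact heq
  · exact absurd (key i' i h' h hlt) (fun x => x)

/-- every opener of a valid word has a partner -/
lemma opener_partner {n : ℕ} {w : ℕ → ℤ} (hw : Valid n w) {i : ℕ}
    (hi : i ∈ Finset.Icc 1 (2*n)) (hwi : w i = 1) : ∃ j, Mm n w i j := by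
  simp only [Finset.mem_Icc] at hi
  have hdi : dep w i = dep w (i-1) + 1 := by
    have h1 : i = (i-1) + 1 := by omega
    rw [h1, dep_succ, ← h1, hwi]
  have hdipos : 1 ≤ dep w i := by have := hw.nonneg (i-1); omega
  have hilt : i < 2*n := by
    rcases Nat.lt_or_ge i (2*n) with h | h
    · exact h
    · exfalso
      have hieq : i = 2*n := by omega
      rw [hieq] at hdipos
      have := hw.total; omega
  have hex : ∃ j, i < j ∧ dep w j ≤ dep w i - 1 := by
    refine ⟨2*n, hilt, ?_⟩
    rw [hw.total]; omega
  classical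
  set j := Nat.find hex with hjdef
  have hj : i < j ∧ dep w j ≤ dep w i - 1 := Nat.find_spec hex
  have hij : i < j := hj.1
  have hmid : ∀ k, i ≤ k → k < j → dep w i ≤ dep w k := by
    intro k hk1 hk2
    rcases Nat.eq_or_lt_of_le hk1 with h | h
    · rw [← h]
    · by_contra hcon
      exact Nat.find_min hex hk2 ⟨h, by omega⟩
  have hj2n : j ≤ 2*n := by
    by_contra h
    refine Nat.find_min hex (show 2*n < j by omega) ⟨hilt, ?_⟩
    rw [hw.total]; omega
  have hdj1 : dep w (j-1) ≥ dep w i := hmid (j-1) (by omega) (by omega)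
  have hstep : dep w j = dep w (j-1) + w j := by
    have h1 : j = (j-1) + 1 := by omega
    rw [h1, dep_succ, ← h1]
  have hwjge : -1 ≤ w j := valid_step_ge hw j
  have hdj : dep w j = dep w i - 1 := by omega
  have hwj : w j = -1 := by omega
  exact ⟨j, by omega, hij, hj2n, hwi, hwj, hdj, hmid⟩

/-- every closer of a valid word has a partner -/
lemma closer_partner {n : ℕ} {w : ℕ → ℤ} (hw : Valid n w) {j : ℕ}
    (hj : j ∈ Finset.Icc 1 (2*n)) (hwj : w j = -1) : ∃ i, Mm n w i j := by
  simp only [Finset.mem_Icc] at hj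
  have hstepj : dep w j = dep w (j-1) - 1 := by
    have h1 : j = (j-1) + 1 := by omega
    rw [h1, dep_succ, ← h1, hwj]; ring
  classical
  set P : ℕ → Prop := fun t => dep w t ≤ dep w j with hP
  have hP0 : P 0 := by rw [hP]; simp only [dep_zero]; exact hw.nonneg j
  set t0 := Nat.findGreatest P (j-1) with ht0
  have ht0spec : P t0 := Nat.findGreatest_spec (Nat.zero_le _) hP0
  have ht0le : t0 ≤ j - 1 := Nat.findGreatest_le _
  have ht0max : ∀ u, t0 < u → u ≤ j - 1 → ¬ P u := fun u h1 h2 => Nat.findGreatest_is_greatest h1 h2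
  have ht0ne : t0 ≠ j - 1 := by
    intro h
    rw [h] at ht0spec
    simp only [hP] at ht0spec
    omega
  set i := t0 + 1 with hi
  have hij : i < j := by omega
  have hmid : ∀ k, i ≤ k → k < j → dep w j < dep w k := by
    intro k hk1 hk2
    have := ht0max k (by omega) (by omega)
    simp only [hP] at this
    omega
  have hstepi : dep w i = dep w t0 + w i := by rw [hi, dep_succ]
  have hwile : w i ≤ 1 := valid_step_le hw i
  have hdepi : dep w j < dep w i := hmid i (le_refl _) hij
  have hwi : w i = 1 := by
    simp only [hP] at ht0spec
    omega
  have hdepival : dep w i = dep w j + 1 := by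
    simp only [hP] at ht0spec
    omega
  refine ⟨i, by omega, hij, by omega, hwi, hwj, by omega, ?_⟩
  intro k hk1 hk2
  have := hmid k hk1 hk2
  omega

/-- the word of mF w recovers w, and mF w is a TL diagram -/
lemma isTL_mF {n : ℕ} {w : ℕ → ℤ} (hw : Valid n w) : IsTL n (mF n w) := by
  refine ⟨?_, ?_, ?_, ?_⟩
  · intro p hp
    have h := mem_mF.mp hp
    exact ⟨h.1, h.2.1, h.2.2.1⟩
  · intro p hp q hq hne
    have h := mem_mF.mp hp
    have h' := mem_mF.mp hq
    have hpq : p.1 = q.1 → p = q := by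
      intro e
      have : p.2 = q.2 := Mm_uniq_right (e ▸ h) h'
      exact Prod.ext e this
    have hcl : p.2 = q.2 → p = q := by
      intro e
      have : p.1 = q.1 := Mm_uniq_left (e ▸ h) h'
      exact Prod.ext this e
    refine ⟨fun e => hne (hpq e), fun e => ?_, fun e => ?_, fun e => hne (hcl e)⟩
    · have e1 : w p.1 = 1 := h.2.2.2.1
      have e2 : w q.2 = -1 := h'.2.2.2.2.1
      rw [e] at e1; omega
    · have e1 : w p.2 = -1 := h.2.2.2.2.1
      have e2 : w q.1 = 1 := h'.2.2.2.1
      rw [e] at e1; omega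
  · intro p hp q hq
    rintro ⟨h1, h2, h3⟩
    exact Mm_noncross (mem_mF.mp hp) (mem_mF.mp hq) h1 h2 h3
  · intro p hp k hk1 hk2
    have h := mem_mF.mp hp
    have hk : k ∈ Finset.Icc 1 (2*n) := by
      simp only [Finset.mem_Icc]
      constructor
      · have := h.1; omega
      · have := h.2.2.1; omega
    have hdep : dep w p.1 ≤ dep w k := h.2.2.2.2.2.2 k (by omega) hk2
    have hdeppos : 1 ≤ dep w p.1 := by
      have h1 : p.1 = (p.1 - 1) + 1 := by have := h.1; omega
      have : dep w p.1 = dep w (p.1 - 1) + w p.1 := by rw [h1, dep_succ, ← h1]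
      have := hw.nonneg (p.1 - 1)
      have := h.2.2.2.1
      omega
    have hwk : w k ≠ 0 := by
      intro h0
      have := hw.dot0 k hk h0
      omega
    rcases hw.mem k hk with h1 | h1 | h1
    · obtain ⟨j, hj⟩ := opener_partner hw hk h1
      exact ⟨(k, j), mem_mF.mpr hj, Or.inl rfl⟩
    · obtain ⟨i, hi⟩ := closer_partner hw hk h1
      exact ⟨(i, k), mem_mF.mpr hi, Or.inr rfl⟩
    · exact absurd h1 hwk

lemma wOf_mF {n : ℕ} {w : ℕ → ℤ} (hw : Valid n w) : wOf (mF n w) = w := by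
  funext k
  unfold wOf
  by_cases hop : ∃ p ∈ mF n w, p.1 = k
  · rw [if_pos hop]
    obtain ⟨p, hp, hk⟩ := hop
    rw [← hk]
    exact ((mem_mF.mp hp).2.2.2.1).symm
  · rw [if_neg hop]
    by_cases hcl : ∃ p ∈ mF n w, p.2 = k
    · rw [if_pos hcl]
      obtain ⟨p, hp, hk⟩ := hcl
      rw [← hk]
      exact ((mem_mF.mp hp).2.2.2.2.1).symm
    · rw [if_neg hcl]
      by_cases hk : k ∈ Finset.Icc 1 (2*n)
      · rcases hw.mem k hk with h1 | h1 | h1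
        · obtain ⟨j, hj⟩ := opener_partner hw hk h1
          exact absurd ⟨(k, j), mem_mF.mpr hj, rfl⟩ hop
        · obtain ⟨i, hi⟩ := closer_partner hw hk h1
          exact absurd ⟨(i, k), mem_mF.mpr hi, rfl⟩ hcl
        · exact h1.symm
      · exact (hw.out k hk).symm

/-- a TL diagram is recovered from its word -/
lemma mF_wOf (hD : IsTL n D) : mF n (wOf D) = D := by
  ext p
  constructor
  · intro hp
    have h := mem_mF.mp hp
    -- p.1 is an opener of wOf D, so some arc q has q.1 = p.1
    have : ∃ q ∈ D, q.1 = p.1 := by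
      by_contra hno
      have h2 : wOf D p.1 = 1 := h.2.2.2.1
      unfold wOf at h2
      rw [if_neg hno] at h2
      by_cases h3 : ∃ q ∈ D, q.2 = p.1
      · rw [if_pos h3] at h2; omega
      · rw [if_neg h3] at h2; omega
    obtain ⟨q, hq, hq1⟩ := this
    have hqM := arc_Mm hD hq
    rw [hq1] at hqM
    have : q.2 = p.2 := Mm_uniq_right hqM h
    have hqp : q = p := Prod.ext hq1 this
    rw [← hqp]; exact hq
  · intro hp
    exact mem_mF.mpr (arc_Mm hD hp)

end DiagramLemmas

/-! ## counting infrastructure -/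

def cnt (P : ℕ → Prop) (k : ℕ) : ℕ := ((Finset.Icc 1 k).filter P).card

lemma cnt_zero (P : ℕ → Prop) : cnt P 0 = 0 := by simp [cnt]

lemma cnt_succ (P : ℕ → Prop) (k : ℕ) :
    cnt P (k+1) = cnt P k + (if P (k+1) then 1 else 0) := by
  unfold cnt
  have hins : Finset.Icc 1 (k+1) = insert (k+1) (Finset.Icc 1 k) := by
    ext x
    simp only [Finset.mem_Icc, Finset.mem_insert]
    omega
  rw [hins, Finset.filter_insert]
  by_cases h : P (k+1)
  · rw [if_pos h, if_pos h, Finset.card_insert_of_notMem]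
    intro hmem
    simp only [Finset.mem_filter, Finset.mem_Icc] at hmem
    omega
  · rw [if_neg h, if_neg h]
    omega

lemma cnt_mono (P : ℕ → Prop) {k l : ℕ} (h : k ≤ l) : cnt P k ≤ cnt P l := by
  unfold cnt
  apply Finset.card_le_card
  apply Finset.filter_subset_filter
  exact Finset.Icc_subset_Icc_right h

/-! ## encode -/

def dotCnt (w : ℕ → ℤ) (k : ℕ) : ℕ := cnt (fun t => w t = 0) k

def jval (n : ℕ) (w : ℕ → ℤ) : ℕ := dotCnt w (2*n) / 2

def delta (j c : ℕ) : ℤ := if c ≤ j then -(c : ℤ) else (c : ℤ) - 2*j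

def sOf (n : ℕ) (w : ℕ → ℤ) : ℕ → ℤ := fun k =>
  if k ∈ Finset.Icc 1 (2*n) then
    (if w k = 0 then (if dotCnt w k ≤ jval n w then -1 else 1) else w k)
  else 0

def encode (n : ℕ) (w : ℕ → ℤ) : Finset ℕ :=
  (Finset.Icc 1 (2*n)).filter (fun k => sOf n w k = 1)

section EncodeLemmas

variable {n : ℕ} {w : ℕ → ℤ}

lemma counts_eq (hw : Valid n w) : ∀ k, k ≤ 2*n →
    ((cnt (fun t => w t = 1) k : ℤ) - cnt (fun t => w t = -1) k = dep w k ∧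
     cnt (fun t => w t = 1) k + cnt (fun t => w t = -1) k + dotCnt w k = k) := by
  intro k
  induction k with
  | zero => intro _; simp [cnt_zero, dotCnt, dep_zero]
  | succ m ih =>
    intro hm
    obtain ⟨ih1, ih2⟩ := ih (by omega)
    have hmem := hw.mem (m+1) (by simp [Finset.mem_Icc]; omega)
    unfold dotCnt at ih2 ⊢
    rw [cnt_succ, cnt_succ, cnt_succ, dep_succ]
    rcases hmem with h | h | h
    · rw [if_pos h, if_neg (by rw [h]; norm_num), if_neg (by rw [h]; norm_num), h]
      constructor
      · push_cast; omega
      · omega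
    · rw [if_neg (by rw [h]; norm_num), if_pos h, if_neg (by rw [h]; norm_num), h]
      constructor
      · push_cast; omega
      · omega
    · rw [if_neg (by rw [h]; norm_num), if_neg (by rw [h]; norm_num), if_pos h, h]
      constructor
      · push_cast; omega
      · omega

lemma dot_even (hw : Valid n w) : dotCnt w (2*n) = 2 * jval n w := by
  obtain ⟨h1, h2⟩ := counts_eq hw (2*n) (le_refl _)
  rw [hw.total] at h1
  have hLR : cnt (fun t => w t = 1) (2*n) = cnt (fun t => w t = -1) (2*n) := by omega
  unfold jval
  omega

lemma L_count (hw : Valid n w) : cnt (fun t => w t = 1) (2*n) = n - jval n w ∧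
    jval n w ≤ n := by
  obtain ⟨h1, h2⟩ := counts_eq hw (2*n) (le_refl _)
  rw [hw.total] at h1
  have := dot_even hw
  omega

lemma dotCnt_le (hw : Valid n w) {k : ℕ} (hk : k ≤ 2*n) :
    dotCnt w k ≤ 2 * jval n w := by
  rw [← dot_even hw]
  exact cnt_mono _ hk

/-- counting dots with small index -/
lemma small_dots (w : ℕ → ℤ) (r : ℕ) : ∀ k,
    cnt (fun t => w t = 0 ∧ dotCnt w t ≤ r) k = min (dotCnt w k) r := by
  intro k
  induction k with
  | zero => simp [cnt_zero, dotCnt]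
  | succ m ih =>
    rw [cnt_succ, ih]
    by_cases h : w (m+1) = 0
    · have hd : dotCnt w (m+1) = dotCnt w m + 1 := by
        unfold dotCnt; rw [cnt_succ, if_pos h]
      rw [hd]
      by_cases h2 : dotCnt w m + 1 ≤ r
      · rw [if_pos ⟨h, h2⟩]
        omega
      · rw [if_neg (fun hc => h2 hc.2)]
        omega
    · have hd : dotCnt w (m+1) = dotCnt w m := by
        unfold dotCnt; rw [cnt_succ, if_neg h]; omega
      rw [hd, if_neg (fun hc => h hc.1)]
      omega

lemma sOf_eq_one_iff (hw : Valid n w) {k : ℕ} (hk : k ∈ Finset.Icc 1 (2*n)) :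
    sOf n w k = 1 ↔ (w k = 1 ∨ (w k = 0 ∧ ¬(dotCnt w k ≤ jval n w))) := by
  unfold sOf
  rw [if_pos hk]
  by_cases h0 : w k = 0
  · rw [if_pos h0]
    by_cases h1 : dotCnt w k ≤ jval n w
    · rw [if_pos h1]
      constructor
      · intro h; exact absurd h (by norm_num)
      · rintro (h | h)
        · rw [h0] at h; exact absurd h (by norm_num)
        · exact absurd h1 h.2
    · rw [if_neg h1]
      constructor
      · intro _; exact Or.inr ⟨h0, h1⟩
      · intro _; rfl
  · rw [if_neg h0]
    constructor
    · intro h; exact Or.inl h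
    · rintro (h | h)
      · exact h
      · exact absurd h.1 h0

lemma sOf_cnt (hw : Valid n w) : ∀ k, k ≤ 2*n →
    cnt (fun t => sOf n w t = 1) k + min (dotCnt w k) (jval n w)
      = cnt (fun t => w t = 1) k + dotCnt w k := by
  intro k
  induction k with
  | zero => intro _; simp [cnt_zero, dotCnt]
  | succ m ih =>
    intro hm
    have ih' := ih (by omega)
    have hmem : m + 1 ∈ Finset.Icc 1 (2*n) := by simp only [Finset.mem_Icc]; omega
    have hiff := sOf_eq_one_iff hw (k := m+1) hmem
    have hdstep := cnt_succ (fun t => w t = 0) m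
    unfold dotCnt at ih' hiff ⊢
    rw [cnt_succ (fun t => sOf n w t = 1) m, cnt_succ (fun t => w t = 1) m, hdstep]
    rcases hw.mem (m+1) hmem with h | h | h
    · rw [if_pos (hiff.mpr (Or.inl h)), if_pos h,
        if_neg (show ¬ w (m+1) = 0 by rw [h]; norm_num)]
      omega
    · have hs : ¬ (sOf n w (m+1) = 1) := by
        intro hs
        rcases hiff.mp hs with h' | h'
        · rw [h] at h'; exact absurd h' (by norm_num)
        · rw [h] at h'; exact absurd h'.1 (by norm_num)
      rw [if_neg hs, if_neg (show ¬ w (m+1) = 1 by rw [h]; norm_num),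
        if_neg (show ¬ w (m+1) = 0 by rw [h]; norm_num)]
      omega
    · have hd : cnt (fun t => w t = 0) (m+1) = cnt (fun t => w t = 0) m + 1 := by
        rw [hdstep, if_pos h]
      by_cases hj : cnt (fun t => w t = 0) (m+1) ≤ jval n w
      · have hs : ¬ (sOf n w (m+1) = 1) := by
          intro hs
          rcases hiff.mp hs with h' | h'
          · rw [h] at h'; exact absurd h' (by norm_num)
          · exact h'.2 hj
        rw [hd] at hj
        rw [if_neg hs, if_neg (show ¬ w (m+1) = 1 by rw [h]; norm_num), if_pos h]
        omega
      · have hs : sOf n w (m+1) = 1 := hiff.mpr (Or.inr ⟨h, hj⟩)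
        rw [hd] at hj
        rw [if_pos hs, if_neg (show ¬ w (m+1) = 1 by rw [h]; norm_num), if_pos h]
        omega

lemma encode_card (hw : Valid n w) : (encode n w).card = n := by
  have h0 : (encode n w).card = cnt (fun t => sOf n w t = 1) (2*n) := by
    unfold encode cnt
    congr 1
    ext x
    simp only [Finset.mem_filter]
  have h1 := sOf_cnt hw (2*n) (le_refl _)
  have h2 := (L_count hw).1
  have h3 := (L_count hw).2
  have h4 := dot_even hw
  omega

end EncodeLemmas

/-! ## decode -/

def specDown (s : ℕ → ℤ) (k : ℕ) : Prop := ∀ t, t < k → dep s k < dep s t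

def specUp (s : ℕ → ℤ) (k : ℕ) : Prop := ∀ t, k ≤ t → dep s (k-1) < dep s t

def decodeW (n : ℕ) (s : ℕ → ℤ) : ℕ → ℤ := fun k =>
  if k ∈ Finset.Icc 1 (2*n) then (if specDown s k ∨ specUp s k then 0 else s k) else 0

lemma dep_pred (w : ℕ → ℤ) {k : ℕ} (hk : 1 ≤ k) : dep w k = dep w (k-1) + w k := by
  have h : k = (k-1) + 1 := by omega
  rw [h, dep_succ, ← h]

lemma cnt_congr (P : ℕ → Prop) {a b : ℕ} (hab : a ≤ b)
    (h : ∀ u, a < u → u ≤ b → ¬ P u) : cnt P b = cnt P a := by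
  induction b with
  | zero =>
    have : a = 0 := by omega
    rw [this]
  | succ m ih =>
    rcases Nat.eq_or_lt_of_le hab with he | hl
    · rw [he]
    · rw [cnt_succ, if_neg (h (m+1) (by omega) (le_refl _)),
        ih (by omega) (fun u hu1 hu2 => h u hu1 (by omega))]
      omega

section SOfLemmas

variable {n : ℕ} {w : ℕ → ℤ}

lemma delta_succ (j c : ℕ) : delta j (c+1) = delta j c + (if c + 1 ≤ j then -1 else 1) := by
  unfold delta
  split_ifs <;> push_cast <;> omega

lemma depsOf (hw : Valid n w) : ∀ k, k ≤ 2*n →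
    dep (sOf n w) k = dep w k + delta (jval n w) (dotCnt w k) := by
  intro k
  induction k with
  | zero => intro _; simp [dep_zero, dotCnt, cnt_zero, delta]
  | succ m ih =>
    intro hm
    have ih' := ih (by omega)
    have hmem : m+1 ∈ Finset.Icc 1 (2*n) := by simp only [Finset.mem_Icc]; omega
    have hdstep := cnt_succ (fun t => w t = 0) m
    rw [dep_succ, dep_succ, ih']
    by_cases h : w (m+1) = 0
    · have hd : dotCnt w (m+1) = dotCnt w m + 1 := by
        unfold dotCnt; rw [hdstep, if_pos h]
      have hsof : sOf n w (m+1) = if dotCnt w (m+1) ≤ jval n w then -1 else 1 := by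
        unfold sOf; rw [if_pos hmem, if_pos h]
      rw [hsof, hd, h, delta_succ]
      by_cases hj : dotCnt w m + 1 ≤ jval n w
      · rw [if_pos hj]; ring
      · rw [if_neg hj]; ring
    · have hd : dotCnt w (m+1) = dotCnt w m := by
        unfold dotCnt; rw [hdstep, if_neg h]; omega
      have hsof : sOf n w (m+1) = w (m+1) := by
        unfold sOf; rw [if_pos hmem, if_neg h]
      rw [hsof, hd]; ring

lemma sOf_out (k : ℕ) (hk : k ∉ Finset.Icc 1 (2*n)) : sOf n w k = 0 := by
  unfold sOf; rw [if_neg hk]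

lemma sOf_total (hw : Valid n w) : dep (sOf n w) (2*n) = 0 := by
  rw [depsOf hw (2*n) (le_refl _), hw.total, dot_even hw]
  have : delta (jval n w) (2 * jval n w) = 0 := by
    unfold delta; split_ifs <;> push_cast <;> omega
  rw [this]; ring

lemma sdep_const {k : ℕ} (hk : 2*n ≤ k) (hw : Valid n w) :
    dep (sOf n w) k = 0 := by
  have h := dep_const_after (sOf n w) n (fun t ht => sOf_out t ht) hk
  rw [h, sOf_total hw]

/-- dots with small index are specDown -/
lemma dot_specDown (hw : Valid n w) {k : ℕ} (hk : k ∈ Finset.Icc 1 (2*n))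
    (h0 : w k = 0) (hj : dotCnt w k ≤ jval n w) : specDown (sOf n w) k := by
  simp only [Finset.mem_Icc] at hk
  intro t ht
  have hd : dotCnt w k = dotCnt w (k-1) + 1 := by
    have h : k = (k-1)+1 := by omega
    have h2 : dotCnt w ((k-1)+1) = dotCnt w (k-1) + 1 := by
      unfold dotCnt
      rw [cnt_succ, if_pos (by rw [← h]; exact h0)]
    rw [← h] at h2
    exact h2
  have hct : dotCnt w t ≤ dotCnt w (k-1) := cnt_mono _ (by omega)
  have hdk : dep (sOf n w) k = dep w k + delta (jval n w) (dotCnt w k) :=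
    depsOf hw k (by omega)
  have hdt : dep (sOf n w) t = dep w t + delta (jval n w) (dotCnt w t) :=
    depsOf hw t (by omega)
  have e1 : delta (jval n w) (dotCnt w k) = -(dotCnt w k : ℤ) := by
    unfold delta; rw [if_pos hj]
  have e2 : delta (jval n w) (dotCnt w t) = -(dotCnt w t : ℤ) := by
    unfold delta; rw [if_pos (by omega)]
  have h3 : dep w k = 0 := hw.dot0 k (by simp only [Finset.mem_Icc]; omega) h0
  have h4 : 0 ≤ dep w t := hw.nonneg t
  omega

/-- dots with large index are specUp -/
lemma dot_specUp (hw : Valid n w) {k : ℕ} (hk : k ∈ Finset.Icc 1 (2*n))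
    (h0 : w k = 0) (hj : ¬ (dotCnt w k ≤ jval n w)) : specUp (sOf n w) k := by
  simp only [Finset.mem_Icc] at hk
  intro t ht
  have hd : dotCnt w k = dotCnt w (k-1) + 1 := by
    have h : k = (k-1)+1 := by omega
    have h2 : dotCnt w ((k-1)+1) = dotCnt w (k-1) + 1 := by
      unfold dotCnt
      rw [cnt_succ, if_pos (by rw [← h]; exact h0)]
    rw [← h] at h2
    exact h2
  have hdw0 : dep w k = 0 := hw.dot0 k (by simp only [Finset.mem_Icc]; omega) h0
  have hdwk1 : dep w (k-1) = 0 := by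
    have := dep_pred w (show 1 ≤ k by omega)
    rw [h0] at this; omega
  have hdk1 : dep (sOf n w) (k-1) = dep w (k-1) + delta (jval n w) (dotCnt w (k-1)) :=
    depsOf hw (k-1) (by omega)
  have e1 : delta (jval n w) (dotCnt w (k-1)) = (dotCnt w (k-1) : ℤ) - 2 * jval n w := by
    unfold delta; split_ifs <;> push_cast <;> omega
  have hcbound : dotCnt w k ≤ 2 * jval n w := dotCnt_le hw (by omega)
  rcases Nat.lt_or_ge t (2*n + 1) with h2 | h2
  · have hdt : dep (sOf n w) t = dep w t + delta (jval n w) (dotCnt w t) :=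
      depsOf hw t (by omega)
    have hct : dotCnt w k ≤ dotCnt w t := cnt_mono _ ht
    have e2 : delta (jval n w) (dotCnt w t) = (dotCnt w t : ℤ) - 2 * jval n w := by
      unfold delta; split_ifs <;> push_cast <;> omega
    have h4 : 0 ≤ dep w t := hw.nonneg t
    omega
  · have hdt : dep (sOf n w) t = 0 := sdep_const (by omega) hw
    omega

/-- openers are not special -/
lemma opener_notspec (hw : Valid n w) {k : ℕ} (hk : k ∈ Finset.Icc 1 (2*n))
    (h1 : w k = 1) : ¬ (specDown (sOf n w) k ∨ specUp (sOf n w) k) := by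
  simp only [Finset.mem_Icc] at hk
  have hsk : sOf n w k = 1 := by
    unfold sOf
    rw [if_pos (by simp only [Finset.mem_Icc]; omega), if_neg (by rw [h1]; norm_num)]
    exact h1
  have hstep : dep (sOf n w) k = dep (sOf n w) (k-1) + 1 := by
    have := dep_pred (sOf n w) (show 1 ≤ k by omega)
    rw [hsk] at this; omega
  rintro (hs | hs)
  · have := hs (k-1) (by omega)
    omega
  · -- find the matching closer
    have hdw : dep w k = dep w (k-1) + 1 := by
      have := dep_pred w (show 1 ≤ k by omega)
      rw [h1] at this; omega
    have hex : ∃ t, k ≤ t ∧ dep w t ≤ dep w (k-1) := by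
      refine ⟨2*n, by omega, ?_⟩
      rw [hw.total]; exact hw.nonneg (k-1)
    set t := Nat.find hex with htdef
    have ht : k ≤ t ∧ dep w t ≤ dep w (k-1) := Nat.find_spec hex
    have htmin : ∀ u, k ≤ u → u < t → dep w (k-1) < dep w u := by
      intro u hu1 hu2
      by_contra hcon
      exact Nat.find_min hex hu2 ⟨hu1, by omega⟩
    have ht2n : t ≤ 2*n := by
      by_contra hcon
      have := htmin (2*n) (by omega) (by omega)
      rw [hw.total] at this
      have := hw.nonneg (k-1)
      omega
    have htk : k < t := by
      rcases Nat.eq_or_lt_of_le ht.1 with he | hl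
      · exfalso; rw [← he] at ht; omega
      · exact hl
    have hdept : dep w t = dep w (k-1) := by
      have hstept := dep_pred w (show 1 ≤ t by omega)
      have hge : -1 ≤ w t := valid_step_ge hw t
      have := htmin (t-1) (by omega) (by omega)
      have h2 := ht.2
      omega
    have hwt : w t ≠ 0 := by
      intro h0
      have : dep w (t-1) = dep w t := by
        have := dep_pred w (show 1 ≤ t by omega)
        rw [h0] at this; omega
      have := htmin (t-1) (by omega) (by omega)
      omega
    have hnodots : dotCnt w t = dotCnt w (k-1) := by
      apply cnt_congr _ (by omega)
      intro u hu1 hu2 hPu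
      have hu2n : u ∈ Finset.Icc 1 (2*n) := by simp only [Finset.mem_Icc]; omega
      rcases Nat.eq_or_lt_of_le hu2 with he | hl
      · rw [he] at hPu; exact hwt hPu
      · rcases Nat.eq_or_lt_of_le (show k ≤ u by omega) with he2 | hl2
        · rw [← he2] at hPu; rw [h1] at hPu; norm_num at hPu
        · have := htmin u (by omega) (by omega)
          have := hw.dot0 u hu2n hPu
          have := hw.nonneg (k-1)
          omega
    have := hs t (by omega)
    have e1 : dep (sOf n w) t = dep w t + delta (jval n w) (dotCnt w t) :=
      depsOf hw t ht2n
    have e2 : dep (sOf n w) (k-1) = dep w (k-1) + delta (jval n w) (dotCnt w (k-1)) :=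
      depsOf hw (k-1) (by omega)
    rw [hnodots, hdept] at e1
    omega

/-- closers are not special -/
lemma closer_notspec (hw : Valid n w) {k : ℕ} (hk : k ∈ Finset.Icc 1 (2*n))
    (h1 : w k = -1) : ¬ (specDown (sOf n w) k ∨ specUp (sOf n w) k) := by
  simp only [Finset.mem_Icc] at hk
  have hsk : sOf n w k = -1 := by
    unfold sOf
    rw [if_pos (by simp only [Finset.mem_Icc]; omega), if_neg (by rw [h1]; norm_num)]
    exact h1
  have hstep : dep (sOf n w) k = dep (sOf n w) (k-1) - 1 := by
    have := dep_pred (sOf n w) (show 1 ≤ k by omega)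
    rw [hsk] at this; omega
  have hdw : dep w k = dep w (k-1) - 1 := by
    have := dep_pred w (show 1 ≤ k by omega)
    rw [h1] at this; omega
  rintro (hs | hs)
  · -- find maximal t < k with dep w t ≤ dep w k
    set P : ℕ → Prop := fun t => dep w t ≤ dep w k with hP
    have hP0 : P 0 := by rw [hP]; simp only [dep_zero]; exact hw.nonneg k
    set t0 := Nat.findGreatest P (k-1) with ht0def
    have ht0spec : P t0 := Nat.findGreatest_spec (Nat.zero_le _) hP0
    have ht0le : t0 ≤ k - 1 := Nat.findGreatest_le _
    have ht0max : ∀ u, t0 < u → u ≤ k - 1 → dep w k < dep w u := by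
      intro u hu1 hu2
      have := Nat.findGreatest_is_greatest (P := P) hu1 hu2
      simp only [hP] at this
      omega
    have ht0ne : t0 ≠ k - 1 := by
      intro he
      rw [he] at ht0spec
      simp only [hP] at ht0spec
      omega
    have hdt0 : dep w t0 = dep w k := by
      have hle : w (t0+1) ≤ 1 := valid_step_le hw (t0+1)
      have hstep1 : dep w (t0+1) = dep w t0 + w (t0+1) := dep_succ w t0
      have := ht0max (t0+1) (by omega) (by omega)
      simp only [hP] at ht0spec
      omega
    have hnodots : dotCnt w k = dotCnt w t0 := by
      apply cnt_congr _ (by omega)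
      intro u hu1 hu2 hPu
      have hu2n : u ∈ Finset.Icc 1 (2*n) := by simp only [Finset.mem_Icc]; omega
      rcases Nat.eq_or_lt_of_le hu2 with he | hl
      · rw [he] at hPu; rw [hPu] at h1; norm_num at h1
      · have := ht0max u hu1 (by omega)
        have := hw.dot0 u hu2n hPu
        have := hw.nonneg k
        omega
    have e1 : dep (sOf n w) t0 = dep w t0 + delta (jval n w) (dotCnt w t0) :=
      depsOf hw t0 (by omega)
    have e2 : dep (sOf n w) k = dep w k + delta (jval n w) (dotCnt w k) :=
      depsOf hw k (by omega)
    rw [hnodots, ← hdt0] at e2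
    have := hs t0 (by omega)
    omega
  · have := hs k (le_refl _)
    omega

/-- decoding the encoding gives back the word -/
lemma decode_sOf (hw : Valid n w) : decodeW n (sOf n w) = w := by
  funext k
  unfold decodeW
  by_cases hk : k ∈ Finset.Icc 1 (2*n)
  · rw [if_pos hk]
    by_cases h0 : w k = 0
    · rw [if_pos]
      · exact h0.symm
      · by_cases hj : dotCnt w k ≤ jval n w
        · exact Or.inl (dot_specDown hw hk h0 hj)
        · exact Or.inr (dot_specUp hw hk h0 hj)
    · rcases hw.mem k hk with h1 | h1 | h1
      · rw [if_neg (opener_notspec hw hk h1)]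
        unfold sOf
        rw [if_pos hk, if_neg h0]
      · rw [if_neg (closer_notspec hw hk h1)]
        unfold sOf
        rw [if_pos hk, if_neg h0]
      · exact absurd h1 h0
  · rw [if_neg hk]
    exact (hw.out k hk).symm

end SOfLemmas

/-! ## decoding an arbitrary balanced sequence -/

def sFromS (n : ℕ) (S : Finset ℕ) : ℕ → ℤ := fun k =>
  if k ∈ Finset.Icc 1 (2*n) then (if k ∈ S then 1 else -1) else 0

def mlow (s : ℕ → ℤ) : ℕ → ℤ
  | 0 => 0
  | (k+1) => min (mlow s k) (dep s (k+1))

def qlow (n : ℕ) (s : ℕ → ℤ) (k : ℕ) : ℤ :=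
  if 2*n ≤ k then dep s k else min (dep s k) (qlow n s (k+1))
termination_by 2*n - k
decreasing_by omega

section DecodeLemmas

variable {n : ℕ} {s : ℕ → ℤ}

lemma mlow_le (s : ℕ → ℤ) (k : ℕ) : mlow s k ≤ dep s k := by
  cases k with
  | zero => rw [dep_zero]; exact le_refl _
  | succ m => exact min_le_right _ _

lemma mlow_succ (s : ℕ → ℤ) (k : ℕ) : mlow s (k+1) = min (mlow s k) (dep s (k+1)) := rfl

lemma mlow_nonpos (s : ℕ → ℤ) (k : ℕ) : mlow s k ≤ 0 := by
  induction k with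
  | zero => exact le_refl _
  | succ m ih => rw [mlow_succ]; exact le_trans (min_le_left _ _) ih

lemma mlow_min (s : ℕ → ℤ) : ∀ k t, t ≤ k → mlow s k ≤ dep s t := by
  intro k
  induction k with
  | zero => intro t ht; have : t = 0 := by omega
            rw [this, dep_zero]; exact le_refl _
  | succ m ih =>
    intro t ht
    rcases Nat.eq_or_lt_of_le ht with he | hl
    · rw [he]; exact mlow_le s (m+1)
    · rw [mlow_succ]
      exact le_trans (min_le_left _ _) (ih t (by omega))

lemma mlow_attained (s : ℕ → ℤ) : ∀ k, ∃ t, t ≤ k ∧ mlow s k = dep s t := by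
  intro k
  induction k with
  | zero => exact ⟨0, le_refl _, (dep_zero s).symm⟩
  | succ m ih =>
    obtain ⟨t, ht, he⟩ := ih
    rw [mlow_succ]
    rcases le_total (mlow s m) (dep s (m+1)) with h | h
    · exact ⟨t, by omega, by rw [min_eq_left h]; exact he⟩
    · exact ⟨m+1, le_refl _, by rw [min_eq_right h]⟩

lemma qlow_2n (n : ℕ) (s : ℕ → ℤ) {k : ℕ} (hk : 2*n ≤ k) : qlow n s k = dep s k := by
  rw [qlow, if_pos hk]

lemma qlow_eq (n : ℕ) (s : ℕ → ℤ) {k : ℕ} (hk : k < 2*n) :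
    qlow n s k = min (dep s k) (qlow n s (k+1)) := by
  rw [qlow]; rw [if_neg (by omega)]

lemma qlow_le (n : ℕ) (s : ℕ → ℤ) (k : ℕ) : qlow n s k ≤ dep s k := by
  rcases Nat.lt_or_ge k (2*n) with h | h
  · rw [qlow_eq n s h]; exact min_le_left _ _
  · rw [qlow_2n n s h]

lemma qlow_min (n : ℕ) (s : ℕ → ℤ) : ∀ d k, k + d ≤ 2*n → qlow n s k ≤ dep s (k + d) := by
  intro d
  induction d with
  | zero => intro k _; exact qlow_le n s k
  | succ m ih =>
    intro k hk
    have h1 : qlow n s k ≤ qlow n s (k+1) := by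
      rw [qlow_eq n s (by omega)]; exact min_le_right _ _
    have h2 := ih (k+1) (by omega)
    have : k + 1 + m = k + (m+1) := by omega
    rw [this] at h2
    exact le_trans h1 h2

lemma qlow_min' (n : ℕ) (s : ℕ → ℤ) {k u : ℕ} (h1 : k ≤ u) (h2 : u ≤ 2*n) :
    qlow n s k ≤ dep s u := by
  have := qlow_min n s (u - k) k (by omega)
  have he : k + (u - k) = u := by omega
  rw [he] at this
  exact this

lemma qlow_attained (n : ℕ) (s : ℕ → ℤ) : ∀ d k, k + d = 2*n →
    ∃ u, k ≤ u ∧ u ≤ 2*n ∧ qlow n s k = dep s u := by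
  intro d
  induction d with
  | zero => intro k hk; exact ⟨k, le_refl _, by omega, qlow_2n n s (by omega)⟩
  | succ m ih =>
    intro k hk
    obtain ⟨u, hu1, hu2, hu3⟩ := ih (k+1) (by omega)
    rw [qlow_eq n s (by omega)]
    rcases le_total (dep s k) (qlow n s (k+1)) with h | h
    · exact ⟨k, le_refl _, by omega, by rw [min_eq_left h]⟩
    · exact ⟨u, by omega, hu2, by rw [min_eq_right h]; exact hu3⟩

lemma qlow_attained' (n : ℕ) (s : ℕ → ℤ) {k : ℕ} (hk : k ≤ 2*n) :
    ∃ u, k ≤ u ∧ u ≤ 2*n ∧ qlow n s k = dep s u :=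
  qlow_attained n s (2*n - k) k (by omega)

lemma downIff (s : ℕ → ℤ) (k : ℕ) : specDown s (k+1) ↔ dep s (k+1) < mlow s k := by
  constructor
  · intro h
    obtain ⟨t, ht, he⟩ := mlow_attained s k
    rw [he]
    exact h t (by omega)
  · intro h t ht
    exact lt_of_lt_of_le h (mlow_min s k t (by omega))

lemma upIff (hout : ∀ t, t ∉ Finset.Icc 1 (2*n) → s t = 0) (k : ℕ) (hk : k + 1 ≤ 2*n) :
    specUp s (k+1) ↔ dep s k < qlow n s (k+1) := by
  have hsimp : (k+1) - 1 = k := by omega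
  constructor
  · intro h
    obtain ⟨u, hu1, hu2, hu3⟩ := qlow_attained' n s hk
    rw [hu3]
    have := h u hu1
    rw [hsimp] at this
    exact this
  · intro h t ht
    rw [hsimp]
    rcases Nat.lt_or_ge t (2*n+1) with h2 | h2
    · exact lt_of_lt_of_le h (qlow_min' n s ht (by omega))
    · have he : dep s t = dep s (2*n) := dep_const_after s n hout (by omega)
      rw [he]
      exact lt_of_lt_of_le h (qlow_min' n s hk (le_refl _))

variable (hout : ∀ t, t ∉ Finset.Icc 1 (2*n) → s t = 0)
  (hpm : ∀ t ∈ Finset.Icc 1 (2*n), s t = 1 ∨ s t = -1)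
  (htot : dep s (2*n) = 0)

include hout hpm htot in
lemma decode_main : ∀ k, k ≤ 2*n →
    dep (decodeW n s) k = dep s k - max (mlow s k) (qlow n s k) ∧
    (cnt (fun t => specDown s t) k : ℤ) = - mlow s k ∧
    (cnt (fun t => specUp s t) k : ℤ) = max 0 (qlow n s k - mlow s k) := by
  intro k
  induction k with
  | zero =>
    intro _
    have hq0 : qlow n s 0 ≤ 0 := by
      have := qlow_min' n s (Nat.zero_le (2*n)) (le_refl _)
      rw [htot] at this
      exact this
    have hm0 : mlow s 0 = 0 := rfl
    refine ⟨?_, ?_, ?_⟩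
    · rw [dep_zero, dep_zero, hm0]
      omega
    · rw [cnt_zero, hm0]; norm_num
    · rw [cnt_zero, hm0]; omega
  | succ k ih =>
    intro hk
    obtain ⟨ihd, ihD, ihU⟩ := ih (by omega)
    have hmem : k + 1 ∈ Finset.Icc 1 (2*n) := by simp only [Finset.mem_Icc]; omega
    have e1 := dep_succ (decodeW n s) k
    have e2 := dep_succ s k
    have em := mlow_succ s k
    have eq' : qlow n s k = min (dep s k) (qlow n s (k+1)) := qlow_eq n s (by omega)
    have eB : qlow n s (k+1) ≤ dep s (k+1) := qlow_le n s (k+1)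
    have eA : mlow s k ≤ dep s k := mlow_le s k
    have spm : s (k+1) = 1 ∨ s (k+1) = -1 := hpm (k+1) hmem
    have edec : decodeW n s (k+1) =
        if specDown s (k+1) ∨ specUp s (k+1) then 0 else s (k+1) := by
      unfold decodeW; rw [if_pos hmem]
    have cD := cnt_succ (fun t => specDown s t) k
    have cU := cnt_succ (fun t => specUp s t) k
    by_cases hdn : dep s (k+1) < mlow s k
    · have hD : specDown s (k+1) := (downIff s k).mpr hdn
      by_cases hup : dep s k < qlow n s (k+1)
      · omega
      · have hU : ¬ specUp s (k+1) := fun h => hup ((upIff hout k hk).mp h)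
        rw [if_pos (Or.inl hD)] at edec
        rw [if_pos hD] at cD
        rw [if_neg hU] at cU
        refine ⟨by omega, by omega, by omega⟩
    · have hD : ¬ specDown s (k+1) := fun h => hdn ((downIff s k).mp h)
      by_cases hup : dep s k < qlow n s (k+1)
      · have hU : specUp s (k+1) := (upIff hout k hk).mpr hup
        rw [if_pos (Or.inr hU)] at edec
        rw [if_neg hD] at cD
        rw [if_pos hU] at cU
        refine ⟨by omega, by omega, by omega⟩
      · have hU : ¬ specUp s (k+1) := fun h => hup ((upIff hout k hk).mp h)
        rw [if_neg (fun h => h.elim hD hU)] at edec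
        rw [if_neg hD] at cD
        rw [if_neg hU] at cU
        refine ⟨by omega, by omega, by omega⟩

include hout hpm htot in
lemma valid_decode : Valid n (decodeW n s) := by
  have main := decode_main hout hpm htot
  have hd2n : dep (decodeW n s) (2*n) = 0 := by
    obtain ⟨h1, -, -⟩ := main (2*n) (le_refl _)
    have hq : qlow n s (2*n) = 0 := by rw [qlow_2n n s (le_refl _), htot]
    have hm := mlow_nonpos s (2*n)
    rw [h1, htot, hq]
    omega
  constructor
  · intro k hk
    unfold decodeW; rw [if_neg hk]
  · intro k hk
    unfold decodeW
    rw [if_pos hk]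
    by_cases h : specDown s k ∨ specUp s k
    · rw [if_pos h]; right; right; rfl
    · rw [if_neg h]
      rcases hpm k hk with h1 | h1
      · exact Or.inl h1
      · exact Or.inr (Or.inl h1)
  · intro k
    rcases Nat.lt_or_ge k (2*n+1) with h2 | h2
    · obtain ⟨h1, -, -⟩ := main k (by omega)
      have hq : qlow n s k ≤ dep s k := qlow_le n s k
      have hm : mlow s k ≤ dep s k := mlow_le s k
      omega
    · have he : dep (decodeW n s) k = dep (decodeW n s) (2*n) := by
        apply dep_const_after
        · intro t ht; unfold decodeW; rw [if_neg ht]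
        · omega
      rw [he, hd2n]
  · exact hd2n
  · intro k hk h0
    simp only [Finset.mem_Icc] at hk
    have hkk : k - 1 + 1 = k := by omega
    have hsk : s k ≠ 0 := by
      rcases hpm k (by simp only [Finset.mem_Icc]; omega) with h | h <;> rw [h] <;> norm_num
    have hspec : specDown s k ∨ specUp s k := by
      by_contra hno
      unfold decodeW at h0
      rw [if_pos (by simp only [Finset.mem_Icc]; omega), if_neg hno] at h0
      exact hsk h0
    obtain ⟨h1, -, -⟩ := main k (by omega)
    have hq : qlow n s k ≤ dep s k := qlow_le n s k
    have hm : mlow s k ≤ dep s k := mlow_le s k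
    rcases hspec with hs | hs
    · -- new strict minimum: mlow s k = dep s k
      have hdn : dep s k < mlow s (k-1) := by
        have := (downIff s (k-1)).mp (by rw [hkk]; exact hs)
        rw [hkk] at this
        exact this
      have : mlow s k = dep s k := by
        have := mlow_succ s (k-1)
        rw [hkk] at this
        omega
      omega
    · -- last departure: qlow s k = dep s k
      have hup : dep s (k-1) < qlow n s k := by
        have h3 := (upIff hout (k-1) (by omega)).mp (by rw [hkk]; exact hs)
        rw [hkk] at h3
        exact h3
      have hstep : dep s k = dep s (k-1) + s k := dep_pred s (by omega)
      have hs1 : s k ≤ 1 := by rcases hpm k (by simp only [Finset.mem_Icc]; omega)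
                                   with h | h <;> omega
      omega

end DecodeLemmas

/-! ## recovering the sequence from the decoded word -/

lemma cnt_congr_iff {P Q : ℕ → Prop} : ∀ k, (∀ t, 1 ≤ t → t ≤ k → (P t ↔ Q t)) →
    cnt P k = cnt Q k := by
  intro k
  induction k with
  | zero => intro _; simp [cnt_zero]
  | succ m ih =>
    intro h
    rw [cnt_succ, cnt_succ, ih (fun t h1 h2 => h t h1 (by omega))]
    by_cases hp : P (m+1)
    · rw [if_pos hp, if_pos ((h (m+1) (by omega) (le_refl _)).mp hp)]
    · rw [if_neg hp, if_neg (fun hq => hp ((h (m+1) (by omega) (le_refl _)).mpr hq))]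

lemma cnt_or {P Q : ℕ → Prop} (hdisj : ∀ t, ¬(P t ∧ Q t)) :
    ∀ k, cnt (fun t => P t ∨ Q t) k = cnt P k + cnt Q k := by
  intro k
  induction k with
  | zero => simp [cnt_zero]
  | succ m ih =>
    rw [cnt_succ, cnt_succ, cnt_succ, ih]
    by_cases hp : P (m+1)
    · rw [if_pos (Or.inl hp), if_pos hp, if_neg (fun hq => hdisj (m+1) ⟨hp, hq⟩)]
      omega
    · rw [if_neg hp]
      by_cases hq : Q (m+1)
      · rw [if_pos (Or.inr hq), if_pos hq]
        omega
      · rw [if_neg (fun h => h.elim hp hq), if_neg hq]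
        omega

lemma cnt_vanish {P : ℕ → Prop} {k : ℕ} (h : ∀ t, 1 ≤ t → t ≤ k → ¬ P t) :
    cnt P k = 0 := by
  rw [cnt_congr (P := P) (Nat.zero_le k) (fun u hu1 hu2 => h u (by omega) hu2), cnt_zero]

lemma cnt_one_le {P : ℕ → Prop} {k : ℕ} (hk : 1 ≤ k) (hP : P k) : 1 ≤ cnt P k := by
  have hkk : k = (k-1)+1 := by omega
  rw [hkk, cnt_succ, if_pos (by rw [← hkk]; exact hP)]
  omega

lemma spec_disjoint (s : ℕ → ℤ) : ∀ t, ¬ (specDown s t ∧ specUp s t) := by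
  rintro t ⟨hd, hu⟩
  cases t with
  | zero => exact absurd (hu 0 (le_refl _)) (lt_irrefl _)
  | succ m =>
    have h1 := hu (m+1) (le_refl _)
    have h2 := hd m (by omega)
    simp only [Nat.add_sub_cancel] at h1
    omega

lemma down_lt_up {s : ℕ → ℤ} {t t' : ℕ} (hd : specDown s t') (hu : specUp s t)
    (ht : 1 ≤ t) : t' < t := by
  by_contra h
  push_neg at h
  have h1 := hu t' h
  have h2 := hd (t-1) (by omega)
  omega

section SOfDecode

variable {n : ℕ} {s : ℕ → ℤ}
variable (hout : ∀ t, t ∉ Finset.Icc 1 (2*n) → s t = 0)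
  (hpm : ∀ t ∈ Finset.Icc 1 (2*n), s t = 1 ∨ s t = -1)
  (htot : dep s (2*n) = 0)

include hout hpm htot in
lemma sOf_decode : ∀ k, sOf n (decodeW n s) k = s k := by
  intro k
  have main := decode_main hout hpm htot
  have hq2n : qlow n s (2*n) = 0 := by rw [qlow_2n n s (le_refl _), htot]
  obtain ⟨-, hD2, hU2⟩ := main (2*n) (le_refl _)
  rw [hq2n] at hU2
  have hDU : cnt (fun t => specDown s t) (2*n) = cnt (fun t => specUp s t) (2*n) := by
    have hm := mlow_nonpos s (2*n)
    omega
  have hdot : ∀ k, k ≤ 2*n → dotCnt (decodeW n s) k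
      = cnt (fun t => specDown s t) k + cnt (fun t => specUp s t) k := by
    intro k hk
    unfold dotCnt
    rw [cnt_congr_iff k (Q := fun t => specDown s t ∨ specUp s t), cnt_or (spec_disjoint s) k]
    intro t h1 h2
    have htmem : t ∈ Finset.Icc 1 (2*n) := by simp only [Finset.mem_Icc]; omega
    unfold decodeW
    rw [if_pos htmem]
    by_cases hsp : specDown s t ∨ specUp s t
    · rw [if_pos hsp]
      simp only [hsp, iff_true]
    · rw [if_neg hsp]
      constructor
      · intro h0
        rcases hpm t htmem with h | h <;> rw [h] at h0 <;> norm_num at h0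
      · intro h; exact absurd h hsp
  have hjv : jval n (decodeW n s) = cnt (fun t => specDown s t) (2*n) := by
    unfold jval
    rw [hdot (2*n) (le_refl _), ← hDU]
    omega
  by_cases hk : k ∈ Finset.Icc 1 (2*n)
  · have hk' : 1 ≤ k ∧ k ≤ 2*n := by simpa [Finset.mem_Icc] using hk
    by_cases hsp : specDown s k ∨ specUp s k
    · have hw0 : decodeW n s k = 0 := by
        unfold decodeW; rw [if_pos hk, if_pos hsp]
      have hsof : sOf n (decodeW n s) k =
          if dotCnt (decodeW n s) k ≤ jval n (decodeW n s) then -1 else 1 := by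
        unfold sOf; rw [if_pos hk, if_pos hw0]
      rcases hsp with hs | hs
      · -- specDown: s k = -1
        have hsk : s k = -1 := by
          have h1 := hs (k-1) (by omega)
          have h2 := dep_pred s (show 1 ≤ k by omega)
          rcases hpm k hk with h | h
          · omega
          · exact h
        have hu0 : cnt (fun t => specUp s t) k = 0 := by
          apply cnt_vanish
          intro t ht1 htk hP
          exact absurd (down_lt_up hs hP ht1) (by omega)
        have hle : dotCnt (decodeW n s) k ≤ jval n (decodeW n s) := by
          rw [hdot k (by omega), hu0, hjv]
          have := cnt_mono (fun t => specDown s t) (show k ≤ 2*n by omega)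
          omega
        rw [hsof, if_pos hle, hsk]
      · -- specUp: s k = 1
        have hsk : s k = 1 := by
          have h1 := hs k (le_refl _)
          have h2 := dep_pred s (show 1 ≤ k by omega)
          rcases hpm k hk with h | h
          · exact h
          · omega
        have hallD : cnt (fun t => specDown s t) (2*n)
            = cnt (fun t => specDown s t) k := by
          apply cnt_congr _ (by omega)
          intro u hu1 hu2 hP
          exact absurd (down_lt_up hP hs (by omega)) (by omega)
        have hone : 1 ≤ cnt (fun t => specUp s t) k := cnt_one_le (by omega) hs
        have hgt : ¬ (dotCnt (decodeW n s) k ≤ jval n (decodeW n s)) := by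
          rw [hdot k (by omega), hjv, hallD]
          omega
        rw [hsof, if_neg hgt, hsk]
    · have hwk : decodeW n s k = s k := by
        unfold decodeW; rw [if_pos hk, if_neg hsp]
      have hne : decodeW n s k ≠ 0 := by
        rw [hwk]
        rcases hpm k hk with h | h <;> rw [h] <;> norm_num
      unfold sOf
      rw [if_pos hk, if_neg hne]
      exact hwk
  · rw [sOf_out k hk, hout k hk]

end SOfDecode

section SFromS

variable {n : ℕ} {S : Finset ℕ}

lemma sFromS_out (n : ℕ) (S : Finset ℕ) :
    ∀ k, k ∉ Finset.Icc 1 (2*n) → sFromS n S k = 0 := by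
  intro k hk; unfold sFromS; rw [if_neg hk]

lemma sFromS_pm (n : ℕ) (S : Finset ℕ) :
    ∀ k ∈ Finset.Icc 1 (2*n), sFromS n S k = 1 ∨ sFromS n S k = -1 := by
  intro k hk
  unfold sFromS
  rw [if_pos hk]
  by_cases h : k ∈ S
  · rw [if_pos h]; exact Or.inl rfl
  · rw [if_neg h]; exact Or.inr rfl

lemma sFromS_dep : ∀ k, k ≤ 2*n →
    dep (sFromS n S) k = 2 * (cnt (fun t => t ∈ S) k : ℤ) - k := by
  intro k
  induction k with
  | zero => intro _; rw [dep_zero, cnt_zero]; norm_num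
  | succ m ih =>
    intro hm
    have hmem : m+1 ∈ Finset.Icc 1 (2*n) := by simp only [Finset.mem_Icc]; omega
    rw [dep_succ, ih (by omega), cnt_succ]
    unfold sFromS
    rw [if_pos hmem]
    by_cases h : m+1 ∈ S
    · rw [if_pos h, if_pos h]; push_cast; ring
    · rw [if_neg h, if_neg h]; push_cast; ring

lemma cnt_card_eq (P : ℕ → Prop) (k : ℕ) (T : Finset ℕ)
    (h : ∀ t, (t ∈ Finset.Icc 1 k ∧ P t) ↔ t ∈ T) : cnt P k = T.card := by
  unfold cnt
  apply Finset.card_bij (fun a _ => a)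
  · intro a ha
    rw [← h a]
    simpa only [Finset.mem_filter] using ha
  · intro a _ b _ hab
    exact hab
  · intro b hb
    refine ⟨b, ?_, rfl⟩
    simp only [Finset.mem_filter]
    exact (h b).mpr hb

lemma sFromS_total (hsub : S ⊆ Finset.Icc 1 (2*n)) (hcard : S.card = n) :
    dep (sFromS n S) (2*n) = 0 := by
  rw [sFromS_dep (2*n) (le_refl _)]
  have : cnt (fun t => t ∈ S) (2*n) = n := by
    rw [cnt_card_eq (fun t => t ∈ S) (2*n) S
      (fun t => ⟨fun h => h.2, fun h => ⟨hsub h, h⟩⟩), hcard]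
  rw [this]
  push_cast
  ring

end SFromS

section SFromSEncode

variable {n : ℕ} {w : ℕ → ℤ}

lemma sOf_pm (hw : Valid n w) {k : ℕ} (hk : k ∈ Finset.Icc 1 (2*n)) :
    sOf n w k = 1 ∨ sOf n w k = -1 := by
  unfold sOf
  rw [if_pos hk]
  by_cases h0 : w k = 0
  · rw [if_pos h0]
    by_cases h1 : dotCnt w k ≤ jval n w
    · rw [if_pos h1]; exact Or.inr rfl
    · rw [if_neg h1]; exact Or.inl rfl
  · rw [if_neg h0]
    rcases hw.mem k hk with h | h | h
    · exact Or.inl h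
    · exact Or.inr h
    · exact absurd h h0

lemma sFromS_encode (hw : Valid n w) : sFromS n (encode n w) = sOf n w := by
  funext k
  unfold sFromS
  by_cases hk : k ∈ Finset.Icc 1 (2*n)
  · rw [if_pos hk]
    have hmem : k ∈ encode n w ↔ sOf n w k = 1 := by
      unfold encode
      simp only [Finset.mem_filter]
      exact ⟨fun h => h.2, fun h => ⟨hk, h⟩⟩
    rcases sOf_pm hw hk with h | h
    · rw [if_pos (hmem.mpr h), h]
    · rw [if_neg (fun hc => by rw [hmem.mp hc] at h; norm_num at h), h]
  · rw [if_neg hk, sOf_out k hk]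

end SFromSEncode

end

end TLaux

/-- The number of symmetric Temperley–Lieb diagrams on `4n` vertices is `C(2n, n)`. -/
theorem tln_card (n : ℕ) (hn : 1 ≤ n) :
    {D : Finset (ℕ × ℕ) | IsTL n D}.ncard = Nat.choose (2 * n) n := by
  have hinj : Set.InjOn (fun D => TLaux.encode n (TLaux.wOf D)) {D | IsTL n D} := by
    intro D hD D' hD' he
    simp only [Set.mem_setOf_eq] at hD hD'
    simp only at he
    have h1 : TLaux.sOf n (TLaux.wOf D) = TLaux.sOf n (TLaux.wOf D') := by
      rw [← TLaux.sFromS_encode (TLaux.valid_wOf hD),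
        ← TLaux.sFromS_encode (TLaux.valid_wOf hD'), he]
    have h2 : TLaux.wOf D = TLaux.wOf D' := by
      rw [← TLaux.decode_sOf (TLaux.valid_wOf hD),
        ← TLaux.decode_sOf (TLaux.valid_wOf hD'), h1]
    calc D = TLaux.mF n (TLaux.wOf D) := (TLaux.mF_wOf hD).symm
    _ = TLaux.mF n (TLaux.wOf D') := by rw [h2]
    _ = D' := TLaux.mF_wOf hD'
  have himg : (fun D => TLaux.encode n (TLaux.wOf D)) '' {D | IsTL n D}
      = ↑((Finset.Icc 1 (2*n)).powersetCard n) := by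
    ext S
    simp only [Set.mem_image, Set.mem_setOf_eq, Finset.mem_coe,
      Finset.mem_powersetCard]
    constructor
    · rintro ⟨D, hD, rfl⟩
      exact ⟨Finset.filter_subset _ _, TLaux.encode_card (TLaux.valid_wOf hD)⟩
    · rintro ⟨hsub, hcard⟩
      have hout := TLaux.sFromS_out n S
      have hpm := TLaux.sFromS_pm n S
      have htot := TLaux.sFromS_total hsub hcard
      have hw : TLaux.Valid n (TLaux.decodeW n (TLaux.sFromS n S)) :=
        TLaux.valid_decode hout hpm htot
      refine ⟨TLaux.mF n (TLaux.decodeW n (TLaux.sFromS n S)), TLaux.isTL_mF hw, ?_⟩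
      have h1 := TLaux.wOf_mF hw
      simp only [h1]
      have h2 : TLaux.sOf n (TLaux.decodeW n (TLaux.sFromS n S)) = TLaux.sFromS n S :=
        funext (TLaux.sOf_decode hout hpm htot)
      unfold TLaux.encode
      rw [h2]
      ext k
      simp only [Finset.mem_filter]
      constructor
      · rintro ⟨hk, hs⟩
        unfold TLaux.sFromS at hs
        rw [if_pos hk] at hs
        by_cases h : k ∈ S
        · exact h
        · rw [if_neg h] at hs; norm_num at hs
      · intro h
        refine ⟨hsub h, ?_⟩
        unfold TLaux.sFromS
        rw [if_pos (hsub h), if_pos h]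
  calc {D | IsTL n D}.ncard
      = ((fun D => TLaux.encode n (TLaux.wOf D)) '' {D | IsTL n D}).ncard :=
        (Set.ncard_image_of_injOn hinj).symm
    _ = (↑((Finset.Icc 1 (2*n)).powersetCard n) : Set (Finset ℕ)).ncard := by rw [himg]
    _ = ((Finset.Icc 1 (2*n)).powersetCard n).card := Set.ncard_coe_finset _
    _ = Nat.choose (2 * n) n := by
        rw [Finset.card_powersetCard, Nat.card_Icc, Nat.add_sub_cancel]
end

section
/- For every integer n ≥ 1, the number of even symmetric Temperley–Lieb diagrams on 4n vertices is |T_n^e| = (1/2)·C(2n, n) = C(2n−1, n). -/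
open scoped Classical

open Finset


noncomputable def ht (R : Finset ℕ) (k : ℕ) : ℤ :=
  (k : ℤ) - 2 * ((R.filter (fun x => x ≤ k)).card : ℤ)

lemma ht_zero (R : Finset ℕ) (h1 : ∀ x ∈ R, 1 ≤ x) : ht R 0 = 0 := by
  have : R.filter (fun x => x ≤ 0) = ∅ := by
    ext x; simp only [mem_filter, notMem_empty, iff_false, Nat.le_zero]
    rintro ⟨hx, hx0⟩; have := h1 x hx; omega
  simp only [ht]
  rw [this]
  simp

lemma ht_succ (R : Finset ℕ) (k : ℕ) :
    ht R (k+1) = ht R k + (if k+1 ∈ R then -1 else 1) := by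
  have hsplit : R.filter (fun x => x ≤ k+1) =
      (R.filter (fun x => x ≤ k)) ∪ (R.filter (fun x => x = k+1)) := by
    ext x; simp only [mem_filter, mem_union]
    by_cases hx : x ∈ R <;> simp [hx] <;> omega
  have hdisj : Disjoint (R.filter (fun x => x ≤ k)) (R.filter (fun x => x = k+1)) := by
    rw [Finset.disjoint_left]; intro x hx hx'
    simp only [mem_filter] at hx hx'; omega
  have hcard : (R.filter (fun x => x ≤ k+1)).card =
      (R.filter (fun x => x ≤ k)).card + (R.filter (fun x => x = k+1)).card := by
    rw [hsplit, Finset.card_union_of_disjoint hdisj]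
  by_cases hk : k+1 ∈ R
  · have : R.filter (fun x => x = k+1) = {k+1} := by
      ext x; simp only [mem_filter, mem_singleton]
      exact ⟨fun h => h.2, fun h => ⟨h ▸ hk, h⟩⟩
    simp only [ht, hcard, this, card_singleton, hk, if_true]
    push_cast; ring
  · have : R.filter (fun x => x = k+1) = ∅ := by
      ext x; simp only [mem_filter, notMem_empty, iff_false]
      rintro ⟨hx, rfl⟩; exact hk hx
    simp only [ht, hcard, this, card_empty, hk, if_false]
    push_cast; ring

lemma ht_succ_mem (R : Finset ℕ) (k : ℕ) (h : k+1 ∈ R) : ht R (k+1) = ht R k - 1 := by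
  rw [ht_succ]; simp [h]; ring

lemma ht_succ_notMem (R : Finset ℕ) (k : ℕ) (h : k+1 ∉ R) : ht R (k+1) = ht R k + 1 := by
  rw [ht_succ]; simp [h]

lemma mem_of_ht_lt (R : Finset ℕ) (k : ℕ) (h : ht R (k+1) < ht R k) : k+1 ∈ R := by
  by_contra hc; rw [ht_succ_notMem R k hc] at h; omega

lemma notMem_of_ht_gt (R : Finset ℕ) (k : ℕ) (h : ht R k < ht R (k+1)) : k+1 ∉ R := by
  intro hc; rw [ht_succ_mem R k hc] at h; omega

/-- discrete IVT, increasing direction -/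
lemma ivt_up (R : Finset ℕ) (a : ℕ) (v : ℤ) :
    ∀ b, a ≤ b → ht R a ≤ v → v ≤ ht R b → ∃ t, a ≤ t ∧ t ≤ b ∧ ht R t = v := by
  intro b
  induction b with
  | zero =>
    intro hab h1 h2
    have ha : a = 0 := by omega
    subst ha
    exact ⟨0, le_refl 0, le_refl 0, by omega⟩
  | succ b ih =>
    intro hab h1 h2
    rcases Nat.lt_or_ge a (b+1) with hlt | hge
    · have hab' : a ≤ b := by omega
      rcases le_or_gt v (ht R b) with hv | hv
      · obtain ⟨t, ht1, ht2, ht3⟩ := ih hab' h1 hv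
        exact ⟨t, ht1, by omega, ht3⟩
      · have hstep := ht_succ R b
        have : ht R (b+1) = v := by
          by_cases hm : b+1 ∈ R
          · rw [ht_succ_mem R b hm] at h2 ⊢; omega
          · rw [ht_succ_notMem R b hm] at h2 ⊢; omega
        exact ⟨b+1, by omega, le_refl _, this⟩
    · have ha : a = b+1 := by omega
      subst ha
      exact ⟨b+1, le_refl _, le_refl _, by omega⟩

/-- discrete IVT, decreasing direction -/
lemma ivt_down (R : Finset ℕ) (a : ℕ) (v : ℤ) :
    ∀ b, a ≤ b → ht R b ≤ v → v ≤ ht R a → ∃ t, a ≤ t ∧ t ≤ b ∧ ht R t = v := by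
  intro b
  induction b with
  | zero =>
    intro hab h1 h2
    have ha : a = 0 := by omega
    subst ha
    exact ⟨0, le_refl 0, le_refl 0, by omega⟩
  | succ b ih =>
    intro hab h1 h2
    rcases Nat.lt_or_ge a (b+1) with hlt | hge
    · have hab' : a ≤ b := by omega
      rcases le_or_gt (ht R b) v with hv | hv
      · obtain ⟨t, ht1, ht2, ht3⟩ := ih hab' hv h2
        exact ⟨t, ht1, by omega, ht3⟩
      · have : ht R (b+1) = v := by
          by_cases hm : b+1 ∈ R
          · rw [ht_succ_mem R b hm] at h1 ⊢; omega
          · rw [ht_succ_notMem R b hm] at h1 ⊢; omega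
        exact ⟨b+1, by omega, le_refl _, this⟩
    · have ha : a = b+1 := by omega
      subst ha
      exact ⟨b+1, le_refl _, le_refl _, by omega⟩

/-- the partner of a right endpoint `j`: one plus the last time before `j`
that the height equals `ht R j`. -/
noncomputable def ptn (R : Finset ℕ) (j : ℕ) : ℕ :=
  Nat.findGreatest (fun t => ht R t = ht R j) (j - 1) + 1

section PtnFacts

variable {R : Finset ℕ} (hv : ∀ k, 0 ≤ ht R k) (h1 : ∀ x ∈ R, 1 ≤ x)

include hv h1

lemma two_le_of_mem {j : ℕ} (hj : j ∈ R) : 2 ≤ j := by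
  have hj1 : 1 ≤ j := h1 j hj
  rcases Nat.lt_or_ge j 2 with h | h
  · have : j = 1 := by omega
    subst this
    have ha := ht_succ_mem R 0 hj
    norm_num at ha
    have h0 := ht_zero R h1
    have hb := hv 1
    omega
  · exact h

lemma ht_pred_mem {j : ℕ} (hj : j ∈ R) : ht R (j-1) = ht R j + 1 := by
  have hj1 : 1 ≤ j := h1 j hj
  have heq : j - 1 + 1 = j := by omega
  have h2 := ht_succ_mem R (j-1) (by rwa [heq])
  rw [heq] at h2
  omega

lemma ptn_exists_witness {j : ℕ} (hj : j ∈ R) :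
    ∃ t, t ≤ j - 1 ∧ ht R t = ht R j := by
  have h0 := ht_zero R h1
  have hup := ht_pred_mem hv h1 hj
  obtain ⟨t, _, ht2, ht3⟩ := ivt_up R 0 (ht R j) (j-1) (by omega)
    (by rw [h0]; exact hv j) (by omega)
  exact ⟨t, ht2, ht3⟩

lemma ptn_spec {j : ℕ} (hj : j ∈ R) :
    ht R (ptn R j - 1) = ht R j := by
  obtain ⟨t, htle, hteq⟩ := ptn_exists_witness hv h1 hj
  have := Nat.findGreatest_spec (P := fun t => ht R t = ht R j) htle hteq
  simpa [ptn] using this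

lemma ptn_le {j : ℕ} (hj : j ∈ R) : ptn R j ≤ j - 1 := by
  have hj2 := two_le_of_mem hv h1 hj
  have hle : Nat.findGreatest (fun t => ht R t = ht R j) (j - 1) ≤ j - 1 :=
    Nat.findGreatest_le _
  have hne : Nat.findGreatest (fun t => ht R t = ht R j) (j - 1) ≠ j - 1 := by
    intro h
    have := ptn_spec hv h1 hj
    rw [ptn] at this
    simp only [Nat.add_sub_cancel] at this
    rw [h] at this
    have := ht_pred_mem hv h1 hj
    omega
  rw [ptn]; omega

lemma ptn_lt {j : ℕ} (hj : j ∈ R) : ptn R j < j := by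
  have := ptn_le hv h1 hj
  have := two_le_of_mem hv h1 hj
  omega

/-- strictly above the level of `j` between the partner and `j` -/
lemma ht_gt_between {j : ℕ} (hj : j ∈ R) {t : ℕ}
    (hgt : ptn R j - 1 < t) (hlt : t ≤ j - 1) : ht R j < ht R t := by
  have hj2 := two_le_of_mem hv h1 hj
  rcases le_or_gt (ht R t) (ht R j) with hle | hgt'
  · exfalso
    have hpred := ht_pred_mem hv h1 hj
    obtain ⟨t', h1', h2', h3'⟩ := ivt_up R t (ht R j) (j-1) hlt hle (by omega)
    have hne : t' ≠ j - 1 := by intro h; rw [h] at h3'; omega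
    have hfg : Nat.findGreatest (fun t => ht R t = ht R j) (j - 1) < t' := by
      rw [ptn] at hgt; omega
    have : ¬ (ht R t' = ht R j) :=
      Nat.findGreatest_is_greatest (P := fun t => ht R t = ht R j) hfg (by omega)
    exact this h3'
  · exact hgt'

lemma ptn_notMem {j : ℕ} (hj : j ∈ R) : ptn R j ∉ R := by
  have hj2 := two_le_of_mem hv h1 hj
  have hlt := ptn_le hv h1 hj
  have hspec := ptn_spec hv h1 hj
  have h1le : 1 ≤ ptn R j := by rw [ptn]; omega
  have hgt : ht R j < ht R (ptn R j) := by
    apply ht_gt_between hv h1 hj (t := ptn R j) (by omega) hlt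
  intro hmem
  have : ptn R j - 1 + 1 = ptn R j := by omega
  have hd := ht_succ_mem R (ptn R j - 1) (by rwa [this])
  rw [this] at hd
  omega

lemma ptn_pos (j : ℕ) : 1 ≤ ptn R j := by rw [ptn]; omega

/-- characterisation of the partner -/
lemma ptn_eq {i j : ℕ} (hj : j ∈ R) (hi1 : 1 ≤ i) (hij : i ≤ j - 1)
    (heq : ht R (i-1) = ht R j)
    (hne : ∀ t, i - 1 < t → t ≤ j - 1 → ht R t ≠ ht R j) :
    ptn R j = i := by
  have hge : i - 1 ≤ Nat.findGreatest (fun t => ht R t = ht R j) (j - 1) :=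
    Nat.le_findGreatest (by omega) heq
  have hle2 : Nat.findGreatest (fun t => ht R t = ht R j) (j - 1) ≤ i - 1 := by
    by_contra hc
    push_neg at hc
    have hle : Nat.findGreatest (fun t => ht R t = ht R j) (j - 1) ≤ j - 1 :=
      Nat.findGreatest_le _
    have hspec := ptn_spec hv h1 hj
    rw [ptn] at hspec
    simp only [Nat.add_sub_cancel] at hspec
    exact hne _ hc hle hspec
  rw [ptn]; omega

end PtnFacts

noncomputable def toTL (R : Finset ℕ) : Finset (ℕ × ℕ) := R.image (fun j => (ptn R j, j))

lemma mem_toTL {R : Finset ℕ} {p : ℕ × ℕ} :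
    p ∈ toTL R ↔ ∃ j ∈ R, p = (ptn R j, j) := by
  simp only [toTL, Finset.mem_image]
  constructor
  · rintro ⟨j, hj, rfl⟩; exact ⟨j, hj, rfl⟩
  · rintro ⟨j, hj, rfl⟩; exact ⟨j, hj, rfl⟩

lemma toTL_image_snd (R : Finset ℕ) : (toTL R).image Prod.snd = R := by
  rw [toTL, Finset.image_image]
  exact Finset.image_id

lemma toTL_card (R : Finset ℕ) : (toTL R).card = R.card :=
  Finset.card_image_of_injective _ (fun a b h => congrArg Prod.snd h)

section Forward

variable {R : Finset ℕ} (hv : ∀ k, 0 ≤ ht R k) (h1 : ∀ x ∈ R, 1 ≤ x)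

include hv h1

lemma ptn_ne {j j' : ℕ} (hj : j ∈ R) (hj' : j' ∈ R) (hlt : j < j') :
    ptn R j ≠ ptn R j' := by
  intro heq
  have e1 := ptn_spec hv h1 hj
  have e2 := ptn_spec hv h1 hj'
  rw [heq] at e1
  have hle := ptn_le hv h1 hj
  have hpos := ptn_pos hv h1 j
  have h2j := two_le_of_mem hv h1 hj
  have hgt := ht_gt_between hv h1 hj' (t := j) (by rw [← heq]; omega) (by omega)
  omega

theorem isTL_toTL {n : ℕ} (hsub : R ⊆ Finset.Icc 1 (2*n)) : IsTL n (toTL R) := by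
  refine ⟨?_, ?_, ?_, ?_⟩
  · rintro p hp
    obtain ⟨j, hj, rfl⟩ := mem_toTL.mp hp
    exact ⟨ptn_pos hv h1 j, ptn_lt hv h1 hj, (Finset.mem_Icc.mp (hsub hj)).2⟩
  · rintro p hp q hq hpq
    obtain ⟨j, hj, rfl⟩ := mem_toTL.mp hp
    obtain ⟨j', hj', rfl⟩ := mem_toTL.mp hq
    have hjj : j ≠ j' := by rintro rfl; exact hpq rfl
    refine ⟨?_, ?_, ?_, hjj⟩
    · rcases Nat.lt_or_ge j j' with h | h
      · exact ptn_ne hv h1 hj hj' h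
      · exact (ptn_ne hv h1 hj' hj (by omega)).symm
    · intro h
      simp only at h
      exact ptn_notMem hv h1 hj (by rw [h]; exact hj')
    · intro h
      simp only at h
      exact ptn_notMem hv h1 hj' (by rw [← h]; exact hj)
  · rintro p hp q hq ⟨hc1, hc2, hc3⟩
    obtain ⟨j, hj, rfl⟩ := mem_toTL.mp hp
    obtain ⟨j', hj', rfl⟩ := mem_toTL.mp hq
    simp only at hc1 hc2 hc3
    have hpos := ptn_pos hv h1 j
    have hpos' := ptn_pos hv h1 j'
    have e' := ptn_spec hv h1 hj'
    have hA : ht R j < ht R (ptn R j' - 1) :=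
      ht_gt_between hv h1 hj (t := ptn R j' - 1) (by omega) (by omega)
    have hB : ht R j' < ht R j :=
      ht_gt_between hv h1 hj' (t := j) (by omega) (by omega)
    omega
  · rintro p hp k hk1 hk2
    obtain ⟨j, hj, rfl⟩ := mem_toTL.mp hp
    simp only at hk1 hk2
    by_cases hkR : k ∈ R
    · exact ⟨(ptn R k, k), mem_toTL.mpr ⟨k, hkR, rfl⟩, Or.inr rfl⟩
    · have hpos := ptn_pos hv h1 j
      have hk1' : 1 ≤ k := by omega
      have hkeq : k - 1 + 1 = k := by omega
      have hkstep : ht R k = ht R (k-1) + 1 := by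
        have := ht_succ_notMem R (k-1) (by rwa [hkeq])
        rwa [hkeq] at this
      have hbet : ht R j < ht R (k-1) :=
        ht_gt_between hv h1 hj (t := k-1) (by omega) (by omega)
      have hex : ∃ s, k+1 ≤ s ∧ s ≤ j ∧ ht R s = ht R (k-1) := by
        obtain ⟨t, ht1, ht2, ht3⟩ :=
          ivt_down R k (ht R (k-1)) j (by omega) (by omega) (by omega)
        have htne : t ≠ k := by intro h; rw [h] at ht3; omega
        exact ⟨t, by omega, ht2, ht3⟩
      obtain ⟨hs1, hs2, hs3⟩ := Nat.find_spec hex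
      set s := Nat.find hex with hs_def
      have habove : ∀ t, k ≤ t → t < s → ht R (k-1) < ht R t := by
        intro t htk hts
        rcases lt_or_ge (ht R (k-1)) (ht R t) with h | hle
        · exact h
        exfalso
        obtain ⟨t'', h1'', h2'', h3''⟩ := ivt_down R k (ht R (k-1)) t htk hle (by omega)
        have hne : t'' ≠ k := by intro h; rw [h] at h3''; omega
        have hmin := Nat.find_min hex (show t'' < s by omega)
        exact hmin ⟨by omega, by omega, h3''⟩
      have hsm1 : ht R (k-1) < ht R (s-1) := habove (s-1) (by omega) (by omega)
      have hseq : s - 1 + 1 = s := by omega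
      have hsR : s ∈ R := by
        have := mem_of_ht_lt R (s-1) (by rw [hseq]; omega)
        rwa [hseq] at this
      have hptn : ptn R s = k := by
        apply ptn_eq hv h1 hsR hk1' (by omega)
        · omega
        · intro t htgt htle
          have := habove t (by omega) (by omega)
          omega
      exact ⟨(ptn R s, s), mem_toTL.mpr ⟨s, hsR, rfl⟩, Or.inl (by rw [hptn])⟩

end Forward

section Backward

variable {n : ℕ} {D : Finset (ℕ × ℕ)} (hD : IsTL n D)

include hD

lemma fst_ne_snd : ∀ p ∈ D, ∀ q ∈ D, p.1 ≠ q.2 := by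
  intro p hp q hq h
  by_cases hpq : p = q
  · subst hpq
    have := (hD.1 p hp).2.1
    omega
  · exact (hD.2.1 p hp q hq hpq).2.1 h

lemma snd_injOn : ∀ p ∈ D, ∀ q ∈ D, p.2 = q.2 → p = q := by
  intro p hp q hq h
  by_contra hne
  exact (hD.2.1 p hp q hq hne).2.2.2 h

lemma fst_injOn : ∀ p ∈ D, ∀ q ∈ D, p.1 = q.1 → p = q := by
  intro p hp q hq h
  by_contra hne
  exact (hD.2.1 p hp q hq hne).1 h

lemma card_filter_snd (k : ℕ) :
    ((D.image Prod.snd).filter (fun x => x ≤ k)).card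
      = (D.filter (fun p => p.2 ≤ k)).card := by
  have himg : (D.image Prod.snd).filter (fun x => x ≤ k)
      = (D.filter (fun p => p.2 ≤ k)).image Prod.snd := by
    ext x
    simp only [Finset.mem_filter, Finset.mem_image]
    constructor
    · rintro ⟨⟨p, hp, rfl⟩, hPx⟩; exact ⟨p, ⟨hp, hPx⟩, rfl⟩
    · rintro ⟨p, ⟨hp, hPx⟩, rfl⟩; exact ⟨⟨p, hp, rfl⟩, hPx⟩
  rw [himg, Finset.card_image_of_injOn]
  intro p hp q hq h
  simp only [Finset.coe_filter, Set.mem_setOf_eq] at hp hq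
  exact snd_injOn hD p hp.1 q hq.1 h

lemma ht_image (k : ℕ) :
    ht (D.image Prod.snd) k = (k:ℤ) - 2 * ((D.filter (fun p => p.2 ≤ k)).card : ℤ) := by
  rw [ht, card_filter_snd hD k]

lemma one_le_snd : ∀ x ∈ D.image Prod.snd, 1 ≤ x := by
  intro x hx
  obtain ⟨p, hp, rfl⟩ := Finset.mem_image.mp hx
  have := hD.1 p hp
  omega

lemma two_mul_card_le (F : Finset (ℕ × ℕ)) (hF : F ⊆ D) (k : ℕ)
    (hk : ∀ p ∈ F, p.2 ≤ k) : 2 * F.card ≤ k := by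
  have hsub : (F.image Prod.fst) ∪ (F.image Prod.snd) ⊆ Finset.Icc 1 k := by
    intro x hx
    rcases Finset.mem_union.mp hx with hx | hx <;>
      obtain ⟨p, hp, rfl⟩ := Finset.mem_image.mp hx
    · have hb := hD.1 p (hF hp)
      have := hk p hp
      exact Finset.mem_Icc.mpr ⟨hb.1, by omega⟩
    · have hb := hD.1 p (hF hp)
      have := hk p hp
      exact Finset.mem_Icc.mpr ⟨by omega, by omega⟩
  have hdisj : Disjoint (F.image Prod.fst) (F.image Prod.snd) := by
    rw [Finset.disjoint_left]
    rintro x hx hx'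
    obtain ⟨p, hp, rfl⟩ := Finset.mem_image.mp hx
    obtain ⟨q, hq, h⟩ := Finset.mem_image.mp hx'
    exact fst_ne_snd hD p (hF hp) q (hF hq) h.symm
  have hc1 : (F.image Prod.fst).card = F.card := by
    apply Finset.card_image_of_injOn
    intro p hp q hq h
    rw [Finset.mem_coe] at hp hq
    exact fst_injOn hD p (hF hp) q (hF hq) h
  have hc2 : (F.image Prod.snd).card = F.card := by
    apply Finset.card_image_of_injOn
    intro p hp q hq h
    rw [Finset.mem_coe] at hp hq
    exact snd_injOn hD p (hF hp) q (hF hq) h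
  have := Finset.card_le_card hsub
  rw [Finset.card_union_of_disjoint hdisj, hc1, hc2, Nat.card_Icc] at this
  omega

lemma valid_image : ∀ k, 0 ≤ ht (D.image Prod.snd) k := by
  intro k
  rw [ht_image hD]
  have h := two_mul_card_le hD (D.filter (fun p => p.2 ≤ k)) (Finset.filter_subset _ _) k
    (fun p hp => (Finset.mem_filter.mp hp).2)
  push_cast
  omega

lemma inside {p : ℕ × ℕ} (hp : p ∈ D) (q : ℕ × ℕ) (hq : q ∈ D) :
    q.1 ∈ Finset.Icc p.1 p.2 ↔ q.2 ∈ Finset.Icc p.1 p.2 := by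
  have hbp := hD.1 p hp
  have hbq := hD.1 q hq
  by_cases hpq : q = p
  · subst hpq
    simp only [Finset.mem_Icc]
    omega
  · have hne := hD.2.1 q hq p hp hpq
    simp only [Finset.mem_Icc]
    constructor
    · intro h
      have h11 : p.1 < q.1 := by omega
      have h12 : q.1 < p.2 := by omega
      have hnc := hD.2.2.1 p hp q hq
      constructor
      · omega
      · by_contra hcon
        exact hnc ⟨h11, h12, by omega⟩
    · intro h
      have h21 : p.1 < q.2 := by omega
      have h22 : q.2 < p.2 := by omega
      have hnc := hD.2.2.1 q hq p hp
      have : ¬ q.1 < p.1 := fun hcon => hnc ⟨hcon, h21, h22⟩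
      omega

lemma card_interval {p : ℕ × ℕ} (hp : p ∈ D) (t : ℕ) (h1t : p.1 ≤ t) (h2t : t ≤ p.2) :
    t + 1 - p.1 = (D.filter (fun q => q.1 ∈ Finset.Icc p.1 t)).card
               + (D.filter (fun q => q.2 ∈ Finset.Icc p.1 t)).card := by
  have hbp := hD.1 p hp
  set L := D.filter (fun q => q.1 ∈ Finset.Icc p.1 t) with hL
  set Rr := D.filter (fun q => q.2 ∈ Finset.Icc p.1 t) with hR
  have hcov : Finset.Icc p.1 t = (L.image Prod.fst) ∪ (Rr.image Prod.snd) := by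
    ext x
    constructor
    · intro hx
      have hx' := Finset.mem_Icc.mp hx
      rcases Nat.eq_or_lt_of_le hx'.1 with heq | hgt
      · apply Finset.mem_union_left
        exact Finset.mem_image.mpr ⟨p, Finset.mem_filter.mpr ⟨hp,
          Finset.mem_Icc.mpr ⟨le_refl _, h1t⟩⟩, heq⟩
      · rcases Nat.lt_or_ge x p.2 with hlt | hge
        · obtain ⟨q, hq, hq'⟩ := hD.2.2.2 p hp x hgt hlt
          rcases hq' with h | h
          · apply Finset.mem_union_left
            exact Finset.mem_image.mpr ⟨q, Finset.mem_filter.mpr ⟨hq,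
              Finset.mem_Icc.mpr ⟨by omega, by omega⟩⟩, h.symm⟩
          · apply Finset.mem_union_right
            exact Finset.mem_image.mpr ⟨q, Finset.mem_filter.mpr ⟨hq,
              Finset.mem_Icc.mpr ⟨by omega, by omega⟩⟩, h.symm⟩
        · have hxp2 : x = p.2 := by omega
          apply Finset.mem_union_right
          exact Finset.mem_image.mpr ⟨p, Finset.mem_filter.mpr ⟨hp,
            Finset.mem_Icc.mpr ⟨by omega, by omega⟩⟩, hxp2.symm⟩
    · intro hx
      rcases Finset.mem_union.mp hx with hx | hx <;>
        obtain ⟨q, hq, rfl⟩ := Finset.mem_image.mp hx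
      · exact (Finset.mem_filter.mp hq).2
      · exact (Finset.mem_filter.mp hq).2
  have hdisj : Disjoint (L.image Prod.fst) (Rr.image Prod.snd) := by
    rw [Finset.disjoint_left]
    rintro x hx hx'
    obtain ⟨a, ha, rfl⟩ := Finset.mem_image.mp hx
    obtain ⟨b, hb, h⟩ := Finset.mem_image.mp hx'
    exact fst_ne_snd hD a (Finset.filter_subset _ _ ha) b (Finset.filter_subset _ _ hb) h.symm
  have hc1 : (L.image Prod.fst).card = L.card := by
    apply Finset.card_image_of_injOn
    intro a ha b hb h
    rw [Finset.mem_coe] at ha hb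
    exact fst_injOn hD a (Finset.filter_subset _ _ ha) b (Finset.filter_subset _ _ hb) h
  have hc2 : (Rr.image Prod.snd).card = Rr.card := by
    apply Finset.card_image_of_injOn
    intro a ha b hb h
    rw [Finset.mem_coe] at ha hb
    exact snd_injOn hD a (Finset.filter_subset _ _ ha) b (Finset.filter_subset _ _ hb) h
  calc t + 1 - p.1 = (Finset.Icc p.1 t).card := (Nat.card_Icc p.1 t).symm
    _ = L.card + Rr.card := by
        rw [hcov, Finset.card_union_of_disjoint hdisj, hc1, hc2]

lemma balance {p : ℕ × ℕ} (hp : p ∈ D) :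
    p.2 + 1 - p.1 = 2 * (D.filter (fun q => q.2 ∈ Finset.Icc p.1 p.2)).card := by
  have hbp := hD.1 p hp
  have h := card_interval hD hp p.2 (by omega) (le_refl _)
  have hfe : D.filter (fun q => q.1 ∈ Finset.Icc p.1 p.2)
      = D.filter (fun q => q.2 ∈ Finset.Icc p.1 p.2) :=
    Finset.filter_congr (fun q hq => inside hD hp q hq)
  rw [hfe] at h
  omega

lemma filter_snd_split (a b : ℕ) (ha : 1 ≤ a) (hab : a ≤ b + 1) :
    (D.filter (fun q => q.2 ≤ b)).card
      = (D.filter (fun q => q.2 ≤ a - 1)).card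
        + (D.filter (fun q => q.2 ∈ Finset.Icc a b)).card := by
  have hsplit : D.filter (fun q => q.2 ≤ b)
      = (D.filter (fun q => q.2 ≤ a - 1)) ∪ (D.filter (fun q => q.2 ∈ Finset.Icc a b)) := by
    ext q
    by_cases hq : q ∈ D <;> simp [hq, Finset.mem_Icc] <;> omega
  have hdisj : Disjoint (D.filter (fun q => q.2 ≤ a - 1))
      (D.filter (fun q => q.2 ∈ Finset.Icc a b)) := by
    rw [Finset.disjoint_left]
    rintro q hq hq'
    simp only [Finset.mem_filter, Finset.mem_Icc] at hq hq'
    omega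
  rw [hsplit, Finset.card_union_of_disjoint hdisj]

lemma ht_eq_pred {p : ℕ × ℕ} (hp : p ∈ D) :
    ht (D.image Prod.snd) (p.1 - 1) = ht (D.image Prod.snd) p.2 := by
  have hbp := hD.1 p hp
  rw [ht_image hD, ht_image hD]
  have hsplit := filter_snd_split hD p.1 p.2 hbp.1 (by omega)
  have hbal := balance hD hp
  omega

lemma ht_ne_between {p : ℕ × ℕ} (hp : p ∈ D) (t : ℕ) (h1t : p.1 ≤ t) (h2t : t ≤ p.2 - 1) :
    ht (D.image Prod.snd) t ≠ ht (D.image Prod.snd) p.2 := by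
  have hbp := hD.1 p hp
  intro heq
  rw [← ht_eq_pred hD hp] at heq
  rw [ht_image hD, ht_image hD] at heq
  have hsplit := filter_snd_split hD p.1 t hbp.1 (by omega)
  have hint := card_interval hD hp t h1t (by omega)
  have hss : (D.filter (fun q => q.2 ∈ Finset.Icc p.1 t))
      ⊂ (D.filter (fun q => q.1 ∈ Finset.Icc p.1 t)) := by
    constructor
    · intro q hq
      rw [Finset.mem_filter] at hq ⊢
      obtain ⟨hqD, hq2⟩ := hq
      rw [Finset.mem_Icc] at hq2
      have hqbd := hD.1 q hqD
      have hqp : q ≠ p := by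
        intro h; subst h; omega
      have hq2' : q.2 ∈ Finset.Icc p.1 p.2 := Finset.mem_Icc.mpr ⟨hq2.1, by omega⟩
      have hq1' := (inside hD hp q hqD).mpr hq2'
      rw [Finset.mem_Icc] at hq1'
      have hne := hD.2.1 q hqD p hp hqp
      refine ⟨hqD, Finset.mem_Icc.mpr ⟨by omega, by omega⟩⟩
    · intro hcon
      have hpL : p ∈ D.filter (fun q => q.1 ∈ Finset.Icc p.1 t) :=
        Finset.mem_filter.mpr ⟨hp, Finset.mem_Icc.mpr ⟨le_refl _, h1t⟩⟩
      have := hcon hpL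
      rw [Finset.mem_filter, Finset.mem_Icc] at this
      omega
  have hlt := Finset.card_lt_card hss
  omega

lemma ptn_image {p : ℕ × ℕ} (hp : p ∈ D) : ptn (D.image Prod.snd) p.2 = p.1 := by
  have hbp := hD.1 p hp
  have hval := valid_image hD
  have h1R := one_le_snd hD
  have hjR : p.2 ∈ D.image Prod.snd := Finset.mem_image.mpr ⟨p, hp, rfl⟩
  apply ptn_eq hval h1R hjR hbp.1 (by omega)
  · have := ht_eq_pred hD hp
    convert this using 2
  · intro t hgt hle
    exact ht_ne_between hD hp t (by omega) (by omega)

lemma toTL_image : toTL (D.image Prod.snd) = D := by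
  ext q
  rw [mem_toTL]
  constructor
  · rintro ⟨j, hj, rfl⟩
    obtain ⟨p, hp, rfl⟩ := Finset.mem_image.mp hj
    rw [ptn_image hD hp]
    exact hp
  · intro hq
    refine ⟨q.2, Finset.mem_image.mpr ⟨q, hq, rfl⟩, ?_⟩
    rw [ptn_image hD hq]

lemma image_snd_sub : D.image Prod.snd ⊆ Finset.Icc 1 (2*n) := by
  intro x hx
  obtain ⟨p, hp, rfl⟩ := Finset.mem_image.mp hx
  have := hD.1 p hp
  exact Finset.mem_Icc.mpr ⟨by omega, this.2.2⟩

end Backward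

noncomputable def cntSet (m k : ℕ) : Finset (Finset ℕ) :=
  ((Finset.Icc 1 m).powerset).filter
    (fun R => (∀ j, 2 * (R.filter (fun x => x ≤ j)).card ≤ j) ∧ R.card = k)

noncomputable def cnt (m k : ℕ) : ℕ := (cntSet m k).card

lemma mem_cntSet {m k : ℕ} {R : Finset ℕ} : R ∈ cntSet m k ↔
    R ⊆ Finset.Icc 1 m ∧ (∀ j, 2 * (R.filter (fun x => x ≤ j)).card ≤ j) ∧ R.card = k := by
  rw [cntSet, Finset.mem_filter, Finset.mem_powerset]

lemma cnt_zero (m : ℕ) : cnt m 0 = 1 := by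
  have : cntSet m 0 = {∅} := by
    ext R
    rw [mem_cntSet, Finset.mem_singleton]
    constructor
    · rintro ⟨-, -, hc⟩; exact Finset.card_eq_zero.mp hc
    · rintro rfl
      refine ⟨Finset.empty_subset _, fun j => by simp, Finset.card_empty⟩
  rw [cnt, this, Finset.card_singleton]

lemma cnt_big {m k : ℕ} (h : m < 2*k) : cnt m k = 0 := by
  rw [cnt, Finset.card_eq_zero]
  ext R
  simp only [Finset.notMem_empty, iff_false]
  rw [mem_cntSet]
  rintro ⟨hsub, hval, hc⟩
  have hfe : R.filter (fun x => x ≤ m) = R := by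
    apply Finset.filter_true_of_mem
    intro x hx
    exact (Finset.mem_Icc.mp (hsub hx)).2
  have := hval m
  rw [hfe, hc] at this
  omega

lemma cnt_succ {m k : ℕ} (hk : 1 ≤ k) (h2 : 2*k ≤ m+1) :
    cnt (m+1) k = cnt m k + cnt m (k-1) := by
  classical
  have hsplit := Finset.card_filter_add_card_filter_not
    (s := cntSet (m+1) k) (p := fun R => m+1 ∈ R)
  have hnot : (cntSet (m+1) k).filter (fun R => ¬ (m+1 ∈ R)) = cntSet m k := by
    ext R
    rw [Finset.mem_filter, mem_cntSet, mem_cntSet]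
    constructor
    · rintro ⟨⟨hsub, hval, hc⟩, hnm⟩
      refine ⟨?_, hval, hc⟩
      intro x hx
      have := Finset.mem_Icc.mp (hsub hx)
      have : x ≠ m+1 := by rintro rfl; exact hnm hx
      exact Finset.mem_Icc.mpr ⟨(Finset.mem_Icc.mp (hsub hx)).1, by
        have := (Finset.mem_Icc.mp (hsub hx)).2; omega⟩
    · rintro ⟨hsub, hval, hc⟩
      have hnm : m+1 ∉ R := by
        intro h
        have := (Finset.mem_Icc.mp (hsub h)).2
        omega
      refine ⟨⟨?_, hval, hc⟩, hnm⟩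
      intro x hx
      have := Finset.mem_Icc.mp (hsub hx)
      exact Finset.mem_Icc.mpr ⟨this.1, by omega⟩
  have hmem : ((cntSet (m+1) k).filter (fun R => m+1 ∈ R)).card = cnt m (k-1) := by
    rw [cnt]
    refine Finset.card_bij' (fun R _ => R.erase (m+1)) (fun R _ => insert (m+1) R)
      ?_ ?_ ?_ ?_
    · intro R hR
      show R.erase (m+1) ∈ cntSet m (k-1)
      rw [Finset.mem_filter, mem_cntSet] at hR
      obtain ⟨⟨hsub, hval, hc⟩, hm⟩ := hR
      rw [mem_cntSet]
      refine ⟨?_, ?_, ?_⟩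
      · intro x hx
        rw [Finset.mem_erase] at hx
        have := Finset.mem_Icc.mp (hsub hx.2)
        exact Finset.mem_Icc.mpr ⟨this.1, by omega⟩
      · intro j
        rcases le_or_gt j m with hj | hj
        · have hfe : (R.erase (m+1)).filter (fun x => x ≤ j) = R.filter (fun x => x ≤ j) := by
            ext x
            simp only [Finset.mem_filter, Finset.mem_erase]
            constructor
            · rintro ⟨⟨-, hx⟩, hxj⟩; exact ⟨hx, hxj⟩
            · rintro ⟨hx, hxj⟩; exact ⟨⟨by omega, hx⟩, hxj⟩
          rw [hfe]; exact hval j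
        · have h1 : ((R.erase (m+1)).filter (fun x => x ≤ j)).card ≤ (R.erase (m+1)).card :=
            Finset.card_filter_le _ _
          have h2' : (R.erase (m+1)).card = k - 1 := by
            rw [Finset.card_erase_of_mem hm, hc]
          omega
      · rw [Finset.card_erase_of_mem hm, hc]
    · intro R hR
      rw [mem_cntSet] at hR
      obtain ⟨hsub, hval, hc⟩ := hR
      have hnm : m+1 ∉ R := by
        intro h
        have := (Finset.mem_Icc.mp (hsub h)).2
        omega
      show insert (m+1) R ∈ (cntSet (m+1) k).filter (fun R => m+1 ∈ R)
      rw [Finset.mem_filter, mem_cntSet]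
      refine ⟨⟨?_, ?_, ?_⟩, Finset.mem_insert_self _ _⟩
      · intro x hx
        rcases Finset.mem_insert.mp hx with rfl | hx
        · exact Finset.mem_Icc.mpr ⟨by omega, le_refl _⟩
        · have := Finset.mem_Icc.mp (hsub hx)
          exact Finset.mem_Icc.mpr ⟨this.1, by omega⟩
      · intro j
        rcases le_or_gt j m with hj | hj
        · have hfe : (insert (m+1) R).filter (fun x => x ≤ j) = R.filter (fun x => x ≤ j) := by
            ext x
            simp only [Finset.mem_filter, Finset.mem_insert]
            constructor
            · rintro ⟨rfl | hx, hxj⟩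
              · omega
              · exact ⟨hx, hxj⟩
            · rintro ⟨hx, hxj⟩; exact ⟨Or.inr hx, hxj⟩
          rw [hfe]; exact hval j
        · have h1 : ((insert (m+1) R).filter (fun x => x ≤ j)).card ≤ (insert (m+1) R).card :=
            Finset.card_filter_le _ _
          have h2' : (insert (m+1) R).card = k := by
            rw [Finset.card_insert_of_notMem hnm, hc]
            omega
          omega
      · rw [Finset.card_insert_of_notMem hnm, hc]
        omega
    · intro R hR
      rw [Finset.mem_filter] at hR
      exact Finset.insert_erase hR.2
    · intro R hR
      rw [mem_cntSet] at hR
      have hnm : m+1 ∉ R := by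
        intro h
        have := (Finset.mem_Icc.mp (hR.1 h)).2
        omega
      exact Finset.erase_insert hnm
  simp only [cnt]
  rw [← hsplit, hmem, hnot, cnt]
  omega

lemma cnt_formula : ∀ m k, 1 ≤ k → 2*k ≤ m →
    cnt m k + Nat.choose m (k-1) = Nat.choose m k := by
  intro m
  induction m with
  | zero => intro k hk h2; omega
  | succ m ih =>
    intro k hk h2
    have hrec := cnt_succ hk h2
    rcases Nat.eq_or_lt_of_le hk with hk1 | hk2
    · -- k = 1
      subst hk1
      simp only [Nat.sub_self] at hrec ⊢
      rw [hrec, cnt_zero, Nat.choose_zero_right, Nat.choose_one_right]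
      rcases le_or_gt 2 m with hm | hm
      · have := ih 1 (le_refl _) (by omega)
        rw [Nat.sub_self, Nat.choose_zero_right, Nat.choose_one_right] at this
        omega
      · have hm1 : m = 1 := by omega
        subst hm1
        have : cnt 1 1 = 0 := cnt_big (by omega)
        omega
    · -- k ≥ 2
      obtain ⟨k'', rfl⟩ : ∃ k'', k = k''+2 := ⟨k-2, by omega⟩
      have hs1 : k''+2-1 = k''+1 := by omega
      rw [hs1] at hrec ⊢
      have hp1 : Nat.choose (m+1) (k''+2) = Nat.choose m (k''+1) + Nat.choose m (k''+2) :=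
        Nat.choose_succ_succ m (k''+1)
      have hp2 : Nat.choose (m+1) (k''+1) = Nat.choose m k'' + Nat.choose m (k''+1) :=
        Nat.choose_succ_succ m k''
      rcases le_or_gt (2*(k''+2)) m with hcase | hcase
      · have ih1 := ih (k''+2) (by omega) hcase
        have ih2 := ih (k''+1) (by omega) (by omega)
        rw [hs1] at ih1
        have hs2 : k''+1-1 = k'' := by omega
        rw [hs2] at ih2
        omega
      · -- 2*(k''+2) = m+1
        have hm : m = 2*k''+3 := by omega
        have hz : cnt m (k''+2) = 0 := cnt_big (by omega)
        have ih2 := ih (k''+1) (by omega) (by omega)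
        have hs2 : k''+1-1 = k'' := by omega
        rw [hs2] at ih2
        have hsymm : Nat.choose m (k''+1) = Nat.choose m (k''+2) := by
          have h1 : m - (k''+1) = k''+2 := by omega
          have := Nat.choose_symm (n := m) (k := k''+1) (by omega)
          rw [h1] at this
          omega
        omega

noncomputable def esum (N M : ℕ) : ℕ :=
  ∑ k ∈ Finset.range (M+1), if Even k then cnt N k else 0

lemma esum_even (n : ℕ) : ∀ j, 2*j ≤ n → esum (2*n) (2*j) = Nat.choose (2*n-1) (2*j) := by
  intro j
  induction j with
  | zero =>
    intro _
    rw [esum]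
    simp [cnt_zero]
  | succ j ih =>
    intro hj
    have hstep : esum (2*n) (2*(j+1)) = esum (2*n) (2*j) + cnt (2*n) (2*j+2) := by
      have h1 : 2*(j+1) = (2*j+1)+1 := by ring
      rw [esum, h1, Finset.sum_range_succ, Finset.sum_range_succ]
      have ho : ¬ Even (2*j+1) := by simp [Nat.even_add_one, parity_simps]
      have he : Even (2*j+1+1) := by
        have : 2*j+1+1 = 2*(j+1) := by ring
        rw [this]; exact even_two_mul _
      rw [if_neg ho, if_pos he]
      have : 2*j+1+1 = 2*j+2 := by ring
      rw [this, esum]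
      omega
    have hcf := cnt_formula (2*n) (2*j+2) (by omega) (by omega)
    have hs : 2*j+2-1 = 2*j+1 := by omega
    rw [hs] at hcf
    have h2n : 2*n = (2*n-1)+1 := by omega
    have hp1 : Nat.choose (2*n) (2*j+2) = Nat.choose (2*n-1) (2*j+1) + Nat.choose (2*n-1) (2*j+2) := by
      rw [h2n]; exact Nat.choose_succ_succ (2*n-1) (2*j+1)
    have hp2 : Nat.choose (2*n) (2*j+1) = Nat.choose (2*n-1) (2*j) + Nat.choose (2*n-1) (2*j+1) := by
      rw [h2n]; exact Nat.choose_succ_succ (2*n-1) (2*j)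
    have := ih (by omega)
    have hgoal : 2*(j+1) = 2*j+2 := by ring
    rw [hgoal] at hstep ⊢
    omega

noncomputable def validEven (n : ℕ) : Finset (Finset ℕ) :=
  ((Finset.Icc 1 (2*n)).powerset).filter
    (fun R => (∀ j, 2 * (R.filter (fun x => x ≤ j)).card ≤ j) ∧ Even R.card)

lemma mem_validEven {n : ℕ} {R : Finset ℕ} : R ∈ validEven n ↔
    R ⊆ Finset.Icc 1 (2*n) ∧ (∀ j, 2 * (R.filter (fun x => x ≤ j)).card ≤ j) ∧ Even R.card := by
  rw [validEven, Finset.mem_filter, Finset.mem_powerset]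

lemma validEven_card (n : ℕ) (hn : 1 ≤ n) : (validEven n).card = Nat.choose (2*n-1) n := by
  have hmap : ∀ R ∈ validEven n, R.card ∈ Finset.range (n+1) := by
    intro R hR
    rw [mem_validEven] at hR
    obtain ⟨hsub, hval, -⟩ := hR
    have hfe : R.filter (fun x => x ≤ 2*n) = R :=
      Finset.filter_true_of_mem (fun x hx => (Finset.mem_Icc.mp (hsub hx)).2)
    have := hval (2*n)
    rw [hfe] at this
    rw [Finset.mem_range]
    omega
  rw [Finset.card_eq_sum_card_fiberwise hmap]
  have hfib : ∀ k ∈ Finset.range (n+1),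
      ((validEven n).filter (fun R => R.card = k)).card
        = if Even k then cnt (2*n) k else 0 := by
    intro k _
    by_cases he : Even k
    · rw [if_pos he, cnt]
      congr 1
      ext R
      rw [Finset.mem_filter, mem_validEven, mem_cntSet]
      constructor
      · rintro ⟨⟨hh1, hh2, _⟩, hh4⟩; exact ⟨hh1, hh2, hh4⟩
      · rintro ⟨hh1, hh2, hh3⟩; exact ⟨⟨hh1, hh2, hh3 ▸ he⟩, hh3⟩
    · rw [if_neg he, Finset.card_eq_zero]
      ext R
      simp only [Finset.notMem_empty, iff_false, Finset.mem_filter]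
      rintro ⟨hR, hc⟩
      rw [mem_validEven] at hR
      exact he (hc ▸ hR.2.2)
  rw [Finset.sum_congr rfl hfib]
  have hesum : ∑ k ∈ Finset.range (n+1), (if Even k then cnt (2*n) k else 0) = esum (2*n) n := rfl
  rw [hesum]
  rcases Nat.even_or_odd n with he | ho
  · obtain ⟨j, hj⟩ := he
    have hnj : n = 2*j := by omega
    subst hnj
    exact esum_even (2*j) j (le_refl _)
  · obtain ⟨j, hj⟩ := ho
    have hstep : esum (2*n) n = esum (2*n) (n-1) := by
      have h1 : n + 1 = (n-1+1) + 1 := by omega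
      rw [esum, h1, Finset.sum_range_succ]
      have h2 : n - 1 + 1 = n := by omega
      have hne : ¬ Even n := by
        rw [Nat.even_iff]; omega
      rw [h2, if_neg hne, esum, h2]
      omega
    have h3 : n - 1 = 2*j := by omega
    have he2 := esum_even n j (by omega)
    have hsymm : Nat.choose (2*n-1) (2*j) = Nat.choose (2*n-1) n := by
      have hd : (2*n-1) - n = 2*j := by omega
      have := Nat.choose_symm (n := 2*n-1) (k := n) (by omega)
      rw [hd] at this
      exact this
    rw [hstep, h3, he2, hsymm]

/-- The number of even symmetric Temperley–Lieb diagrams on `4n` vertices is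
`(1/2)·C(2n,n) = C(2n−1,n)`. -/
theorem tlne_card (n : ℕ) (hn : 1 ≤ n) :
    2 * {D : Finset (ℕ × ℕ) | IsTL n D ∧ Even D.card}.ncard = Nat.choose (2 * n) n ∧
    {D : Finset (ℕ × ℕ) | IsTL n D ∧ Even D.card}.ncard = Nat.choose (2 * n - 1) n := by
  have hval_iff : ∀ R : Finset ℕ,
      (∀ k, 0 ≤ ht R k) ↔ (∀ k, 2 * (R.filter (fun x => x ≤ k)).card ≤ k) := by
    intro R
    constructor
    · intro h k
      have := h k
      rw [ht] at this
      omega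
    · intro h k
      have := h k
      rw [ht]
      omega
  have hset : {D : Finset (ℕ × ℕ) | IsTL n D ∧ Even D.card}
      = ↑((validEven n).image toTL) := by
    ext D
    simp only [Set.mem_setOf_eq, Finset.coe_image, Set.mem_image, Finset.mem_coe]
    constructor
    · rintro ⟨hTL, hev⟩
      refine ⟨D.image Prod.snd, ?_, toTL_image hTL⟩
      rw [mem_validEven]
      refine ⟨image_snd_sub hTL, (hval_iff _).mp (valid_image hTL), ?_⟩
      have hci : (D.image Prod.snd).card = D.card := by
        apply Finset.card_image_of_injOn
        intro p hp q hq h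
        rw [Finset.mem_coe] at hp hq
        exact snd_injOn hTL p hp q hq h
      rw [hci]
      exact hev
    · rintro ⟨R, hR, rfl⟩
      rw [mem_validEven] at hR
      obtain ⟨hsub, hval, hev⟩ := hR
      have hv : ∀ k, 0 ≤ ht R k := (hval_iff R).mpr hval
      have h1 : ∀ x ∈ R, 1 ≤ x := fun x hx => (Finset.mem_Icc.mp (hsub hx)).1
      refine ⟨isTL_toTL hv h1 hsub, ?_⟩
      rw [toTL_card]
      exact hev
  have hcard : {D : Finset (ℕ × ℕ) | IsTL n D ∧ Even D.card}.ncard = (validEven n).card := by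
    rw [hset, Set.ncard_coe_finset]
    apply Finset.card_image_of_injOn
    intro R hR R' hR' h
    have := congrArg (Finset.image Prod.snd) h
    rwa [toTL_image_snd, toTL_image_snd] at this
  rw [hcard, validEven_card n hn]
  refine ⟨?_, rfl⟩
  obtain ⟨m, rfl⟩ : ∃ m, n = m+1 := ⟨n-1, by omega⟩
  have e1 : 2*(m+1)-1 = 2*m+1 := by omega
  rw [e1]
  have hp : Nat.choose (2*(m+1)) (m+1) = Nat.choose (2*m+1) m + Nat.choose (2*m+1) (m+1) := by
    have h2 : 2*(m+1) = (2*m+1)+1 := by omega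
    rw [h2]
    exact Nat.choose_succ_succ (2*m+1) m
  have hsym : Nat.choose (2*m+1) m = Nat.choose (2*m+1) (m+1) := by
    have hd : (2*m+1) - (m+1) = m := by omega
    have := Nat.choose_symm (n := 2*m+1) (k := m+1) (by omega)
    rw [hd] at this
    exact this
  omega
end

section
/- Let D ∈ T_n and let f_1 < f_2 < ⋯ < f_s be the vertices of [2n] not covered by D, listed in increasing order. Then s = 2n − 2|D| is even, and the f_k alternate in parity beginning with an odd vertex and ending with an even vertex; that is, f_k is odd if k is odd and f_k is even if k is even. -/
/-
Below an uncovered vertex `f` no pair of `D` can straddle `f`: its left end would lie below `f`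
and its right end above, putting the uncovered `f` strictly inside a pair. So the covered vertices
in `[1, f)` are exactly the endpoints of the pairs lying entirely below `f`, an even number. If `f`
is the `i`-th uncovered vertex (0-indexed), the other `i` uncovered vertices below it account for
the rest, whence `f - 1 ≡ i (mod 2)`. Counting all of `[2n]` the same way gives `s = 2n - 2|D|`.
-/

open scoped Classical
noncomputable section

/-- Vertex `k` is covered by some pair of `D`. -/
def Covered (D : Finset (ℕ × ℕ)) (k : ℕ) : Prop := ∃ p ∈ D, k = p.1 ∨ k = p.2

/-- The increasing list `f_1 < f_2 < ⋯ < f_s` of vertices of `[2n]` not covered by `D`. -/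
def uncovList (n : ℕ) (D : Finset (ℕ × ℕ)) : List ℕ :=
  ((Finset.Icc 1 (2 * n)).filter fun k => ¬ Covered D k).sort (· ≤ ·)

def endpoints (D : Finset (ℕ × ℕ)) : Finset ℕ := D.biUnion fun p => {p.1, p.2}

theorem Finset.card_filter_lt_sort_getElem {α : Type*} [LinearOrder α] (s : Finset α) {i : ℕ}
    (hi : i < s.sort.length) : (s.filter (· < s.sort[i])).card = i := by
  have hi' : i < s.card := by rwa [Finset.length_sort] at hi
  set e := s.orderEmbOfFin rfl
  have key : s.filter (· < s.sort[i]) = (Finset.Iio (⟨i, hi'⟩ : Fin s.card)).map e.toEmbedding := by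
    ext x
    simp only [Finset.mem_filter, Finset.mem_map, Finset.mem_Iio]
    constructor
    · rintro ⟨hx, hlt⟩
      obtain ⟨j, rfl⟩ : x ∈ Set.range e := by simpa [e] using hx
      exact ⟨j, e.lt_iff_lt.mp hlt, rfl⟩
    · rintro ⟨j, hj, rfl⟩
      exact ⟨s.orderEmbOfFin_mem rfl j, e.lt_iff_lt.mpr hj⟩
  rw [key, Finset.card_map, Fin.card_Iio]

section
variable {n : ℕ} {D : Finset (ℕ × ℕ)}

theorem IsTL.card_endpoints_of_subset (hD : IsTL n D) {D' : Finset (ℕ × ℕ)} (hsub : D' ⊆ D) :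
    (endpoints D').card = 2 * D'.card := by
  rw [endpoints, Finset.card_biUnion]
  · rw [Finset.sum_const_nat fun p hp => ?_, mul_comm]
    exact Finset.card_pair (hD.1 p (hsub hp)).2.1.ne
  · intro p hp q hq hpq
    have h := hD.2.1 p (hsub hp) q (hsub hq) hpq
    simp only [Finset.disjoint_insert_left, Finset.disjoint_singleton_left, Finset.mem_insert,
      Finset.mem_singleton]
    tauto

theorem IsTL.filter_covered_Icc (hD : IsTL n D) :
    (Finset.Icc 1 (2 * n)).filter (Covered D) = endpoints D := by
  ext k
  simp only [endpoints, Covered, Finset.mem_filter, Finset.mem_Icc, Finset.mem_biUnion,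
    Finset.mem_insert, Finset.mem_singleton]
  constructor
  · exact fun ⟨_, hk⟩ => hk
  · rintro ⟨p, hp, hk⟩
    have := hD.1 p hp
    exact ⟨by omega, p, hp, hk⟩

theorem IsTL.filter_covered_Ico_of_not_covered (hD : IsTL n D) {f : ℕ} (hf : ¬Covered D f) :
    (Finset.Ico 1 f).filter (Covered D) = endpoints (D.filter (·.2 < f)) := by
  ext k
  simp only [endpoints, Covered, Finset.mem_filter, Finset.mem_Ico, Finset.mem_biUnion,
    Finset.mem_insert, Finset.mem_singleton]
  constructor
  · rintro ⟨⟨-, hkf⟩, p, hp, hk⟩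
    refine ⟨p, ⟨hp, ?_⟩, hk⟩
    by_contra hpf
    have hfp : f ≠ p.2 := fun h => hf ⟨p, hp, Or.inr h⟩
    have := hD.1 p hp
    exact hf (hD.2.2.2 p hp f (by omega) (by omega))
  · rintro ⟨p, ⟨hp, hpf⟩, hk⟩
    have := hD.1 p hp
    exact ⟨by omega, p, hp, hk⟩

theorem IsTL.card_filter_not_covered_Ico_add (hD : IsTL n D) {f : ℕ} (hf : ¬Covered D f) :
    ((Finset.Ico 1 f).filter (¬Covered D ·)).card + 2 * (D.filter (·.2 < f)).card = f - 1 := by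
  rw [← hD.card_endpoints_of_subset (Finset.filter_subset _ D),
    ← hD.filter_covered_Ico_of_not_covered hf, add_comm,
    Finset.card_filter_add_card_filter_not, Nat.card_Ico]

end

/-- For `D ∈ T_n`, the uncovered vertices `f_1 < ⋯ < f_s` satisfy: `s = 2n − 2|D|` is even,
and `f_k` is odd iff `k` is odd (in 0-indexed terms, the entry at index `i` is odd iff `i`
is even). -/
theorem uncovered_alternate (n : ℕ) (D : Finset (ℕ × ℕ)) (hD : IsTL n D) :
    (uncovList n D).length = 2 * n - 2 * D.card ∧
    Even (uncovList n D).length ∧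
    ∀ i < (uncovList n D).length, (Odd ((uncovList n D).getD i 0) ↔ Even i) := by
  set U := (Finset.Icc 1 (2 * n)).filter fun k => ¬Covered D k
  have hlen : (uncovList n D).length = U.card := Finset.length_sort _
  have hcount : 2 * D.card + U.card = 2 * n := by
    rw [← hD.card_endpoints_of_subset subset_rfl, ← hD.filter_covered_Icc,
      Finset.card_filter_add_card_filter_not, Nat.card_Icc, Nat.add_sub_cancel]
  refine ⟨by omega, ⟨n - D.card, by omega⟩, fun i hi => ?_⟩
  set f := (uncovList n D)[i]
  have hfU : f ∈ U := (Finset.mem_sort _).mp (List.getElem_mem hi)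
  obtain ⟨hfI, hf⟩ := Finset.mem_filter.mp hfU
  rw [Finset.mem_Icc] at hfI
  have hbelow : (Finset.Ico 1 f).filter (¬Covered D ·) = U.filter (· < f) := by
    ext k
    simp only [U, Finset.mem_filter, Finset.mem_Ico, Finset.mem_Icc]
    constructor
    · rintro ⟨⟨hk1, hkf⟩, hk⟩
      exact ⟨⟨⟨hk1, by omega⟩, hk⟩, hkf⟩
    · rintro ⟨⟨⟨hk1, -⟩, hk⟩, hkf⟩
      exact ⟨⟨hk1, hkf⟩, hk⟩
  have hi_count : (U.filter (· < f)).card = i := U.card_filter_lt_sort_getElem hi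
  have hsplit := hD.card_filter_not_covered_Ico_add hf
  rw [hbelow, hi_count] at hsplit
  rw [List.getD_eq_getElem _ _ hi, Nat.odd_iff, Nat.even_iff]
  omega
end
end

section
/- For every D ∈ T_n, the cardinality of S(D) is a power of 2; that is, |S(D)| = 2^m for some nonnegative integer m. -/
open scoped Classical

/-- `S(D)`: the diagrams of `T_n` contained in `D` such that every removed pair is odd
(a pair `(i,j)`, `i < j`, is odd when `i` is odd). -/
def SD (n : ℕ) (D : Finset (ℕ × ℕ)) : Set (Finset (ℕ × ℕ)) :=
  {D' | IsTL n D' ∧ D' ⊆ D ∧ ∀ p ∈ D \ D', Odd p.1}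

/-- Even coverage lemma: if every vertex strictly between `a` and `b` is an endpoint of an
arc strictly inside `(a,b)`, then the number `b - a - 1` of such vertices is even. -/
lemma even_cov (D : Finset (ℕ × ℕ))
    (hlt : ∀ p ∈ D, p.1 < p.2)
    (hdis : ∀ p ∈ D, ∀ q ∈ D, p ≠ q → p.1 ≠ q.1 ∧ p.1 ≠ q.2 ∧ p.2 ≠ q.1 ∧ p.2 ≠ q.2)
    (hnc : ∀ p ∈ D, ∀ q ∈ D, ¬(p.1 < q.1 ∧ q.1 < p.2 ∧ p.2 < q.2)) :
    ∀ m a b : ℕ, b - a ≤ m →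
      (∀ k, a < k → k < b → ∃ s ∈ D, a < s.1 ∧ s.2 < b ∧ (k = s.1 ∨ k = s.2)) →
      Even (b - a - 1) := by
  intro m
  induction m with
  | zero => intro a b hm _; exact ⟨0, by omega⟩
  | succ m ih =>
    intro a b hm hcov
    by_cases hab : b ≤ a + 1
    · exact ⟨0, by omega⟩
    push_neg at hab
    -- k = a+1 is covered
    obtain ⟨s, hsD, hs1, hs2, hse⟩ := hcov (a + 1) (by omega) (by omega)
    have hslt := hlt s hsD
    have hs1eq : s.1 = a + 1 := by
      rcases hse with h | h
      · omega
      · omega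
    set c := s.2 with hc
    have hac : a + 1 < c := by omega
    have hcb : c < b := hs2
    -- coverage for the interval (a+1, c)
    have hcov1 : ∀ k, a + 1 < k → k < c → ∃ t ∈ D, a + 1 < t.1 ∧ t.2 < c ∧ (k = t.1 ∨ k = t.2) := by
      intro k hk1 hk2
      obtain ⟨t, htD, ht1, ht2, hte⟩ := hcov k (by omega) (by omega)
      have hts : t ≠ s := by
        rintro rfl
        rcases hte with h | h <;> omega
      have hd := hdis t htD s hsD hts
      have ht1' : a + 1 < t.1 := by omega
      refine ⟨t, htD, ht1', ?_, hte⟩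
      rcases hte with h | h
      · -- k = t.1 : use noncrossing of s, t
        have hnc' := hnc s hsD t htD
        have : ¬(s.1 < t.1 ∧ t.1 < s.2 ∧ s.2 < t.2) := hnc'
        omega
      · omega
    -- coverage for the interval (c, b)
    have hcov2 : ∀ k, c < k → k < b → ∃ t ∈ D, c < t.1 ∧ t.2 < b ∧ (k = t.1 ∨ k = t.2) := by
      intro k hk1 hk2
      obtain ⟨t, htD, ht1, ht2, hte⟩ := hcov k (by omega) (by omega)
      have htlt := hlt t htD
      have hts : t ≠ s := by
        rintro rfl
        rcases hte with h | h <;> omega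
      have hd := hdis t htD s hsD hts
      refine ⟨t, htD, ?_, ht2, hte⟩
      rcases hte with h | h
      · omega
      · -- k = t.2 > c; show t.1 > c
        by_contra hcon
        push_neg at hcon
        have hnc' := hnc t htD s hsD
        -- if t.1 < s.1 = a+1 impossible since t.1 > a and t.1 ≠ s.1
        have ht1' : a + 1 < t.1 := by omega
        -- so s.1 < t.1 ≤ c, t.1 ≠ c = s.2, so t.1 < c; then s.1 < t.1 < s.2 < t.2 crossing
        have hcross := hnc s hsD t htD
        omega
    have e1 : Even (c - (a + 1) - 1) := ih (a + 1) c (by omega) hcov1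
    have e2 : Even (b - c - 1) := ih c b (by omega) hcov2
    obtain ⟨x, hx⟩ := e1
    obtain ⟨y, hy⟩ := e2
    exact ⟨x + y + 1, by omega⟩

/-- For every `D ∈ T_n` the cardinality of `S(D)` is a power of `2`. -/
theorem SD_card_pow_two (n : ℕ) (D : Finset (ℕ × ℕ)) (hD : IsTL n D) :
    ∃ m : ℕ, (SD n D).ncard = 2 ^ m := by
  obtain ⟨hb, hdis, hnc, hcov⟩ := hD
  have hlt : ∀ p ∈ D, p.1 < p.2 := fun p hp => (hb p hp).2.1
  -- the set of maximal odd pairs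
  set A : Finset (ℕ × ℕ) :=
    D.filter (fun q => Odd q.1 ∧ ∀ p ∈ D, ¬(p.1 < q.1 ∧ q.2 < p.2)) with hA
  have hAD : A ⊆ D := Finset.filter_subset _ _
  -- the key set equality
  have hkey : SD n D = (fun U => D \ U) '' ↑A.powerset := by
    ext D'
    constructor
    · rintro ⟨⟨hb', hdis', hnc', hcov'⟩, hsub, hodd⟩
      refine ⟨D \ D', ?_, Finset.sdiff_sdiff_eq_self hsub⟩
      simp only [Finset.coe_powerset, Set.mem_preimage, Set.mem_powerset_iff,
        Finset.coe_subset]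
      intro q hq
      have hqD : q ∈ D := (Finset.mem_sdiff.mp hq).1
      have hqD' : q ∉ D' := (Finset.mem_sdiff.mp hq).2
      have hqodd : Odd q.1 := hodd q hq
      rw [hA, Finset.mem_filter]
      refine ⟨hqD, hqodd, ?_⟩
      -- no strict container
      by_contra hcon
      push_neg at hcon
      obtain ⟨p, hpD, hp⟩ := hcon
      -- pick a minimal container p0
      set P : Finset (ℕ × ℕ) := D.filter (fun p => p.1 < q.1 ∧ q.2 < p.2) with hP
      have hPne : P.Nonempty := ⟨p, Finset.mem_filter.mpr ⟨hpD, hp⟩⟩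
      obtain ⟨p0, hp0P, hp0min⟩ := P.exists_min_image (fun r => r.2 - r.1) hPne
      obtain ⟨hp0D, hp01, hp02⟩ : p0 ∈ D ∧ p0.1 < q.1 ∧ q.2 < p0.2 := by
        have := Finset.mem_filter.mp hp0P
        exact ⟨this.1, this.2.1, this.2.2⟩
      have hqlt := hlt q hqD
      have hp0lt := hlt p0 hp0D
      -- every vertex in (p0.1, q.1) is endpoint of an arc strictly inside (p0.1, q.1)
      have hcovint : ∀ k, p0.1 < k → k < q.1 →
          ∃ t ∈ D, p0.1 < t.1 ∧ t.2 < q.1 ∧ (k = t.1 ∨ k = t.2) := by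
        intro k hk1 hk2
        obtain ⟨t, htD, hte⟩ := hcov p0 hp0D k hk1 (by omega)
        have htlt := hlt t htD
        have htp0 : t ≠ p0 := by rintro rfl; rcases hte with h | h <;> omega
        have htq : t ≠ q := by rintro rfl; rcases hte with h | h <;> omega
        have hdp0 := hdis t htD p0 hp0D htp0
        have hdq := hdis t htD q hqD htq
        have hncp0 := hnc p0 hp0D t htD
        have hncq := hnc t htD q hqD
        have hncq' := hnc q hqD t htD
        have hncp0' := hnc t htD p0 hp0D
        refine ⟨t, htD, ?_, ?_, hte⟩
        · -- p0.1 < t.1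
          omega
        · -- t.2 < q.1
          rcases hte with h | h
          · -- k = t.1
            -- t.2 < p0.2 by noncrossing with p0
            have ht2p : t.2 < p0.2 := by omega
            -- if t.2 > q.1 then either crossing with q or t strictly contains q
            by_contra hcon2
            push_neg at hcon2
            have ht2q : q.1 < t.2 := by omega
            -- crossing case excluded, so q.2 < t.2
            have ht2q2 : q.2 < t.2 := by omega
            -- then t ∈ P smaller than p0, contradiction
            have htP : t ∈ P := Finset.mem_filter.mpr ⟨htD, by omega, ht2q2⟩
            have := hp0min t htP
            omega
          · omega
      have heven : Even (q.1 - p0.1 - 1) :=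
        even_cov D hlt hdis hnc (q.1 - p0.1) p0.1 q.1 (le_refl _) hcovint
      -- hence p0.1 is even, so p0 was not removed
      have hp0odd : ¬ Odd p0.1 := by
        obtain ⟨x, hx⟩ := heven
        obtain ⟨y, hy⟩ := hqodd
        rintro ⟨z, hz⟩
        omega
      have hp0D' : p0 ∈ D' := by
        by_contra h
        exact hp0odd (hodd p0 (Finset.mem_sdiff.mpr ⟨hp0D, h⟩))
      -- condition 4 of D' at p0 with k = q.1 yields a contradiction
      obtain ⟨t, htD', hte⟩ := hcov' p0 hp0D' q.1 hp01 (by omega)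
      have htD : t ∈ D := hsub htD'
      have htq : t ≠ q := by rintro rfl; exact hqD' htD'
      have := hdis t htD q hqD htq
      omega
    · rintro ⟨U, hU, rfl⟩
      simp only [Finset.coe_powerset, Set.mem_preimage, Set.mem_powerset_iff,
        Finset.coe_subset] at hU
      have hUD : U ⊆ D := hU.trans hAD
      refine ⟨⟨?_, ?_, ?_, ?_⟩, Finset.sdiff_subset, ?_⟩
      · intro p hp; exact hb p (Finset.mem_sdiff.mp hp).1
      · intro p hp q hq
        exact hdis p (Finset.mem_sdiff.mp hp).1 q (Finset.mem_sdiff.mp hq).1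
      · intro p hp q hq
        exact hnc p (Finset.mem_sdiff.mp hp).1 q (Finset.mem_sdiff.mp hq).1
      · intro p hp k hk1 hk2
        have hpD : p ∈ D := (Finset.mem_sdiff.mp hp).1
        obtain ⟨s, hsD, hse⟩ := hcov p hpD k hk1 hk2
        by_cases hsU : s ∈ U
        · exfalso
          -- s ∈ A is maximal, but p strictly contains s
          have hsA := hU hsU
          rw [hA, Finset.mem_filter] at hsA
          obtain ⟨hsD', _, hsmax⟩ := hsA
          have hsp : s ≠ p := by
            rintro rfl
            exact (Finset.mem_sdiff.mp hp).2 hsU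
          have hd := hdis s hsD p hpD hsp
          have hslt := hlt s hsD
          have hplt := hlt p hpD
          have hnc1 := hnc p hpD s hsD
          have hnc2 := hnc s hsD p hpD
          -- p strictly contains s
          have : p.1 < s.1 ∧ s.2 < p.2 := by omega
          exact hsmax p hpD this
        · exact ⟨s, Finset.mem_sdiff.mpr ⟨hsD, hsU⟩, hse⟩
      · intro q hq
        rw [Finset.mem_sdiff] at hq
        obtain ⟨hqD, hq2⟩ := hq
        have hqU : q ∈ U := by
          by_contra h
          exact hq2 (Finset.mem_sdiff.mpr ⟨hqD, h⟩)
        have := hU hqU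
        rw [hA, Finset.mem_filter] at this
        exact this.2.1
  -- now count
  rw [hkey]
  refine ⟨A.card, ?_⟩
  rw [Set.ncard_image_of_injOn, Set.ncard_coe_finset, Finset.card_powerset]
  intro U hU V hV hUV
  simp only [Finset.coe_powerset, Set.mem_preimage, Set.mem_powerset_iff,
    Finset.coe_subset] at hU hV
  have hUD : U ⊆ D := hU.trans hAD
  have hVD : V ⊆ D := hV.trans hAD
  have hUV' : D \ U = D \ V := hUV
  have : D \ (D \ U) = D \ (D \ V) := by rw [hUV']
  rwa [Finset.sdiff_sdiff_eq_self hUD, Finset.sdiff_sdiff_eq_self hVD] at this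
end

section
/- Let I ⊆ [2n] be a subset of even cardinality and let D' ∈ D(I). Then there exists a unique diagram D_max ∈ T_n^e ∩ D(I) such that D' ∈ S(D_max) and D_max is maximal in the following sense: for every D ∈ D(I) with D' ∈ S(D), one has S(D) ⊆ S(D_max). -/
open scoped Classical

/-- `D` is `I`-compatible: every pair of `D` contains exactly one element of `I`. -/
def Compat (I : Finset ℕ) (D : Finset (ℕ × ℕ)) : Prop :=
  ∀ p ∈ D, (p.1 ∈ I ∧ p.2 ∉ I) ∨ (p.1 ∉ I ∧ p.2 ∈ I)

/-! The vertices left uncovered by `D'` alternate in parity, starting with an odd one: the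
stretch between two consecutive uncovered vertices (or the ends `0`, `2n+1`) is covered by
whole pairs of `D'`, so it has even length. Hence they split into consecutive pairs
`(u₁, u₂), (u₃, u₄), …` with odd left end, and these are exactly the pairs that a diagram
`D ⊇ D'` with `D' ∈ S(D)` can add. `D_max` adds all of them that are `I`-compatible. Counting
`I` over the perfect matching `D' ∪ {(u₁, u₂), …}`, a pair meets `I` in an odd number of points
iff it is `I`-compatible, so `|D_max| ≡ |I|` is even. -/

open Finset

def verts (D : Finset (ℕ × ℕ)) : Finset ℕ :=
  D.biUnion fun p => {p.1, p.2}

theorem mem_verts {D : Finset (ℕ × ℕ)} {k : ℕ} : k ∈ verts D ↔ ∃ q ∈ D, k = q.1 ∨ k = q.2 := by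
  simp [verts]

theorem fst_mem_verts {D : Finset (ℕ × ℕ)} {p : ℕ × ℕ} (hp : p ∈ D) : p.1 ∈ verts D :=
  mem_verts.2 ⟨p, hp, Or.inl rfl⟩

theorem snd_mem_verts {D : Finset (ℕ × ℕ)} {p : ℕ × ℕ} (hp : p ∈ D) : p.2 ∈ verts D :=
  mem_verts.2 ⟨p, hp, Or.inr rfl⟩

theorem card_pair_inter {a b : ℕ} (hab : a ≠ b) (s : Finset ℕ) :
    ({a, b} ∩ s : Finset ℕ).card = (if a ∈ s then 1 else 0) + (if b ∈ s then 1 else 0) := by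
  rw [← filter_mem_eq_inter, card_filter, sum_pair hab]

section IsTL

variable {n : ℕ} {D : Finset (ℕ × ℕ)}

theorem IsTL.mem_verts_of_lt_of_lt (hD : IsTL n D) {p : ℕ × ℕ} (hp : p ∈ D) {k : ℕ}
    (h₁ : p.1 < k) (h₂ : k < p.2) : k ∈ verts D :=
  mem_verts.2 (hD.2.2.2 p hp k h₁ h₂)

theorem IsTL.verts_subset_Icc (hD : IsTL n D) : verts D ⊆ Icc 1 (2 * n) := by
  intro k hk
  obtain ⟨q, hq, hk⟩ := mem_verts.1 hk
  have := hD.1 q hq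
  rw [mem_Icc]
  omega

theorem IsTL.card_verts_inter (hD : IsTL n D) (s : Finset ℕ) :
    (verts D ∩ s).card = ∑ p ∈ D, ({p.1, p.2} ∩ s : Finset ℕ).card := by
  rw [verts, biUnion_inter, card_biUnion]
  intro p hp q hq hpq
  have := hD.2.1 p hp q hq hpq
  simp only [Function.onFun, disjoint_left, mem_inter, mem_insert, mem_singleton]
  rintro x ⟨rfl | rfl, -⟩ ⟨h | h, -⟩ <;> omega

theorem IsTL.card_verts_inter_modEq (hD : IsTL n D) (I : Finset ℕ) :
    (verts D ∩ I).card ≡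
      (D.filter fun p => (p.1 ∈ I ∧ p.2 ∉ I) ∨ (p.1 ∉ I ∧ p.2 ∈ I)).card [MOD 2] := by
  rw [hD.card_verts_inter, card_filter, Nat.ModEq, sum_nat_mod, sum_nat_mod D]
  refine congrArg (· % 2) (sum_congr rfl fun p hp => ?_)
  rw [card_pair_inter (hD.1 p hp).2.1.ne]
  by_cases h₁ : p.1 ∈ I <;> by_cases h₂ : p.2 ∈ I <;> simp [h₁, h₂]

theorem IsTL.notMem_verts_of_mem_sdiff {D' : Finset (ℕ × ℕ)} {q : ℕ × ℕ} (hD : IsTL n D)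
    (hsub : D' ⊆ D) (hq : q ∈ D \ D') : q.1 ∉ verts D' ∧ q.2 ∉ verts D' := by
  obtain ⟨hqD, hqD'⟩ := mem_sdiff.1 hq
  have hdisj : ∀ r ∈ D', q.1 ≠ r.1 ∧ q.1 ≠ r.2 ∧ q.2 ≠ r.1 ∧ q.2 ≠ r.2 := fun r hr =>
    hD.2.1 q hqD r (hsub hr) fun h => hqD' (h ▸ hr)
  constructor <;> intro h <;> obtain ⟨r, hr, hqr⟩ := mem_verts.1 h <;> have := hdisj r hr <;> omega

end IsTL

def IsGap (D : Finset (ℕ × ℕ)) (a b : ℕ) : Prop :=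
  a < b ∧ a ∉ verts D ∧ b ∉ verts D ∧ ∀ k, a < k → k < b → k ∈ verts D

section IsGap

variable {D : Finset (ℕ × ℕ)} {a b : ℕ}

theorem exists_isGap_right (ha : a ∉ verts D) (hb : b ∉ verts D) (hab : a < b) :
    ∃ c ≤ b, IsGap D a c := by
  have hex : ∃ c, a < c ∧ c ∉ verts D := ⟨b, hab, hb⟩
  obtain ⟨hac, hc⟩ := Nat.find_spec hex
  refine ⟨Nat.find hex, Nat.find_min' hex ⟨hab, hb⟩, hac, ha, hc, fun k hak hkc => ?_⟩
  by_contra hk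
  exact Nat.find_min hex hkc ⟨hak, hk⟩

theorem exists_isGap_left (ha : a ∉ verts D) (hb : b ∉ verts D) (hab : a < b) :
    ∃ c ≥ a, IsGap D c b := by
  let P k := k < b ∧ k ∉ verts D
  have hPa : P a := ⟨hab, ha⟩
  obtain ⟨hcb, hc⟩ : P (Nat.findGreatest P b) := Nat.findGreatest_spec hab.le hPa
  refine ⟨_, Nat.le_findGreatest hab.le hPa, hcb, hc, hb, fun k hck hkb => ?_⟩
  by_contra hk
  exact Nat.findGreatest_is_greatest hck hkb.le ⟨hkb, hk⟩

theorem IsGap.le_of_lt {a' b' : ℕ} (h : IsGap D a b) (h' : IsGap D a' b') (ha : a < a') :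
    b ≤ a' := by
  by_contra hlt
  exact h'.2.1 (h.2.2.2 a' ha (by omega))

theorem IsGap.right_unique {c : ℕ} (h : IsGap D a b) (h' : IsGap D a c) : b = c := by
  by_contra hne
  rcases Nat.lt_or_gt_of_ne hne with hlt | hlt
  · exact h.2.2.1 (h'.2.2.2 b h.1 hlt)
  · exact h'.2.2.1 (h.2.2.2 c h'.1 hlt)

theorem IsTL.odd_sub_of_isGap {n : ℕ} (hD : IsTL n D) (h : IsGap D a b) : Odd (b - a) := by
  obtain ⟨hab, ha, hb, hcov⟩ := h
  have hIoo : verts D ∩ Ioo a b = Ioo a b :=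
    inter_eq_right.2 fun k hk => hcov k (mem_Ioo.1 hk).1 (mem_Ioo.1 hk).2
  have heven : Even (Ioo a b).card := by
    rw [← hIoo, hD.card_verts_inter]
    refine even_sum _ fun p hp => ?_
    have hp₁₂ := (hD.1 p hp).2.1
    -- no pair of `D` straddles the uncovered vertices `a` and `b`
    have hstraddle : p.1 ∈ Ioo a b ↔ p.2 ∈ Ioo a b := by
      have ha₁ : p.1 ≠ a := fun h => ha (h ▸ fst_mem_verts hp)
      have ha₂ : p.2 ≠ a := fun h => ha (h ▸ snd_mem_verts hp)
      have hb₁ : p.1 ≠ b := fun h => hb (h ▸ fst_mem_verts hp)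
      have hb₂ : p.2 ≠ b := fun h => hb (h ▸ snd_mem_verts hp)
      have ha' : ¬(p.1 < a ∧ a < p.2) := fun h => ha (hD.mem_verts_of_lt_of_lt hp h.1 h.2)
      have hb' : ¬(p.1 < b ∧ b < p.2) := fun h => hb (hD.mem_verts_of_lt_of_lt hp h.1 h.2)
      simp only [mem_Ioo]
      omega
    rw [card_pair_inter hp₁₂.ne]
    by_cases h : p.2 ∈ Ioo a b <;> simp [hstraddle, h]
  obtain ⟨m, hm⟩ := heven
  rw [Nat.card_Ioo] at hm
  exact ⟨m, by omega⟩

end IsGap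

noncomputable def addable (n : ℕ) (D : Finset (ℕ × ℕ)) : Finset (ℕ × ℕ) :=
  (Icc 1 (2 * n) ×ˢ Icc 1 (2 * n)).filter fun p => Odd p.1 ∧ IsGap D p.1 p.2

section addable

variable {n : ℕ} {D : Finset (ℕ × ℕ)} {p q : ℕ × ℕ}

theorem mem_addable : p ∈ addable n D ↔ 1 ≤ p.1 ∧ p.2 ≤ 2 * n ∧ Odd p.1 ∧ IsGap D p.1 p.2 := by
  simp only [addable, mem_filter, mem_product, mem_Icc]
  constructor
  · rintro ⟨⟨⟨h₁, -⟩, -, h₂⟩, hodd, hgap⟩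
    exact ⟨h₁, h₂, hodd, hgap⟩
  · rintro ⟨h₁, h₂, hodd, hgap⟩
    have := hgap.1
    exact ⟨⟨⟨h₁, by omega⟩, by omega, h₂⟩, hodd, hgap⟩

theorem odd_of_mem_addable (hp : p ∈ addable n D) : Odd p.1 :=
  (mem_addable.1 hp).2.2.1

theorem IsTL.lt_or_lt_of_mem_addable (hD : IsTL n D) (hp : p ∈ addable n D)
    (hq : q ∈ addable n D) (hpq : p ≠ q) : p.2 < q.1 ∨ q.2 < p.1 := by
  obtain ⟨-, -, ⟨a, ha⟩, hgp⟩ := mem_addable.1 hp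
  obtain ⟨-, -, ⟨b, hb⟩, hgq⟩ := mem_addable.1 hq
  obtain ⟨c, hc⟩ := hD.odd_sub_of_isGap hgp
  obtain ⟨d, hd⟩ := hD.odd_sub_of_isGap hgq
  have := hgp.1
  have := hgq.1
  rcases Nat.lt_trichotomy p.1 q.1 with hlt | heq | hgt
  · have := hgp.le_of_lt hgq hlt
    omega
  · exact absurd (Prod.ext heq (hgp.right_unique (heq ▸ hgq))) hpq
  · have := hgq.le_of_lt hgp hgt
    omega

theorem IsTL.union_of_subset_addable {A : Finset (ℕ × ℕ)} (hD : IsTL n D)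
    (hA : A ⊆ addable n D) : IsTL n (D ∪ A) := by
  have hgap : ∀ q ∈ A, IsGap D q.1 q.2 := fun q hq => (mem_addable.1 (hA hq)).2.2.2
  have hfree : ∀ q ∈ A, ∀ p ∈ D, p.1 ≠ q.1 ∧ p.1 ≠ q.2 ∧ p.2 ≠ q.1 ∧ p.2 ≠ q.2 := by
    intro q hq p hp
    obtain ⟨-, h₁, h₂, -⟩ := hgap q hq
    refine ⟨?_, ?_, ?_, ?_⟩ <;> rintro h
    exacts [h₁ (h ▸ fst_mem_verts hp), h₂ (h ▸ fst_mem_verts hp),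
      h₁ (h ▸ snd_mem_verts hp), h₂ (h ▸ snd_mem_verts hp)]
  refine ⟨fun p hp => ?_, fun p hp q hq hpq => ?_, fun p hp q hq => ?_, fun p hp k h₁ h₂ => ?_⟩
  · rcases mem_union.1 hp with h | h
    · exact hD.1 p h
    · obtain ⟨h₁, h₂, -, hg⟩ := mem_addable.1 (hA h)
      exact ⟨h₁, hg.1, h₂⟩
  · rcases mem_union.1 hp with h | h <;> rcases mem_union.1 hq with h' | h'
    · exact hD.2.1 p h q h' hpq
    · exact hfree q h' p h
    · have := hfree p h q h'
      omega
    · have := (hgap p h).1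
      have := (hgap q h').1
      have := hD.lt_or_lt_of_mem_addable (hA h) (hA h') hpq
      omega
  · rintro ⟨h₁, h₂, h₃⟩
    rcases mem_union.1 hp with h | h <;> rcases mem_union.1 hq with h' | h'
    · exact hD.2.2.1 p h q h' ⟨h₁, h₂, h₃⟩
    · exact (hgap q h').2.1 (hD.mem_verts_of_lt_of_lt h h₁ h₂)
    · exact (hgap p h).2.2.1 (hD.mem_verts_of_lt_of_lt h' h₂ h₃)
    · by_cases hpq : p = q
      · subst hpq
        omega
      · have := hD.lt_or_lt_of_mem_addable (hA h) (hA h') hpq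
        omega
  · rcases mem_union.1 hp with h | h
    · obtain ⟨q, hq, hk⟩ := hD.2.2.2 p h k h₁ h₂
      exact ⟨q, mem_union_left _ hq, hk⟩
    · obtain ⟨q, hq, hk⟩ := mem_verts.1 ((hgap p h).2.2.2 k h₁ h₂)
      exact ⟨q, mem_union_left _ hq, hk⟩

theorem IsTL.exists_mem_addable (hD : IsTL n D) {u : ℕ} (hu : u ∈ Icc 1 (2 * n))
    (hu' : u ∉ verts D) : ∃ p ∈ addable n D, u = p.1 ∨ u = p.2 := by
  rw [mem_Icc] at hu
  have h₀ : 0 ∉ verts D := fun h => by simpa using hD.verts_subset_Icc h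
  have hN : 2 * n + 1 ∉ verts D := fun h => by simpa using hD.verts_subset_Icc h
  rcases Nat.even_or_odd u with ⟨m, hm⟩ | hodd
  · obtain ⟨c, -, hgap⟩ := exists_isGap_left h₀ hu' (by omega)
    obtain ⟨k, hk⟩ := hD.odd_sub_of_isGap hgap
    have := hgap.1
    exact ⟨(c, u), mem_addable.2 ⟨by omega, hu.2, ⟨m - k - 1, by omega⟩, hgap⟩, Or.inr rfl⟩
  · obtain ⟨c, hc, hgap⟩ := exists_isGap_right hu' hN (by omega)
    obtain ⟨k, hk⟩ := hD.odd_sub_of_isGap hgap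
    obtain ⟨m, hm⟩ := hodd
    have := hgap.1
    exact ⟨(u, c), mem_addable.2 ⟨hu.1, by omega, ⟨m, hm⟩, hgap⟩, Or.inl rfl⟩

theorem IsTL.verts_union_addable (hD : IsTL n D) :
    verts (D ∪ addable n D) = Icc 1 (2 * n) := by
  refine (hD.union_of_subset_addable subset_rfl).verts_subset_Icc.antisymm fun u hu => ?_
  by_cases hu' : u ∈ verts D
  · obtain ⟨q, hq, h⟩ := mem_verts.1 hu'
    exact mem_verts.2 ⟨q, mem_union_left _ hq, h⟩
  · obtain ⟨p, hp, h⟩ := hD.exists_mem_addable hu hu'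
    exact mem_verts.2 ⟨p, mem_union_right _ hp, h⟩

theorem IsTL.sdiff_subset_addable {D' : Finset (ℕ × ℕ)} (hD : IsTL n D) (hD' : D' ∈ SD n D) :
    D \ D' ⊆ addable n D' := by
  obtain ⟨hTL', hsub, hodd⟩ := hD'
  have hfree := fun q (hq : q ∈ D \ D') => hD.notMem_verts_of_mem_sdiff hsub hq
  intro p hp
  obtain ⟨hpD, -⟩ := mem_sdiff.1 hp
  obtain ⟨hp₁, hp₁₂, hp₂⟩ := hD.1 p hpD
  obtain ⟨c, hcp, hgap⟩ := exists_isGap_right (hfree p hp).1 (hfree p hp).2 hp₁₂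
  suffices hc : c = p.2 from mem_addable.2 ⟨hp₁, hp₂, hodd p hp, hc ▸ hgap⟩
  by_contra hne
  have hpc := hgap.1
  -- otherwise `c` is an endpoint of a removed pair `q` nested inside `p`
  obtain ⟨q, hqD, hcq⟩ := hD.2.2.2 p hpD c hpc (by omega)
  have hq : q ∈ D \ D' := mem_sdiff.2 ⟨hqD, fun h => hgap.2.2.1 (mem_verts.2 ⟨q, h, hcq⟩)⟩
  have hqp : q ≠ p := by
    rintro rfl
    omega
  have hdisj := hD.2.1 q hqD p hpD hqp
  have hcross := hD.2.2.1 q hqD p hpD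
  have := (hD.1 q hqD).2.1
  rcases hcq with rfl | rfl
  · obtain ⟨a, ha⟩ := hodd p hp
    obtain ⟨b, hb⟩ := hodd q hq
    obtain ⟨d, hd⟩ := hTL'.odd_sub_of_isGap hgap
    omega
  · exact (hfree q hq).1 (hgap.2.2.2 q.1 (by omega) (by omega))

end addable

section SD

variable {n : ℕ} {D E : Finset (ℕ × ℕ)}

theorem self_mem_SD (hD : IsTL n D) : D ∈ SD n D :=
  ⟨hD, subset_rfl, by simp⟩

theorem SD_subset_SD (hDE : D ⊆ E) (hodd : ∀ p ∈ E \ D, Odd p.1) : SD n D ⊆ SD n E := by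
  rintro F ⟨hF, hFD, hFodd⟩
  refine ⟨hF, hFD.trans hDE, fun p hp => ?_⟩
  obtain ⟨hpE, hpF⟩ := mem_sdiff.1 hp
  by_cases hpD : p ∈ D
  · exact hFodd p (mem_sdiff.2 ⟨hpD, hpF⟩)
  · exact hodd p (mem_sdiff.2 ⟨hpE, hpD⟩)

end SD

noncomputable def maxExtension (n : ℕ) (I : Finset ℕ) (D : Finset (ℕ × ℕ)) : Finset (ℕ × ℕ) :=
  (D ∪ addable n D).filter fun p => (p.1 ∈ I ∧ p.2 ∉ I) ∨ (p.1 ∉ I ∧ p.2 ∈ I)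

section maxExtension

variable {n : ℕ} {I : Finset ℕ} {D D' : Finset (ℕ × ℕ)}

theorem compat_maxExtension : Compat I (maxExtension n I D) :=
  fun _ hp => (mem_filter.1 hp).2

theorem maxExtension_sdiff_subset : maxExtension n I D \ D ⊆ addable n D := by
  intro p hp
  obtain ⟨hpM, hpD⟩ := mem_sdiff.1 hp
  exact (mem_union.1 (mem_filter.1 hpM).1).resolve_left hpD

theorem IsTL.subset_maxExtension (hD : IsTL n D) (hcD : Compat I D) (hD' : D' ∈ SD n D) :
    D ⊆ maxExtension n I D' := by
  intro p hp
  refine mem_filter.2 ⟨?_, hcD p hp⟩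
  by_cases hpD' : p ∈ D'
  · exact mem_union_left _ hpD'
  · exact mem_union_right _ (hD.sdiff_subset_addable hD' (mem_sdiff.2 ⟨hp, hpD'⟩))

theorem IsTL.isTL_maxExtension (hD : IsTL n D) (hc : Compat I D) :
    IsTL n (maxExtension n I D) := by
  have hsub := (hD.subset_maxExtension hc (self_mem_SD hD) : D ⊆ maxExtension n I D)
  rw [← union_sdiff_of_subset hsub]
  exact hD.union_of_subset_addable maxExtension_sdiff_subset

theorem IsTL.mem_SD_maxExtension (hD : IsTL n D) (hc : Compat I D) :
    D ∈ SD n (maxExtension n I D) :=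
  ⟨hD, hD.subset_maxExtension hc (self_mem_SD hD),
    fun _ hp => odd_of_mem_addable (maxExtension_sdiff_subset hp)⟩

theorem IsTL.SD_subset_SD_maxExtension (hD : IsTL n D) (hcD : Compat I D) (hD' : D' ∈ SD n D) :
    SD n D ⊆ SD n (maxExtension n I D') :=
  SD_subset_SD (hD.subset_maxExtension hcD hD') fun _ hp =>
    odd_of_mem_addable (maxExtension_sdiff_subset (sdiff_subset_sdiff subset_rfl hD'.2.1 hp))

theorem IsTL.even_card_maxExtension (hD : IsTL n D) (hI : I ⊆ Icc 1 (2 * n))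
    (heven : Even I.card) : Even (maxExtension n I D).card := by
  have h := (hD.union_of_subset_addable subset_rfl).card_verts_inter_modEq I
  rw [hD.verts_union_addable, inter_eq_right.2 hI] at h
  rw [Nat.even_iff, maxExtension, ← h, ← Nat.even_iff]
  exact heven

end maxExtension

/-- If `I ⊆ [2n]` has even cardinality and `D' ∈ D(I)`, then there exists a unique
`D_max ∈ T_n^e ∩ D(I)` with `D' ∈ S(D_max)` which is maximal: for every `D ∈ D(I)` with
`D' ∈ S(D)` one has `S(D) ⊆ S(D_max)`. -/
theorem exists_unique_max (n : ℕ) (I : Finset ℕ) (hI : I ⊆ Finset.Icc 1 (2 * n))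
    (heven : Even I.card) (D' : Finset (ℕ × ℕ)) (hD' : IsTL n D') (hc : Compat I D') :
    ∃! Dmax : Finset (ℕ × ℕ),
      IsTL n Dmax ∧ Even Dmax.card ∧ Compat I Dmax ∧ D' ∈ SD n Dmax ∧
        ∀ D : Finset (ℕ × ℕ), IsTL n D → Compat I D → D' ∈ SD n D → SD n D ⊆ SD n Dmax := by
  have hTL := hD'.isTL_maxExtension hc
  have hSD := hD'.mem_SD_maxExtension hc
  refine ⟨maxExtension n I D', ⟨hTL, hD'.even_card_maxExtension hI heven, compat_maxExtension,
    hSD, fun D hD hcD hD'D => hD.SD_subset_SD_maxExtension hcD hD'D⟩, ?_⟩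
  rintro E ⟨hE, -, hcE, hD'E, hEmax⟩
  exact subset_antisymm (hE.SD_subset_SD_maxExtension hcE hD'E (self_mem_SD hE)).2.1
    (hEmax _ hTL compat_maxExtension hSD (self_mem_SD hTL)).2.1
end

section
/- The map D ↦ (I(D), [2n]∖I(D)) is a bijection from T_n onto the set of standard partitions of [2n] into at most two parts. -/
open scoped Classical
noncomputable section

/-- `I(D) ⊆ [2n]`: the vertices not covered by `D` together with the smaller element of each
pair of `D`; equivalently, the vertices of `[2n]` that are not the larger element of a pair. -/
def ID (n : ℕ) (D : Finset (ℕ × ℕ)) : Finset ℕ :=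
  (Finset.Icc 1 (2 * n)).filter fun k => ¬ ∃ p ∈ D, p.2 = k

/-- `(I, Ī)` (with `Ī = [2n] ∖ I`) is a standard partition of `[2n]`: writing
`I = {i_1 < … < i_a}` and `Ī = {j_1 < … < j_b}`, we have `a ≥ b` and `i_k < j_k` for all
`1 ≤ k ≤ b`. -/
def IsStandardPart (n : ℕ) (I : Finset ℕ) : Prop :=
  I ⊆ Finset.Icc 1 (2 * n) ∧
  (Finset.Icc 1 (2 * n) \ I).card ≤ I.card ∧
  ∀ k < (Finset.Icc 1 (2 * n) \ I).card,
    (I.sort (· ≤ ·)).getD k 0 < ((Finset.Icc 1 (2 * n) \ I).sort (· ≤ ·)).getD k 0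


/-!
Read `I ⊆ [2n]` as the lattice path `height I` that steps up at the points of `I` and down at
the other points. Through `Nat.nth` and `Nat.count`, `I` is standard exactly when this path never
goes below zero. Every closer of a diagram `D` is preceded by its own opener, which lies in
`I(D)`, so `I(D)` satisfies this ballot condition. Conversely, a nonnegative path is matched by
pairing each down step `j` with the up step that starts the last visit of the level `height I j`
before `j`; levels strictly above `height I j` between the two make this matching noncrossing and
covering, with `I(matching) = I`. For injectivity, two diagrams with the same closers coincide, by
induction on the length of an arc: an arc `(i, j)` of one and `(i', j)` of the other with
`i ≠ i'` force a shorter arc nested inside, on which the two diagrams already disagree.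
-/

open Finset

theorem Finset.sort_getD_eq_nth (s : Finset ℕ) (k : ℕ) :
    (s.sort (· ≤ ·)).getD k 0 = Nat.nth (· ∈ s) k := by
  have hf : (Set.ofPred (· ∈ s)).Finite := s.finite_toSet
  rw [Nat.nth_eq_getD_sort hf]
  congr
  ext
  simp

theorem Finset.count_mem_eq_card_filter_lt (s : Finset ℕ) (m : ℕ) :
    Nat.count (· ∈ s) m = #{x ∈ s | x < m} := by
  rw [Nat.count_eq_card_filter_range]
  congr 1
  ext
  simp [and_comm]

theorem Finset.card_le_and_nth_lt_nth_iff_count_le {s t : Finset ℕ} (hst : Disjoint s t) :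
    (#t ≤ #s ∧ ∀ k < #t, Nat.nth (· ∈ s) k < Nat.nth (· ∈ t) k) ↔
      ∀ m, Nat.count (· ∈ t) m ≤ Nat.count (· ∈ s) m := by
  have hs (hf : (Set.ofPred (· ∈ s)).Finite) : #hf.toFinset = #s := by simp
  have ht (hf : (Set.ofPred (· ∈ t)).Finite) : #hf.toFinset = #t := by simp
  constructor
  · rintro ⟨hcard, hlt⟩ m
    by_contra! hm
    set k := Nat.count (· ∈ s) m
    have hkt : k < #t := hm.trans_le (by simpa using Nat.count_le_card t.finite_toSet m)
    have hnth : Nat.nth (· ∈ s) k < m := (hlt k hkt).trans (Nat.nth_lt_of_lt_count hm)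
    have hcount := Nat.count_nth_succ (p := (· ∈ s)) (n := k) fun hf => by rw [hs hf]; omega
    have : Nat.count (· ∈ s) (Nat.nth (· ∈ s) k + 1) ≤ Nat.count (· ∈ s) m :=
      Nat.count_monotone _ hnth
    omega
  · intro hcount
    have hlt : ∀ k < #t, k < #s ∧ Nat.nth (· ∈ s) k < Nat.nth (· ∈ t) k := by
      intro k hk
      have hmem_t : Nat.nth (· ∈ t) k ∈ t := Nat.nth_mem k fun hf => by rw [ht hf]; omega
      have hk' : k < Nat.count (· ∈ s) (Nat.nth (· ∈ t) k + 1) := by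
        have := hcount (Nat.nth (· ∈ t) k + 1)
        rw [Nat.count_nth_succ fun hf => by rw [ht hf]; omega] at this
        omega
      have hks : k < #s := hk'.trans_le (by simpa using Nat.count_le_card s.finite_toSet _)
      have hmem_s : Nat.nth (· ∈ s) k ∈ s := Nat.nth_mem k fun hf => by rw [hs hf]; omega
      have hne : Nat.nth (· ∈ s) k ≠ Nat.nth (· ∈ t) k := fun h =>
        disjoint_left.1 hst hmem_s (h ▸ hmem_t)
      exact ⟨hks, lt_of_le_of_ne (Nat.lt_succ_iff.1 (Nat.nth_lt_of_lt_count hk')) hne⟩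
    refine ⟨le_of_not_gt fun h => ?_, fun k hk => (hlt k hk).2⟩
    exact (hlt #s h).1.false

theorem isStandardPart_iff {n : ℕ} {I : Finset ℕ} :
    IsStandardPart n I ↔ I ⊆ Icc 1 (2 * n) ∧
      ∀ m, Nat.count (· ∈ Icc 1 (2 * n) \ I) m ≤ Nat.count (· ∈ I) m := by
  simp only [IsStandardPart, sort_getD_eq_nth]
  exact and_congr_right fun _ => card_le_and_nth_lt_nth_iff_count_le disjoint_sdiff

theorem exists_first_eq_of_le_of_le {f : ℕ → ℤ} (hf : ∀ m, f (m + 1) ≤ f m + 1) {a b : ℕ}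
    {t : ℤ} (hab : a ≤ b) (ha : f a ≤ t) (hb : t ≤ f b) :
    ∃ l, a ≤ l ∧ l ≤ b ∧ f l = t ∧ ∀ m, a ≤ m → m < l → f m < t := by
  have hP : ∃ l, a ≤ l ∧ t ≤ f l := ⟨b, hab, hb⟩
  obtain ⟨hal, htl⟩ := Nat.find_spec hP
  have hbefore : ∀ m, a ≤ m → m < Nat.find hP → f m < t := fun m ham hm =>
    lt_of_not_ge fun h => Nat.find_min hP hm ⟨ham, h⟩
  refine ⟨Nat.find hP, hal, Nat.find_min' hP ⟨hab, hb⟩, ?_, hbefore⟩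
  rcases hal.eq_or_lt with h | h
  · rw [← h] at htl ⊢
    omega
  · have hprev := hbefore (Nat.find hP - 1) (by omega) (by omega)
    have hstep := hf (Nat.find hP - 1)
    rw [Nat.sub_add_cancel (by omega)] at hstep
    omega

theorem exists_first_eq_of_ge_of_ge {f : ℕ → ℤ} (hf : ∀ m, f m ≤ f (m + 1) + 1) {a b : ℕ}
    {t : ℤ} (hab : a ≤ b) (ha : t ≤ f a) (hb : f b ≤ t) :
    ∃ l, a ≤ l ∧ l ≤ b ∧ f l = t ∧ ∀ m, a ≤ m → m < l → t < f m := by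
  obtain ⟨l, hal, hlb, hl, hbefore⟩ := exists_first_eq_of_le_of_le (f := fun m => -f m)
    (fun m => by linarith [hf m]) hab (neg_le_neg ha) (neg_le_neg hb)
  exact ⟨l, hal, hlb, neg_inj.1 hl, fun m ham hm => neg_lt_neg_iff.1 (hbefore m ham hm)⟩

def height (I : Finset ℕ) : ℕ → ℤ
  | 0 => 0
  | m + 1 => height I m + if m + 1 ∈ I then 1 else -1

section Height

variable {I : Finset ℕ}

theorem height_succ_le (m : ℕ) : height I (m + 1) ≤ height I m + 1 := by
  simp only [height]; split_ifs <;> omega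

theorem height_le_succ (m : ℕ) : height I m ≤ height I (m + 1) + 1 := by
  simp only [height]; split_ifs <;> omega

theorem height_of_mem {j : ℕ} (hj : j ∈ I) (hj1 : 1 ≤ j) : height I j = height I (j - 1) + 1 := by
  obtain ⟨m, rfl⟩ := Nat.exists_eq_add_of_le' hj1
  simp [height, hj]

theorem height_of_notMem {j : ℕ} (hj : j ∉ I) (hj1 : 1 ≤ j) :
    height I j = height I (j - 1) - 1 := by
  obtain ⟨m, rfl⟩ := Nat.exists_eq_add_of_le' hj1
  simp [height, hj, sub_eq_add_neg]

theorem height_eq_count_sub_count {N m : ℕ} (hI : I ⊆ Icc 1 N) (hm : m ≤ N) :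
    height I m = Nat.count (· ∈ I) (m + 1) - Nat.count (· ∈ Icc 1 N \ I) (m + 1) := by
  induction m with
  | zero =>
    have : 0 ∉ I := fun h => by simpa using hI h
    simp [height, Nat.count_one, this]
  | succ m ih =>
    rw [height, ih (by omega), Nat.count_succ _ (m + 1), Nat.count_succ _ (m + 1)]
    by_cases h : m + 1 ∈ I <;> simp [h] <;> omega

theorem IsStandardPart.height_nonneg {n : ℕ} (h : IsStandardPart n I) {m : ℕ} (hm : m ≤ 2 * n) :
    0 ≤ height I m := by
  rw [isStandardPart_iff] at h
  rw [height_eq_count_sub_count h.1 hm]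
  linarith [h.2 (m + 1)]

end Height

/-- For a down step `j`: the up step that starts the last visit, before `j`, of the level
`height I j`. -/
def partner (I : Finset ℕ) (j : ℕ) : ℕ :=
  Nat.findGreatest (fun m => height I m = height I j) (j - 1) + 1

section Partner

variable {I : Finset ℕ} {j : ℕ}

theorem height_partner_sub_one (hj : j ∉ I) (hj1 : 1 ≤ j) (h0 : 0 ≤ height I j) :
    height I (partner I j - 1) = height I j := by
  have hpred := height_of_notMem hj hj1
  obtain ⟨m, -, hm, hmj, -⟩ := exists_first_eq_of_le_of_le height_succ_le (Nat.zero_le (j - 1))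
    (show height I 0 ≤ height I j from h0) (show height I j ≤ height I (j - 1) by omega)
  simpa [partner] using Nat.findGreatest_spec (P := fun m => height I m = height I j) hm hmj

theorem height_lt_of_partner_le (hj : j ∉ I) (hj1 : 1 ≤ j) {m : ℕ} (hm : partner I j ≤ m)
    (hmj : m < j) : height I j < height I m := by
  have hpred := height_of_notMem hj hj1
  by_contra! h
  obtain ⟨l, hml, hlj, hl, -⟩ := exists_first_eq_of_le_of_le height_succ_le
    (show m ≤ j - 1 by omega) h (show height I j ≤ height I (j - 1) by omega)
  exact Nat.findGreatest_is_greatest (P := fun m => height I m = height I j)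
    (by unfold partner at hm; omega) hlj hl

theorem partner_lt (hj : j ∉ I) (hj1 : 1 ≤ j) (h0 : 0 ≤ height I j) : partner I j < j := by
  have hlast := height_partner_sub_one hj hj1 h0
  have hpred := height_of_notMem hj hj1
  have hle : partner I j - 1 ≤ j - 1 := by
    unfold partner; simpa using Nat.findGreatest_le (j - 1)
  have hne : partner I j - 1 ≠ j - 1 := fun h => by rw [h] at hlast; omega
  omega

theorem partner_mem (hj : j ∉ I) (hj1 : 1 ≤ j) (h0 : 0 ≤ height I j) : partner I j ∈ I := by
  by_contra h
  have hdown := height_of_notMem h (by simp [partner])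
  have := height_lt_of_partner_le hj hj1 le_rfl (partner_lt hj hj1 h0)
  have := height_partner_sub_one hj hj1 h0
  omega

theorem partner_eq_of_forall_lt {k : ℕ} (hk : 1 ≤ k) (hkj : k ≤ j)
    (hlast : height I (k - 1) = height I j) (hafter : ∀ m, k ≤ m → m < j → height I j < height I m) :
    partner I j = k := by
  suffices Nat.findGreatest (fun m => height I m = height I j) (j - 1) = k - 1 by
    rw [partner, this]; omega
  rw [Nat.findGreatest_eq_iff]
  exact ⟨by omega, fun _ => hlast, fun m hm hmj => (hafter m (by omega) (by omega)).ne'⟩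

theorem partner_ne_of_lt {j' : ℕ} (hj : j ∉ I) (hj1 : 1 ≤ j) (h0 : 0 ≤ height I j)
    (hj' : j' ∉ I) (h0' : 0 ≤ height I j') (hlt : j < j') : partner I j ≠ partner I j' := by
  intro h
  have hlast := height_partner_sub_one hj hj1 h0
  have hlast' := height_partner_sub_one hj' (by omega) h0'
  have := height_lt_of_partner_le hj' (by omega) (h ▸ (partner_lt hj hj1 h0).le) hlt
  rw [h] at hlast
  omega

theorem not_lt_of_partner_lt_partner {j' : ℕ} (hj : j ∉ I) (hj1 : 1 ≤ j)
    (hj' : j' ∉ I) (h0' : 0 ≤ height I j') (hlt : partner I j < partner I j')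
    (hlt' : partner I j' < j) : ¬ j < j' := by
  intro hjj'
  have := height_lt_of_partner_le hj' (by omega) hlt'.le hjj'
  have := height_lt_of_partner_le hj hj1 (show partner I j ≤ partner I j' - 1 by omega)
    (by omega)
  have := height_partner_sub_one hj' (by omega) h0'
  omega

theorem exists_partner_eq (hj : j ∉ I) (hj1 : 1 ≤ j) {k : ℕ} (hk : k ∈ I)
    (hpk : partner I j < k) (hkj : k < j) : ∃ l, l ∉ I ∧ k < l ∧ l ≤ j ∧ partner I l = k := by
  have hk1 : 1 ≤ k := by unfold partner at hpk; omega
  have hup := height_of_mem hk hk1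
  have hbelow := height_lt_of_partner_le hj hj1 (show partner I j ≤ k - 1 by omega) (by omega)
  obtain ⟨l, hkl, hlj, hl, hafter⟩ := exists_first_eq_of_ge_of_ge height_le_succ hkj.le
    (show height I (k - 1) ≤ height I k by omega) hbelow.le
  have hkl' : k < l := lt_of_le_of_ne hkl fun h => by subst h; omega
  have hlI : l ∉ I := fun h => by
    have := height_of_mem h (by omega)
    have := hafter (l - 1) (by omega) (by omega)
    omega
  exact ⟨l, hlI, hkl', hlj, partner_eq_of_forall_lt hk1 hkl'.le hl.symm
    fun m hkm hml => hl ▸ hafter m hkm hml⟩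

end Partner

def matching (N : ℕ) (I : Finset ℕ) : Finset (ℕ × ℕ) :=
  (Icc 1 N \ I).image fun j => (partner I j, j)

theorem mem_matching {N : ℕ} {I : Finset ℕ} {p : ℕ × ℕ} :
    p ∈ matching N I ↔ p.2 ∈ Icc 1 N \ I ∧ p.1 = partner I p.2 := by
  constructor
  · rw [matching, mem_image]
    rintro ⟨j, hj, rfl⟩
    exact ⟨hj, rfl⟩
  · rintro ⟨hj, hp⟩
    exact mem_image.2 ⟨p.2, hj, Prod.ext hp.symm rfl⟩

theorem isTL_matching {n : ℕ} {I : Finset ℕ} (h0 : ∀ m ≤ 2 * n, 0 ≤ height I m) :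
    IsTL n (matching (2 * n) I) := by
  have hdown : ∀ p ∈ matching (2 * n) I,
      p.2 ∉ I ∧ 1 ≤ p.2 ∧ p.2 ≤ 2 * n ∧ 0 ≤ height I p.2 ∧ p.1 = partner I p.2 := by
    intro p hp
    obtain ⟨hj, hp1⟩ := mem_matching.1 hp
    rw [mem_sdiff, mem_Icc] at hj
    exact ⟨hj.2, hj.1.1, hj.1.2, h0 _ hj.1.2, hp1⟩
  refine ⟨?_, ?_, ?_, ?_⟩
  · intro p hp
    obtain ⟨hj, hj1, hjn, hj0, hp1⟩ := hdown p hp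
    rw [hp1]
    exact ⟨by simp [partner], partner_lt hj hj1 hj0, hjn⟩
  · intro p hp q hq hpq
    obtain ⟨hj, hj1, -, hj0, hp1⟩ := hdown p hp
    obtain ⟨hj', hj1', -, hj0', hq1⟩ := hdown q hq
    have hne : p.2 ≠ q.2 := fun h => hpq (Prod.ext (by rw [hp1, hq1, h]) h)
    rw [hp1, hq1]
    refine ⟨?_, fun h => hj' (h ▸ partner_mem hj hj1 hj0),
      fun h => hj (h ▸ partner_mem hj' hj1' hj0'), hne⟩
    rcases hne.lt_or_gt with h | h
    · exact partner_ne_of_lt hj hj1 hj0 hj' hj0' h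
    · exact (partner_ne_of_lt hj' hj1' hj0' hj hj0 h).symm
  · rintro p hp q hq ⟨h1, h2, h3⟩
    obtain ⟨hj, hj1, -, -, hp1⟩ := hdown p hp
    obtain ⟨hj', -, -, hj0', hq1⟩ := hdown q hq
    rw [hp1, hq1] at h1
    rw [hq1] at h2
    exact not_lt_of_partner_lt_partner hj hj1 hj' hj0' h1 h2 h3
  · intro p hp k hk1 hk2
    obtain ⟨hj, hj1, hjn, -, hp1⟩ := hdown p hp
    rw [hp1] at hk1
    by_cases hk : k ∈ I
    · obtain ⟨l, hl, hkl, hlj, hlk⟩ := exists_partner_eq hj hj1 hk hk1 hk2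
      exact ⟨(partner I l, l), mem_matching.2 ⟨by simp [hl]; omega, rfl⟩, Or.inl hlk.symm⟩
    · exact ⟨(partner I k, k), mem_matching.2 ⟨by simp [hk]; omega, rfl⟩, Or.inr rfl⟩

theorem ID_matching {n : ℕ} {I : Finset ℕ} (hI : I ⊆ Icc 1 (2 * n)) :
    ID n (matching (2 * n) I) = I := by
  ext k
  simp only [ID, mem_filter, mem_matching]
  constructor
  · rintro ⟨hk, hnot⟩
    by_contra h
    exact hnot ⟨(partner I k, k), ⟨mem_sdiff.2 ⟨hk, h⟩, rfl⟩, rfl⟩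
  · intro hk
    refine ⟨hI hk, ?_⟩
    rintro ⟨p, ⟨hp, -⟩, rfl⟩
    exact (mem_sdiff.1 hp).2 hk

namespace IsTL

variable {n : ℕ} {D : Finset (ℕ × ℕ)} {p q : ℕ × ℕ}

theorem eq_of_fst_eq (hD : IsTL n D) (hp : p ∈ D) (hq : q ∈ D) (h : p.1 = q.1) : p = q := by
  by_contra hne
  exact (hD.2.1 p hp q hq hne).1 h

theorem eq_of_snd_eq (hD : IsTL n D) (hp : p ∈ D) (hq : q ∈ D) (h : p.2 = q.2) : p = q := by
  by_contra hne
  exact (hD.2.1 p hp q hq hne).2.2.2 h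

theorem fst_ne_snd (hD : IsTL n D) (hp : p ∈ D) (hq : q ∈ D) : p.1 ≠ q.2 := by
  by_cases h : p = q
  · subst h
    exact (hD.1 p hp).2.1.ne
  · exact (hD.2.1 p hp q hq h).2.1

theorem snd_lt_of_fst_mem_Ioo (hD : IsTL n D) (hp : p ∈ D) (hq : q ∈ D) (h1 : p.1 < q.1)
    (h2 : q.1 < p.2) : q.2 < p.2 := by
  by_contra! h
  have hne : p.2 ≠ q.2 := fun e => by rw [hD.eq_of_snd_eq hp hq e] at h1; omega
  exact hD.2.2.1 p hp q hq ⟨h1, h2, lt_of_le_of_ne h hne⟩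

theorem fst_lt_of_snd_mem_Ioo (hD : IsTL n D) (hp : p ∈ D) (hq : q ∈ D) (h1 : p.1 < q.2)
    (h2 : q.2 < p.2) : p.1 < q.1 := by
  by_contra! h
  have hne : q.1 ≠ p.1 := fun e => by rw [hD.eq_of_fst_eq hq hp e] at h2; omega
  exact hD.2.2.1 q hq p hp ⟨lt_of_le_of_ne h hne, h1, h2⟩

theorem exists_fst_eq (hD : IsTL n D) (hp : p ∈ D) {k : ℕ} (h1 : p.1 < k) (h2 : k < p.2)
    (hk : ∀ r ∈ D, r.2 ≠ k) : ∃ r ∈ D, r.1 = k ∧ r.2 < p.2 := by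
  obtain ⟨r, hr, hrk | hrk⟩ := hD.2.2.2 p hp k h1 h2
  · subst hrk
    exact ⟨r, hr, rfl, hD.snd_lt_of_fst_mem_Ioo hp hr h1 h2⟩
  · exact absurd hrk.symm (hk r hr)

theorem mem_sdiff_ID (hD : IsTL n D) {k : ℕ} :
    k ∈ Icc 1 (2 * n) \ ID n D ↔ ∃ p ∈ D, p.2 = k := by
  simp only [ID, mem_sdiff, mem_filter, not_and, not_not]
  constructor
  · rintro ⟨hk, h⟩
    exact h hk
  · rintro ⟨p, hp, rfl⟩
    have := hD.1 p hp
    exact ⟨mem_Icc.2 ⟨by omega, this.2.2⟩, fun _ => ⟨p, hp, rfl⟩⟩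

theorem fst_mem_ID (hD : IsTL n D) (hp : p ∈ D) : p.1 ∈ ID n D := by
  have := hD.1 p hp
  simp only [ID, mem_filter, mem_Icc]
  exact ⟨⟨this.1, by omega⟩, fun ⟨q, hq, h⟩ => hD.fst_ne_snd hp hq h.symm⟩

theorem count_sdiff_ID_le (hD : IsTL n D) (m : ℕ) :
    Nat.count (· ∈ Icc 1 (2 * n) \ ID n D) m ≤ Nat.count (· ∈ ID n D) m := by
  rw [count_mem_eq_card_filter_lt, count_mem_eq_card_filter_lt]
  calc #{x ∈ Icc 1 (2 * n) \ ID n D | x < m}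
      ≤ #({p ∈ D | p.2 < m}.image Prod.snd) := by
        refine card_le_card fun x hx => ?_
        rw [mem_filter, hD.mem_sdiff_ID] at hx
        obtain ⟨⟨p, hp, rfl⟩, hm⟩ := hx
        exact mem_image_of_mem _ (mem_filter.2 ⟨hp, hm⟩)
    _ ≤ #{p ∈ D | p.2 < m} := card_image_le
    _ ≤ #{x ∈ ID n D | x < m} := by
        refine card_le_card_of_injOn Prod.fst (fun p hp => ?_)
          fun p hp q hq h => hD.eq_of_fst_eq (mem_filter.1 hp).1 (mem_filter.1 hq).1 h
        obtain ⟨hp, hm⟩ := mem_filter.1 hp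
        exact mem_filter.2 ⟨hD.fst_mem_ID hp, (hD.1 p hp).2.1.trans hm⟩

theorem isStandardPart_ID (hD : IsTL n D) : IsStandardPart n (ID n D) :=
  isStandardPart_iff.2 ⟨filter_subset _ _, hD.count_sdiff_ID_le⟩

theorem subset_of_ID_eq {D' : Finset (ℕ × ℕ)} (hD : IsTL n D) (hD' : IsTL n D')
    (h : ID n D = ID n D') : D ⊆ D' := by
  have hcl (k : ℕ) : (∃ r ∈ D, r.2 = k) ↔ ∃ r ∈ D', r.2 = k := by
    rw [← hD.mem_sdiff_ID, ← hD'.mem_sdiff_ID, h]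
  intro p hp
  induction hlen : p.2 - p.1 using Nat.strong_induction_on generalizing p with
  | _ d ih =>
  obtain ⟨q, hq, hqp⟩ := (hcl p.2).1 ⟨p, hp, rfl⟩
  have hp12 := (hD.1 p hp).2.1
  rcases lt_trichotomy q.1 p.1 with hlt | heq | hgt
  · obtain ⟨r, hr, hrp, hrq⟩ := hD'.exists_fst_eq hq hlt (hqp ▸ hp12) fun r hr e =>
      let ⟨s, hs, hsp⟩ := (hcl p.1).2 ⟨r, hr, e⟩
      hD.fst_ne_snd hp hs hsp.symm
    obtain ⟨s, hs, hsr⟩ := (hcl r.2).2 ⟨r, hr, rfl⟩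
    have hr12 := (hD'.1 r hr).2.1
    have hps := hD.fst_lt_of_snd_mem_Ioo hp hs (by omega) (by omega)
    have hsD' := ih (s.2 - s.1) (by omega) hs rfl
    rw [hD'.eq_of_snd_eq hsD' hr hsr] at hps
    omega
  · rwa [← Prod.ext heq hqp]
  · obtain ⟨r, hr, hrq, hrp⟩ := hD.exists_fst_eq hp hgt (hqp ▸ (hD'.1 q hq).2.1) fun r hr e =>
      let ⟨s, hs, hsq⟩ := (hcl q.1).1 ⟨r, hr, e⟩
      hD'.fst_ne_snd hq hs hsq.symm
    have hr12 := (hD.1 r hr).2.1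
    have hrD' := ih (r.2 - r.1) (by omega) hr rfl
    rw [hD'.eq_of_fst_eq hrD' hq hrq] at hrp
    omega

end IsTL

/-- The map `D ↦ (I(D), [2n] ∖ I(D))` is a bijection from `T_n` onto the set of standard
partitions of `[2n]` into at most two parts. -/
theorem ID_bijOn (n : ℕ) :
    Set.BijOn (fun D => (ID n D, Finset.Icc 1 (2 * n) \ ID n D))
      {D : Finset (ℕ × ℕ) | IsTL n D}
      {p : Finset ℕ × Finset ℕ | IsStandardPart n p.1 ∧ p.2 = Finset.Icc 1 (2 * n) \ p.1} := by
  refine ⟨fun D hD => ⟨IsTL.isStandardPart_ID hD, rfl⟩, fun D hD D' hD' h => ?_, ?_⟩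
  · have hID : ID n D = ID n D' := congrArg Prod.fst h
    exact (hD.subset_of_ID_eq hD' hID).antisymm (hD'.subset_of_ID_eq hD hID.symm)
  · rintro ⟨I, J⟩ ⟨hI, hJ : J = Icc 1 (2 * n) \ I⟩
    refine ⟨matching (2 * n) I, isTL_matching fun m hm => hI.height_nonneg hm, ?_⟩
    simp only [ID_matching hI.1, hJ]
end
end

section
/- Let D, D' ∈ T_n and suppose D is I(D')-compatible. Then either |I(D)| > |I(D')|, or |I(D)| = |I(D')| and I(D) is lexicographically less than or equal to I(D') (comparing the two sets as increasing sequences). -/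
open scoped Classical
noncomputable section

/-!
Compare the counting functions `k ↦ #{m ∈ I(·) | m ≤ k}`. Since `I(E)` is the complement in
`[2n]` of the larger endpoints of `E`, it suffices to inject the pairs of `D` closing at most at
`k` into the larger endpoints of `D'` that are at most `k`: send a pair of `D` to its endpoint
outside `I(D')`, which is injective because the pairs of `D` are disjoint. Dominance of the
counting function of `I(D)` over that of `I(D')` gives `|I(D')| ≤ |I(D)|`, and for sets of equal
size the first difference of the sorted lists must favour `I(D)`.
-/

section Dominance

variable {α : Type*} [LinearOrder α]

theorem Finset.card_filter_eq_countP_sort (s : Finset α) (p : α → Prop) [DecidablePred p] :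
    (s.filter p).card = (s.sort (· ≤ ·)).countP (fun a => p a) := by
  rw [Finset.card_def, Finset.filter_val, ← Multiset.countP_eq_card_filter,
    ← Finset.sort_eq s (· ≤ ·), Multiset.coe_countP]

theorem List.exists_countP_le_lt_of_lex {l₁ l₂ : List α} (h : List.Lex (· < ·) l₁ l₂)
    (h₂ : l₂.Pairwise (· < ·)) (hlen : l₁.length = l₂.length) :
    ∃ k, l₂.countP (· ≤ k) < l₁.countP (· ≤ k) := by
  induction h with
  | nil => simp at hlen
  | @rel a l₁ b l₂ hab =>
    refine ⟨a, ?_⟩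
    have hb : ∀ x ∈ b :: l₂, a < x := by
      intro x hx
      rcases List.mem_cons.mp hx with rfl | hx
      · exact hab
      · exact hab.trans ((List.pairwise_cons.mp h₂).1 x hx)
    rw [List.countP_eq_zero.mpr fun x hx => by simpa using hb x hx]
    simp
  | @cons a l₁ l₂ _ ih =>
    obtain ⟨k, hk⟩ := ih (List.pairwise_cons.mp h₂).2 (by simpa using hlen)
    refine ⟨k, ?_⟩
    simp only [List.countP_cons]
    omega

variable {s t : Finset α}

theorem Finset.card_le_card_of_forall_card_filter_le
    (h : ∀ k, (t.filter (· ≤ k)).card ≤ (s.filter (· ≤ k)).card) : t.card ≤ s.card := by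
  rcases t.eq_empty_or_nonempty with rfl | ht
  · simp
  calc t.card = (t.filter (· ≤ t.max' ht)).card := by
        rw [Finset.filter_true_of_mem fun a ha => t.le_max' a ha]
    _ ≤ (s.filter (· ≤ t.max' ht)).card := h _
    _ ≤ s.card := Finset.card_filter_le _ _

theorem Finset.eq_or_lex_sort_of_forall_card_filter_le
    (h : ∀ k, (t.filter (· ≤ k)).card ≤ (s.filter (· ≤ k)).card) (hcard : s.card = t.card) :
    s = t ∨ List.Lex (· < ·) (s.sort (· ≤ ·)) (t.sort (· ≤ ·)) := by
  rcases trichotomous_of (List.Lex (· < ·)) (s.sort (· ≤ ·)) (t.sort (· ≤ ·))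
    with hlt | heq | hgt
  · exact Or.inr hlt
  · left
    rw [← Finset.sort_toFinset s (· ≤ ·), heq, Finset.sort_toFinset]
  · exfalso
    obtain ⟨k, hk⟩ := List.exists_countP_le_lt_of_lex hgt (Finset.sortedLT_sort s).pairwise
      (by rw [Finset.length_sort, Finset.length_sort, hcard])
    have := h k
    rw [Finset.card_filter_eq_countP_sort, Finset.card_filter_eq_countP_sort] at this
    exact this.not_gt hk

end Dominance

theorem Finset.card_filter_add_card_sdiff_filter {α : Type*} [DecidableEq α] {I U : Finset α}
    (h : I ⊆ U) (p : α → Prop) [DecidablePred p] :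
    (I.filter p).card + ((U \ I).filter p).card = (U.filter p).card := by
  have hsdiff : (U \ I).filter p = U.filter p \ I.filter p := by
    ext a
    simp only [Finset.mem_filter, Finset.mem_sdiff]
    tauto
  rw [hsdiff, add_comm, Finset.card_sdiff_add_card_eq_card (Finset.filter_subset_filter p h)]

theorem Compat.card_filter_le_card_sdiff_filter {D : Finset (ℕ × ℕ)} {I U : Finset ℕ}
    (hc : Compat I D) (hmem : ∀ p ∈ D, p.1 ∈ U ∧ p.2 ∈ U) (hlt : ∀ p ∈ D, p.1 < p.2)
    (hdisj : ∀ p ∈ D, ∀ q ∈ D, p ≠ q → p.1 ≠ q.1 ∧ p.1 ≠ q.2 ∧ p.2 ≠ q.1 ∧ p.2 ≠ q.2)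
    (k : ℕ) :
    (D.filter (·.2 ≤ k)).card ≤ ((U \ I).filter (· ≤ k)).card := by
  refine Finset.card_le_card_of_injOn (fun p => if p.1 ∈ I then p.2 else p.1) ?_ ?_
  · intro p hp
    obtain ⟨hpD, hpk⟩ := Finset.mem_filter.mp hp
    have := hlt p hpD
    simp only [Finset.mem_coe, Finset.mem_filter, Finset.mem_sdiff]
    rcases hc p hpD with ⟨hin, hout⟩ | ⟨hout, -⟩
    · rw [if_pos hin]
      exact ⟨⟨(hmem p hpD).2, hout⟩, hpk⟩
    · rw [if_neg hout]
      exact ⟨⟨(hmem p hpD).1, hout⟩, by omega⟩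
  · intro p hp q hq hpq
    simp only [Finset.mem_coe, Finset.mem_filter] at hp hq
    by_contra hne
    obtain ⟨h11, h12, h21, h22⟩ := hdisj p hp.1 q hq.1 hne
    dsimp only at hpq
    split_ifs at hpq <;> contradiction

theorem card_filter_sdiff_ID_le (n : ℕ) (E : Finset (ℕ × ℕ)) (k : ℕ) :
    ((Finset.Icc 1 (2 * n) \ ID n E).filter (· ≤ k)).card ≤ (E.filter (·.2 ≤ k)).card := by
  refine (Finset.card_le_card fun m hm => ?_).trans (Finset.card_image_le (f := Prod.snd))
  simp only [ID, Finset.mem_filter, Finset.mem_sdiff, not_and, not_not] at hm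
  obtain ⟨p, hp, rfl⟩ := hm.1.2 hm.1.1
  exact Finset.mem_image_of_mem Prod.snd (Finset.mem_filter.mpr ⟨hp, hm.2⟩)

theorem card_filter_ID_le_of_compat {n : ℕ} {D D' : Finset (ℕ × ℕ)} (hD : IsTL n D)
    (hc : Compat (ID n D') D) (k : ℕ) :
    ((ID n D').filter (· ≤ k)).card ≤ ((ID n D).filter (· ≤ k)).card := by
  have hsplit : ∀ E, ((ID n E).filter (· ≤ k)).card
      + ((Finset.Icc 1 (2 * n) \ ID n E).filter (· ≤ k)).card
      = ((Finset.Icc 1 (2 * n)).filter (· ≤ k)).card := fun E =>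
    Finset.card_filter_add_card_sdiff_filter (Finset.filter_subset _ _) _
  have hmem : ∀ p ∈ D, p.1 ∈ Finset.Icc 1 (2 * n) ∧ p.2 ∈ Finset.Icc 1 (2 * n) := by
    intro p hp
    obtain ⟨h1, h12, h2⟩ := hD.1 p hp
    simp only [Finset.mem_Icc]
    omega
  have hends := hc.card_filter_le_card_sdiff_filter hmem (fun p hp => (hD.1 p hp).2.1) hD.2.1 k
  have := card_filter_sdiff_ID_le n D k
  have := hsplit D
  have := hsplit D'
  omega

theorem compat_lex_general (n : ℕ) (D D' : Finset (ℕ × ℕ)) (hD : IsTL n D)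
    (hc : Compat (ID n D') D) :
    (ID n D').card < (ID n D).card ∨
    ((ID n D).card = (ID n D').card ∧
      (ID n D = ID n D' ∨
        List.Lex (· < ·) ((ID n D).sort (· ≤ ·)) ((ID n D').sort (· ≤ ·)))) := by
  have hdom := card_filter_ID_le_of_compat hD hc
  rcases (Finset.card_le_card_of_forall_card_filter_le hdom).lt_or_eq with hlt | heq
  · exact Or.inl hlt
  · exact Or.inr ⟨heq.symm, Finset.eq_or_lex_sort_of_forall_card_filter_le hdom heq.symm⟩

/-- If `D, D' ∈ T_n` and `D` is `I(D')`-compatible, then either `|I(D)| > |I(D')|`, or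
`|I(D)| = |I(D')|` and `I(D)` is lexicographically ≤ `I(D')` as increasing sequences. -/
theorem compat_lex (n : ℕ) (D D' : Finset (ℕ × ℕ)) (hD : IsTL n D) (hD' : IsTL n D')
    (hc : Compat (ID n D') D) :
    (ID n D').card < (ID n D).card ∨
    ((ID n D).card = (ID n D').card ∧
      (ID n D = ID n D' ∨
        List.Lex (· < ·) ((ID n D).sort (· ≤ ·)) ((ID n D').sort (· ≤ ·)))) :=
  compat_lex_general n D D' hD hc
end
end
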